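/- arXiv:math/0408114 — 5 statements merged into one kernel-verified Lean document; each statement's English description precedes it below -/
import Mathlib

section
/- Let n ≥ 1 and let λ, μ, ν, ρ ∈ ℤⁿ be weakly decreasing. For any weakly decreasing δ ∈ ℤⁿ and any hives M ∈ HIVE_{λδ}^ρ and N ∈ HIVE_{μν}^δ, the functions P and Q produced from (M,N) by the octahedron recurrence on the tetrahedron are hives, and there is a weakly decreasing γ ∈ ℤⁿ with P ∈ HIVE_{λμ}^γ and Q ∈ HIVE_{γν}^ρ. Moreover, the induced map (M,N) ↦ (P,Q) is a bijection from the disjoint union over weakly decreasing δ ∈ ℤⁿ of HIVE_{λδ}^ρ × HIVE_{μν}^δ onto the disjoint union over weakly decreasing γ ∈ ℤⁿ of HIVE_{λμ}^γ × HIVE_{γν}^ρ. -/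
def inDelta (n x y z : ℤ) : Prop := 0 ≤ x ∧ 0 ≤ y ∧ 0 ≤ z ∧ x + y + z = n

instance (n x y z : ℤ) : Decidable (inDelta n x y z) :=
  inferInstanceAs (Decidable (0 ≤ x ∧ 0 ≤ y ∧ 0 ≤ z ∧ x + y + z = n))

/-- Hive inequality (i): horizontal rhombi of the first kind. -/
def HiveCondI (n : ℤ) (P : ℤ → ℤ → ℤ → ℤ) : Prop :=
  ∀ x y z : ℤ, inDelta n x y z → inDelta n x (y+1) (z-1) → inDelta n (x+1) y (z-1) →
    inDelta n (x-1) (y+1) z →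
    P (x+1) y (z-1) + P (x-1) (y+1) z ≤ P x y z + P x (y+1) (z-1)

/-- Hive inequality (ii): horizontal rhombi of the second kind. -/
def HiveCondII (n : ℤ) (P : ℤ → ℤ → ℤ → ℤ) : Prop :=
  ∀ x y z : ℤ, inDelta n x y z → inDelta n (x+1) y (z-1) → inDelta n x (y+1) (z-1) →
    inDelta n (x+1) (y-1) z →
    P x (y+1) (z-1) + P (x+1) (y-1) z ≤ P x y z + P (x+1) y (z-1)

/-- Hive inequality (iii): vertical rhombi. -/
def HiveCondIII (n : ℤ) (P : ℤ → ℤ → ℤ → ℤ) : Prop :=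
  ∀ x y z : ℤ, inDelta n x y z → inDelta n (x+1) (y-1) z → inDelta n (x+1) y (z-1) →
    inDelta n x (y-1) (z+1) →
    P (x+1) y (z-1) + P x (y-1) (z+1) ≤ P x y z + P (x+1) (y-1) z

/-- A quasi-hive: satisfies conditions (i) and (ii) only. -/
def IsQuasiHive (n : ℤ) (P : ℤ → ℤ → ℤ → ℤ) : Prop := HiveCondI n P ∧ HiveCondII n P

/-- A hive of size `n`, normalized by `P 0 0 n = 0` and encoded as the function on `ℤ³`
which is zero outside the triangle `Δ_n`. -/
def IsHive (n : ℤ) (P : ℤ → ℤ → ℤ → ℤ) : Prop :=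
  HiveCondI n P ∧ HiveCondII n P ∧ HiveCondIII n P ∧ P 0 0 n = 0 ∧
    ∀ x y z : ℤ, ¬ inDelta n x y z → P x y z = 0

/-- `lam 1, …, lam n` is weakly decreasing. -/
def WeaklyDecr (n : ℤ) (lam : ℤ → ℤ) : Prop :=
  ∀ k : ℤ, 1 ≤ k → k + 1 ≤ n → lam (k+1) ≤ lam k

/-- The set `HIVE_{λμ}^ν`. -/
def HiveSet (n : ℤ) (lam mu nu : ℤ → ℤ) : Set (ℤ → ℤ → ℤ → ℤ) :=
  {P | IsHive n P ∧ ∀ k : ℤ, 1 ≤ k → k ≤ n →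
    P (n-k) k 0 - P (n-k+1) (k-1) 0 = lam k ∧
    P k 0 (n-k) - P (k-1) 0 (n-k+1) = mu k ∧
    P 0 k (n-k) - P 0 (k-1) (n-k+1) = nu k}

/-- The lattice `L` of the tetrahedron. -/
def inLT (n x y t : ℤ) : Prop :=
  0 ≤ x ∧ x ≤ n ∧ 0 ≤ y ∧ y ≤ n ∧ |x - y| ≤ t ∧ t ≤ n - |n - x - y| ∧ 2 ∣ (x + y + t)

/-- `f` solves the octahedron recurrence on the tetrahedron with initial conditions
the hives `M` and `N`. -/
def OctTet (n : ℤ) (M N f : ℤ → ℤ → ℤ → ℤ) : Prop :=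
  (∀ x y z : ℤ, inDelta n x y z → f x (n - z) y = M x y z) ∧
  (∀ x y z : ℤ, inDelta n x y z → f (n - z) y x = N x y z) ∧
  (∀ x y t : ℤ, inLT n x y (t+1) → |x - y| < t + 1 →
      f x y (t+1) = max (f (x+1) y t + f (x-1) y t) (f x (y+1) t + f x (y-1) t)
        - f x y (t-1))

/-- The first output hive `P(x,y,z) = f(n−y,n−z,n−x) − f(n,0,n)` of the associator,
encoded as the function which is zero outside `Δ_n`. -/
def PtetFun (n : ℤ) (f : ℤ → ℤ → ℤ → ℤ) : ℤ → ℤ → ℤ → ℤ := fun x y z =>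
  if inDelta n x y z then f (n-y) (n-z) (n-x) - f n 0 n else 0

/-- The second output hive `Q(x,y,z) = f(x,y,n−z)` of the associator,
encoded as the function which is zero outside `Δ_n`. -/
def QtetFun (n : ℤ) (f : ℤ → ℤ → ℤ → ℤ) : ℤ → ℤ → ℤ → ℤ := fun x y z =>
  if inDelta n x y z then f x y (n - z) else 0

section Stage1

variable {n : ℤ} {f : ℤ → ℤ → ℤ → ℤ} {x y t : ℤ}

lemma inLT_iff (n x y t : ℤ) : inLT n x y t ↔
    (0 ≤ x ∧ x ≤ n ∧ 0 ≤ y ∧ y ≤ n ∧ x - y ≤ t ∧ y - x ≤ t ∧ t ≤ x + y ∧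
      t ≤ 2*n - x - y ∧ 2 ∣ (x + y + t)) := by
  unfold inLT
  rcases abs_cases (x - y) with ⟨h1, h1'⟩ | ⟨h1, h1'⟩ <;>
    rcases abs_cases (n - x - y) with ⟨h2, h2'⟩ | ⟨h2, h2'⟩ <;>
      rw [h1, h2] <;> omega

lemma inDelta_iff (n x y z : ℤ) : inDelta n x y z ↔
    (0 ≤ x ∧ 0 ≤ y ∧ 0 ≤ z ∧ x + y + z = n) := Iff.rfl

/-- Neighbors of an expandable point lie in the lattice. -/
lemma nbrL (h : inLT n x y t) (h1 : x - y ≤ t - 2) (h2 : y - x ≤ t - 2) :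
    inLT n (x+1) y (t-1) ∧ inLT n (x-1) y (t-1) ∧ inLT n x (y+1) (t-1) ∧
      inLT n x (y-1) (t-1) ∧ inLT n x y (t-2) := by
  rw [inLT_iff] at h
  refine ⟨?_, ?_, ?_, ?_, ?_⟩ <;> rw [inLT_iff] <;> omega

/-- The recurrence, restated. -/
lemma expand (hf3 : ∀ x y t : ℤ, inLT n x y (t+1) → |x - y| < t + 1 →
      f x y (t+1) = max (f (x+1) y t + f (x-1) y t) (f x (y+1) t + f x (y-1) t)
        - f x y (t-1))
    (h : inLT n x y t) (h1 : x - y ≤ t - 2) (h2 : y - x ≤ t - 2) :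
    f x y t = max (f (x+1) y (t-1) + f (x-1) y (t-1))
        (f x (y+1) (t-1) + f x (y-1) (t-1)) - f x y (t-2) := by
  have e1 : t - 1 + 1 = t := by ring
  have := hf3 x y (t-1) (by rwa [e1]) (by rw [abs_lt]; omega)
  rw [e1, show t - 1 - 1 = t - 2 by ring] at this
  exact this
section Stage2

variable {n : ℤ} {A B f g : ℤ → ℤ → ℤ → ℤ} {x y t : ℤ}

/-- Value of `f` on the `M`-face. -/
lemma faceM (hf1 : ∀ x y z : ℤ, inDelta n x y z → f x (n - z) y = A x y z)
    (h : inLT n x y t) (hface : t = y - x) : f x y t = A x t (n - x - t) := by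
  rw [inLT_iff] at h
  have hd : inDelta n x t (n - x - t) := by rw [inDelta_iff]; omega
  have := hf1 x t (n - x - t) hd
  rw [show n - (n - x - t) = y by omega] at this
  exact this

/-- Value of `f` on the `N`-face. -/
lemma faceN (hf2 : ∀ x y z : ℤ, inDelta n x y z → f (n - z) y x = B x y z)
    (h : inLT n x y t) (hface : t = x - y) : f x y t = B t y (n - x) := by
  rw [inLT_iff] at h
  have hd : inDelta n t y (n - x) := by rw [inDelta_iff]; omega
  have := hf2 t y (n - x) hd
  rw [show n - (n - x) = x by omega] at this
  exact this

/-- Uniqueness of the solution on the lattice `L`. -/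
theorem oct_unique (hf : OctTet n A B f) (hg : OctTet n A B g) :
    ∀ T : ℕ, ∀ x y t : ℤ, t ≤ T → inLT n x y t → f x y t = g x y t := by
  intro T
  induction T using Nat.strong_induction_on with
  | _ T ih =>
    intro x y t ht h
    have harith := (inLT_iff n x y t).1 h
    by_cases hM : t = y - x
    · rw [faceM hf.1 h hM, faceM hg.1 h hM]
    · by_cases hN : t = x - y
      · rw [faceN hf.2.1 h hN, faceN hg.2.1 h hN]
      · -- expandable
        have h1 : x - y ≤ t - 2 := by omega
        have h2 : y - x ≤ t - 2 := by omega
        have hT2 : 2 ≤ T := by omega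
        obtain ⟨m1, m2, m3, m4, m5⟩ := nbrL h h1 h2
        have e1 := expand (f := f) hf.2.2 h h1 h2
        have e2 := expand (f := g) hg.2.2 h h1 h2
        have hlt : T - 1 < T := by omega
        have i1 := ih (T-1) hlt (x+1) y (t-1) (by omega) m1
        have i2 := ih (T-1) hlt (x-1) y (t-1) (by omega) m2
        have i3 := ih (T-1) hlt x (y+1) (t-1) (by omega) m3
        have i4 := ih (T-1) hlt x (y-1) (t-1) (by omega) m4
        have i5 := ih (T-1) hlt x y (t-2) (by omega) m5
        rw [e1, e2, i1, i2, i3, i4, i5]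

theorem oct_unique' (hf : OctTet n A B f) (hg : OctTet n A B g)
    (h : inLT n x y t) : f x y t = g x y t := by
  have h0 : 0 ≤ t := by have := (inLT_iff n x y t).1 h; omega
  exact oct_unique hf hg t.toNat x y t (by omega) h

/-- Initial values for the canonical solution. -/
def faceVal (n : ℤ) (A B : ℤ → ℤ → ℤ → ℤ) (x y t : ℤ) : ℤ :=
  if t = y - x then A x t (n - x - t) else B t y (n - x)

/-- Layers of the canonical solution. -/
def octG (n : ℤ) (A B : ℤ → ℤ → ℤ → ℤ) : ℕ → ℤ → ℤ → ℤ
  | 0 => fun x y => faceVal n A B x y 0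
  | 1 => fun x y => faceVal n A B x y 1
  | (T+2) => fun x y => if |x - y| < (T:ℤ)+2 then
      max (octG n A B (T+1) (x+1) y + octG n A B (T+1) (x-1) y)
          (octG n A B (T+1) x (y+1) + octG n A B (T+1) x (y-1))
        - octG n A B T x y
    else faceVal n A B x y ((T:ℤ)+2)

/-- The canonical solution of the octahedron recurrence. -/
def canonf (n : ℤ) (A B : ℤ → ℤ → ℤ → ℤ) : ℤ → ℤ → ℤ → ℤ := fun x y t =>
  if 0 ≤ t then octG n A B t.toNat x y else 0

lemma canonf_face (h0 : 0 ≤ t) (habs : |x - y| = t) :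
    canonf n A B x y t = faceVal n A B x y t := by
  unfold canonf
  rw [if_pos h0]
  rcases Nat.lt_or_ge t.toNat 2 with h2 | h2
  · interval_cases h : t.toNat <;>
    · simp only [octG]
      congr 1
      omega
  · obtain ⟨T, hT⟩ : ∃ T : ℕ, t.toNat = T + 2 := ⟨t.toNat - 2, by omega⟩
    rw [hT]
    simp only [octG]
    rw [if_neg (by omega), show ((T:ℤ)+2) = t by omega]

lemma canonf_rec (h : inLT n x y (t+1)) (habs : |x - y| < t + 1) :
    canonf n A B x y (t+1) = max (canonf n A B (x+1) y t + canonf n A B (x-1) y t)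
      (canonf n A B x (y+1) t + canonf n A B x (y-1) t) - canonf n A B x y (t-1) := by
  have harith := (inLT_iff n x y (t+1)).1 h
  have habs' : x - y ≤ t - 1 ∧ y - x ≤ t - 1 := by
    rcases abs_cases (x - y) with ⟨h1, h1'⟩ | ⟨h1, h1'⟩ <;> omega
  have ht1 : 1 ≤ t := by omega
  obtain ⟨T, hT⟩ : ∃ T : ℕ, (t+1).toNat = T + 2 := ⟨(t-1).toNat, by omega⟩
  unfold canonf
  rw [if_pos (by omega), if_pos (by omega), if_pos (by omega), if_pos (by omega),
    if_pos (by omega), if_pos (by omega), hT]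
  simp only [octG]
  rw [if_pos (by rcases abs_cases (x - y) with ⟨h1, h1'⟩ | ⟨h1, h1'⟩ <;> omega)]
  have e1 : T + 1 = t.toNat := by omega
  have e2 : T = (t-1).toNat := by omega
  rw [e1, e2]

/-- The canonical solution solves the octahedron recurrence. -/
theorem canonf_octTet (hn : 0 ≤ n)
    (hmatch : ∀ k : ℤ, 0 ≤ k → k ≤ n → A k 0 (n-k) = B 0 k (n-k)) :
    OctTet n A B (canonf n A B) := by
  refine ⟨?_, ?_, ?_⟩
  · intro x y z hd
    rw [inDelta_iff] at hd
    have h0 : (0:ℤ) ≤ y := by omega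
    have habs : |x - (n - z)| = y := by
      rw [show x - (n-z) = -y by omega, abs_neg, abs_of_nonneg h0]
    rw [canonf_face h0 habs]
    unfold faceVal
    rw [if_pos (by omega), show n - x - y = z by omega]
  · intro x y z hd
    rw [inDelta_iff] at hd
    have h0 : (0:ℤ) ≤ x := by omega
    have habs : |(n - z) - y| = x := by
      rw [show (n-z) - y = x by omega, abs_of_nonneg h0]
    rw [canonf_face h0 habs]
    unfold faceVal
    by_cases hx : x = y - (n - z)
    · have hx0 : x = 0 := by omega
      rw [if_pos hx, show n - (n-z) - x = n - y by omega, hx0]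
      have := hmatch y (by omega) (by omega)
      rw [show (n - z : ℤ) = y by omega]
      rw [show (n - y : ℤ) = z by omega] at this ⊢
      exact this
    · rw [if_neg hx, show n - (n - z) = z by omega]
  · intro x y t h habs
    exact canonf_rec h habs

end Stage2
section Stage3

variable {n : ℤ} {A B f : ℤ → ℤ → ℤ → ℤ} {x y t : ℤ}

/-- Restated recurrence with flexible arguments. -/
lemma expand2 (hf3 : ∀ x y t : ℤ, inLT n x y (t+1) → |x - y| < t + 1 →
      f x y (t+1) = max (f (x+1) y t + f (x-1) y t) (f x (y+1) t + f x (y-1) t)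
        - f x y (t-1))
    {a b s : ℤ} (h : inLT n a b s) (h1 : a - b ≤ s - 2) (h2 : b - a ≤ s - 2)
    {a1 a2 b1 b2 s1 s2 : ℤ} (ha1 : a1 = a+1) (ha2 : a2 = a-1) (hb1 : b1 = b+1)
    (hb2 : b2 = b-1) (hs1 : s1 = s-1) (hs2 : s2 = s-2) :
    f a b s = max (f a1 b s1 + f a2 b s1) (f a b1 s1 + f a b2 s1) - f a b s2 := by
  subst ha1 ha2 hb1 hb2 hs1 hs2
  exact expand hf3 h h1 h2

/- The twelve rhombus-inequality families.  In each, the first two points form the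
short (dominant) diagonal. -/

def SH1 (n : ℤ) (f : ℤ → ℤ → ℤ → ℤ) (x y t : ℤ) : Prop :=
  inLT n x y t → inLT n (x+1) (y+1) t → inLT n (x+1) y (t-1) → inLT n x (y+1) (t+1) →
    f (x+1) y (t-1) + f x (y+1) (t+1) ≤ f x y t + f (x+1) (y+1) t

def SH2 (n : ℤ) (f : ℤ → ℤ → ℤ → ℤ) (x y t : ℤ) : Prop :=
  inLT n x y t → inLT n (x+1) (y+1) t → inLT n (x+1) y (t+1) → inLT n x (y+1) (t-1) →
    f (x+1) y (t+1) + f x (y+1) (t-1) ≤ f x y t + f (x+1) (y+1) t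

def SH3 (n : ℤ) (f : ℤ → ℤ → ℤ → ℤ) (x y t : ℤ) : Prop :=
  inLT n x y t → inLT n (x+1) (y-1) t → inLT n (x+1) y (t+1) → inLT n x (y-1) (t-1) →
    f (x+1) y (t+1) + f x (y-1) (t-1) ≤ f x y t + f (x+1) (y-1) t

def SH4 (n : ℤ) (f : ℤ → ℤ → ℤ → ℤ) (x y t : ℤ) : Prop :=
  inLT n x y t → inLT n (x+1) (y-1) t → inLT n (x+1) y (t-1) → inLT n x (y-1) (t+1) →
    f (x+1) y (t-1) + f x (y-1) (t+1) ≤ f x y t + f (x+1) (y-1) t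

def SV1 (n : ℤ) (f : ℤ → ℤ → ℤ → ℤ) (x y t : ℤ) : Prop :=
  inLT n x y t → inLT n x (y+1) (t+1) → inLT n (x+1) y (t+1) → inLT n (x-1) (y+1) t →
    f (x+1) y (t+1) + f (x-1) (y+1) t ≤ f x y t + f x (y+1) (t+1)

def SV2 (n : ℤ) (f : ℤ → ℤ → ℤ → ℤ) (x y t : ℤ) : Prop :=
  inLT n x y t → inLT n x (y+1) (t+1) → inLT n (x-1) y (t+1) → inLT n (x+1) (y+1) t →
    f (x-1) y (t+1) + f (x+1) (y+1) t ≤ f x y t + f x (y+1) (t+1)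

def SV3 (n : ℤ) (f : ℤ → ℤ → ℤ → ℤ) (x y t : ℤ) : Prop :=
  inLT n x y t → inLT n (x+1) y (t+1) → inLT n x (y+1) (t+1) → inLT n (x+1) (y-1) t →
    f x (y+1) (t+1) + f (x+1) (y-1) t ≤ f x y t + f (x+1) y (t+1)

def SV4 (n : ℤ) (f : ℤ → ℤ → ℤ → ℤ) (x y t : ℤ) : Prop :=
  inLT n x y t → inLT n (x+1) y (t+1) → inLT n x (y-1) (t+1) → inLT n (x+1) (y+1) t →
    f x (y-1) (t+1) + f (x+1) (y+1) t ≤ f x y t + f (x+1) y (t+1)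

def SV5 (n : ℤ) (f : ℤ → ℤ → ℤ → ℤ) (x y t : ℤ) : Prop :=
  inLT n x y t → inLT n x (y+1) (t-1) → inLT n (x+1) (y+1) t → inLT n (x-1) y (t-1) →
    f (x+1) (y+1) t + f (x-1) y (t-1) ≤ f x y t + f x (y+1) (t-1)

def SV6 (n : ℤ) (f : ℤ → ℤ → ℤ → ℤ) (x y t : ℤ) : Prop :=
  inLT n x y t → inLT n x (y+1) (t-1) → inLT n (x-1) (y+1) t → inLT n (x+1) y (t-1) →
    f (x-1) (y+1) t + f (x+1) y (t-1) ≤ f x y t + f x (y+1) (t-1)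

def SV7 (n : ℤ) (f : ℤ → ℤ → ℤ → ℤ) (x y t : ℤ) : Prop :=
  inLT n x y t → inLT n (x+1) y (t-1) → inLT n (x+1) (y+1) t → inLT n x (y-1) (t-1) →
    f (x+1) (y+1) t + f x (y-1) (t-1) ≤ f x y t + f (x+1) y (t-1)

def SV8 (n : ℤ) (f : ℤ → ℤ → ℤ → ℤ) (x y t : ℤ) : Prop :=
  inLT n x y t → inLT n (x+1) y (t-1) → inLT n (x+1) (y-1) t → inLT n x (y+1) (t-1) →
    f (x+1) (y-1) t + f x (y+1) (t-1) ≤ f x y t + f (x+1) y (t-1)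

/- In-face instances: rhombi lying in the `M`-face (`y - x = t`). -/

lemma infM_H1 (hf1 : ∀ x y z : ℤ, inDelta n x y z → f x (n - z) y = A x y z)
    (hA2 : HiveCondII n A)
    (g1 : inLT n x y t) (g2 : inLT n (x+1) (y+1) t) (g3 : inLT n (x+1) y (t-1))
    (g4 : inLT n x (y+1) (t+1)) (hpl : y - x = t) :
    f (x+1) y (t-1) + f x (y+1) (t+1) ≤ f x y t + f (x+1) (y+1) t := by
  have a1 := (inLT_iff n x y t).1 g1
  have a2 := (inLT_iff _ _ _ _).1 g2
  have a3 := (inLT_iff _ _ _ _).1 g3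
  have a4 := (inLT_iff _ _ _ _).1 g4
  have e1 := faceM hf1 g1 (by omega)
  have e2 := faceM hf1 g2 (by omega)
  have e3 := faceM hf1 g3 (by omega)
  have e4 := faceM hf1 g4 (by omega)
  rw [show (t:ℤ)-1 = t-1 from rfl] at e3
  have hc := hA2 x t (n-x-t) (by rw [inDelta_iff]; omega) (by rw [inDelta_iff]; omega)
    (by rw [inDelta_iff]; omega) (by rw [inDelta_iff]; omega)
  rw [e1, e2, e3, e4]
  rw [show n-(x+1)-t = n-x-t-1 by ring, show n-(x+1)-(t-1) = n-x-t by ring,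
    show n-x-(t+1) = n-x-t-1 by ring]
  linarith [hc]

lemma infM_V2 (hf1 : ∀ x y z : ℤ, inDelta n x y z → f x (n - z) y = A x y z)
    (hA1 : HiveCondI n A)
    (g1 : inLT n x y t) (g2 : inLT n x (y+1) (t+1)) (g3 : inLT n (x-1) y (t+1))
    (g4 : inLT n (x+1) (y+1) t) (hpl : y - x = t) :
    f (x-1) y (t+1) + f (x+1) (y+1) t ≤ f x y t + f x (y+1) (t+1) := by
  have a1 := (inLT_iff n x y t).1 g1
  have a2 := (inLT_iff _ _ _ _).1 g2
  have a3 := (inLT_iff _ _ _ _).1 g3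
  have a4 := (inLT_iff _ _ _ _).1 g4
  have e1 := faceM hf1 g1 (by omega)
  have e2 := faceM hf1 g2 (by omega)
  have e3 := faceM hf1 g3 (by omega)
  have e4 := faceM hf1 g4 (by omega)
  have hc := hA1 x t (n-x-t) (by rw [inDelta_iff]; omega) (by rw [inDelta_iff]; omega)
    (by rw [inDelta_iff]; omega) (by rw [inDelta_iff]; omega)
  rw [e1, e2, e3, e4]
  rw [show n-(x-1)-(t+1) = n-x-t by ring, show n-(x+1)-t = n-x-t-1 by ring,
    show n-x-(t+1) = n-x-t-1 by ring]
  linarith [hc]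

lemma infM_V7 (hf1 : ∀ x y z : ℤ, inDelta n x y z → f x (n - z) y = A x y z)
    (hA3 : HiveCondIII n A)
    (g1 : inLT n x y t) (g2 : inLT n (x+1) y (t-1)) (g3 : inLT n (x+1) (y+1) t)
    (g4 : inLT n x (y-1) (t-1)) (hpl : y - x = t) :
    f (x+1) (y+1) t + f x (y-1) (t-1) ≤ f x y t + f (x+1) y (t-1) := by
  have a1 := (inLT_iff n x y t).1 g1
  have a2 := (inLT_iff _ _ _ _).1 g2
  have a3 := (inLT_iff _ _ _ _).1 g3
  have a4 := (inLT_iff _ _ _ _).1 g4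
  have e1 := faceM hf1 g1 (by omega)
  have e2 := faceM hf1 g2 (by omega)
  have e3 := faceM hf1 g3 (by omega)
  have e4 := faceM hf1 g4 (by omega)
  have hc := hA3 x t (n-x-t) (by rw [inDelta_iff]; omega) (by rw [inDelta_iff]; omega)
    (by rw [inDelta_iff]; omega) (by rw [inDelta_iff]; omega)
  rw [e1, e2, e3, e4]
  rw [show n-(x+1)-(t-1) = n-x-t by ring, show n-(x+1)-t = n-x-t-1 by ring,
    show n-x-(t-1) = n-x-t+1 by ring]
  linarith [hc]

/- In-face instances: rhombi lying in the `N`-face (`x - y = t`). -/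

lemma infN_H2 (hf2 : ∀ x y z : ℤ, inDelta n x y z → f (n - z) y x = B x y z)
    (hB1 : HiveCondI n B)
    (g1 : inLT n x y t) (g2 : inLT n (x+1) (y+1) t) (g3 : inLT n (x+1) y (t+1))
    (g4 : inLT n x (y+1) (t-1)) (hpl : x - y = t) :
    f (x+1) y (t+1) + f x (y+1) (t-1) ≤ f x y t + f (x+1) (y+1) t := by
  have a1 := (inLT_iff n x y t).1 g1
  have a2 := (inLT_iff _ _ _ _).1 g2
  have a3 := (inLT_iff _ _ _ _).1 g3
  have a4 := (inLT_iff _ _ _ _).1 g4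
  have e1 := faceN hf2 g1 (by omega)
  have e2 := faceN hf2 g2 (by omega)
  have e3 := faceN hf2 g3 (by omega)
  have e4 := faceN hf2 g4 (by omega)
  have hc := hB1 t y (n-x) (by rw [inDelta_iff]; omega) (by rw [inDelta_iff]; omega)
    (by rw [inDelta_iff]; omega) (by rw [inDelta_iff]; omega)
  rw [e1, e2, e3, e4]
  rw [show n-(x+1) = n-x-1 by ring]
  linarith [hc]

lemma infN_V4 (hf2 : ∀ x y z : ℤ, inDelta n x y z → f (n - z) y x = B x y z)
    (hB2 : HiveCondII n B)
    (g1 : inLT n x y t) (g2 : inLT n (x+1) y (t+1)) (g3 : inLT n x (y-1) (t+1))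
    (g4 : inLT n (x+1) (y+1) t) (hpl : x - y = t) :
    f x (y-1) (t+1) + f (x+1) (y+1) t ≤ f x y t + f (x+1) y (t+1) := by
  have a1 := (inLT_iff n x y t).1 g1
  have a2 := (inLT_iff _ _ _ _).1 g2
  have a3 := (inLT_iff _ _ _ _).1 g3
  have a4 := (inLT_iff _ _ _ _).1 g4
  have e1 := faceN hf2 g1 (by omega)
  have e2 := faceN hf2 g2 (by omega)
  have e3 := faceN hf2 g3 (by omega)
  have e4 := faceN hf2 g4 (by omega)
  have hc := hB2 t y (n-x) (by rw [inDelta_iff]; omega) (by rw [inDelta_iff]; omega)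
    (by rw [inDelta_iff]; omega) (by rw [inDelta_iff]; omega)
  rw [e1, e2, e3, e4]
  rw [show n-(x+1) = n-x-1 by ring]
  linarith [hc]

lemma infN_V5 (hf2 : ∀ x y z : ℤ, inDelta n x y z → f (n - z) y x = B x y z)
    (hB3 : HiveCondIII n B)
    (g1 : inLT n x y t) (g2 : inLT n x (y+1) (t-1)) (g3 : inLT n (x+1) (y+1) t)
    (g4 : inLT n (x-1) y (t-1)) (hpl : x - y = t) :
    f (x+1) (y+1) t + f (x-1) y (t-1) ≤ f x y t + f x (y+1) (t-1) := by
  have a1 := (inLT_iff n x y t).1 g1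
  have a2 := (inLT_iff _ _ _ _).1 g2
  have a3 := (inLT_iff _ _ _ _).1 g3
  have a4 := (inLT_iff _ _ _ _).1 g4
  have e1 := faceN hf2 g1 (by omega)
  have e2 := faceN hf2 g2 (by omega)
  have e3 := faceN hf2 g3 (by omega)
  have e4 := faceN hf2 g4 (by omega)
  have hc := hB3 (t-1) (y+1) (n-x) (by rw [inDelta_iff]; omega)
    (by rw [inDelta_iff]; omega) (by rw [inDelta_iff]; omega) (by rw [inDelta_iff]; omega)
  rw [e1, e2, e3, e4]
  rw [show n-(x+1) = n-x-1 by ring, show n-(x-1) = n-x+1 by ring]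
  rw [show (t-1)+1 = t by ring, show (y+1)-1 = y by ring] at hc
  linarith [hc]
/-- All twelve rhombus families, for rhombi with top slice at most `T`. -/
structure Fam (n : ℤ) (f : ℤ → ℤ → ℤ → ℤ) (T : ℤ) : Prop where
  h1 : ∀ x y t : ℤ, t + 1 ≤ T → SH1 n f x y t
  h2 : ∀ x y t : ℤ, t + 1 ≤ T → SH2 n f x y t
  h3 : ∀ x y t : ℤ, t + 1 ≤ T → SH3 n f x y t
  h4 : ∀ x y t : ℤ, t + 1 ≤ T → SH4 n f x y t
  v1 : ∀ x y t : ℤ, t + 1 ≤ T → SV1 n f x y t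
  v2 : ∀ x y t : ℤ, t + 1 ≤ T → SV2 n f x y t
  v3 : ∀ x y t : ℤ, t + 1 ≤ T → SV3 n f x y t
  v4 : ∀ x y t : ℤ, t + 1 ≤ T → SV4 n f x y t
  v5 : ∀ x y t : ℤ, t ≤ T → SV5 n f x y t
  v6 : ∀ x y t : ℤ, t ≤ T → SV6 n f x y t
  v7 : ∀ x y t : ℤ, t ≤ T → SV7 n f x y t
  v8 : ∀ x y t : ℤ, t ≤ T → SV8 n f x y t

section Steps

variable {n T : ℤ} {A B f : ℤ → ℤ → ℤ → ℤ}

lemma step_h1 (hf : OctTet n A B f) (hA2 : HiveCondII n A)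
    (ih : Fam n f T) (x y t : ℤ) (htop : t + 1 ≤ T + 1) : SH1 n f x y t := by
  intro g1 g2 g3 g4
  by_cases hle : t + 1 ≤ T
  · exact ih.h1 x y t hle g1 g2 g3 g4
  have a1 := (inLT_iff _ _ _ _).1 g1
  have a2 := (inLT_iff _ _ _ _).1 g2
  have a3 := (inLT_iff _ _ _ _).1 g3
  have a4 := (inLT_iff _ _ _ _).1 g4
  by_cases hM : y - x = t
  · exact infM_H1 hf.1 hA2 g1 g2 g3 g4 hM
  have eq := expand2 hf.2.2 g4 (by omega) (by omega)
    (show (x+1:ℤ) = x+1 by ring) (show (x-1:ℤ) = x-1 by ring)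
    (show (y+2:ℤ) = (y+1)+1 by ring) (show (y:ℤ) = (y+1)-1 by ring)
    (show (t:ℤ) = (t+1)-1 by ring) (show (t-1:ℤ) = (t+1)-2 by ring)
  rcases max_cases (f (x+1) (y+1) t + f (x-1) (y+1) t) (f x (y+2) t + f x y t) with
    ⟨hm, -⟩ | ⟨hm, -⟩ <;> rw [hm] at eq
  · have iV6 := ih.v6 x y t (by omega) g1 ((inLT_iff _ _ _ _).2 (by omega))
      ((inLT_iff _ _ _ _).2 (by omega)) g3
    linarith [eq, iV6]
  · have iV3 := ih.v3 x (y+1) (t-1) (by omega) ((inLT_iff _ _ _ _).2 (by omega))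
      ((inLT_iff _ _ _ _).2 (by omega)) ((inLT_iff _ _ _ _).2 (by omega))
      ((inLT_iff _ _ _ _).2 (by omega))
    ring_nf at iV3 eq ⊢
    linarith [eq, iV3]

lemma step_h2 (hf : OctTet n A B f) (hB1 : HiveCondI n B)
    (ih : Fam n f T) (x y t : ℤ) (htop : t + 1 ≤ T + 1) : SH2 n f x y t := by
  intro g1 g2 g3 g4
  by_cases hle : t + 1 ≤ T
  · exact ih.h2 x y t hle g1 g2 g3 g4
  have a1 := (inLT_iff _ _ _ _).1 g1
  have a2 := (inLT_iff _ _ _ _).1 g2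
  have a3 := (inLT_iff _ _ _ _).1 g3
  have a4 := (inLT_iff _ _ _ _).1 g4
  by_cases hN : x - y = t
  · exact infN_H2 hf.2.1 hB1 g1 g2 g3 g4 hN
  have eq := expand2 hf.2.2 g3 (by omega) (by omega)
    (show (x+2:ℤ) = (x+1)+1 by ring) (show (x:ℤ) = (x+1)-1 by ring)
    (show (y+1:ℤ) = y+1 by ring) (show (y-1:ℤ) = y-1 by ring)
    (show (t:ℤ) = (t+1)-1 by ring) (show (t-1:ℤ) = (t+1)-2 by ring)
  rcases max_cases (f (x+2) y t + f x y t) (f (x+1) (y+1) t + f (x+1) (y-1) t) with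
    ⟨hm, -⟩ | ⟨hm, -⟩ <;> rw [hm] at eq
  · have iV1 := ih.v1 (x+1) y (t-1) (by omega) ((inLT_iff _ _ _ _).2 (by omega))
      ((inLT_iff _ _ _ _).2 (by omega)) ((inLT_iff _ _ _ _).2 (by omega))
      ((inLT_iff _ _ _ _).2 (by omega))
    ring_nf at iV1 eq ⊢
    linarith [eq, iV1]
  · have iV8 := ih.v8 x y t (by omega) g1 ((inLT_iff _ _ _ _).2 (by omega))
      ((inLT_iff _ _ _ _).2 (by omega)) g4
    linarith [eq, iV8]

lemma step_h3 (hf : OctTet n A B f)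
    (ih : Fam n f T) (x y t : ℤ) (htop : t + 1 ≤ T + 1) : SH3 n f x y t := by
  intro g1 g2 g3 g4
  by_cases hle : t + 1 ≤ T
  · exact ih.h3 x y t hle g1 g2 g3 g4
  have a1 := (inLT_iff _ _ _ _).1 g1
  have a2 := (inLT_iff _ _ _ _).1 g2
  have a3 := (inLT_iff _ _ _ _).1 g3
  have a4 := (inLT_iff _ _ _ _).1 g4
  have eq := expand2 hf.2.2 g3 (by omega) (by omega)
    (show (x+2:ℤ) = (x+1)+1 by ring) (show (x:ℤ) = (x+1)-1 by ring)
    (show (y+1:ℤ) = y+1 by ring) (show (y-1:ℤ) = y-1 by ring)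
    (show (t:ℤ) = (t+1)-1 by ring) (show (t-1:ℤ) = (t+1)-2 by ring)
  rcases max_cases (f (x+2) y t + f x y t) (f (x+1) (y+1) t + f (x+1) (y-1) t) with
    ⟨hm, -⟩ | ⟨hm, -⟩ <;> rw [hm] at eq
  · have iV5 := ih.v5 (x+1) (y-1) t (by omega) g2 ((inLT_iff _ _ _ _).2 (by omega))
      ((inLT_iff _ _ _ _).2 (by omega)) ((inLT_iff _ _ _ _).2 (by omega))
    ring_nf at iV5 eq ⊢
    linarith [eq, iV5]
  · have iV7 := ih.v7 x y t (by omega) g1 ((inLT_iff _ _ _ _).2 (by omega))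
      ((inLT_iff _ _ _ _).2 (by omega)) g4
    linarith [eq, iV7]

lemma step_h4 (hf : OctTet n A B f)
    (ih : Fam n f T) (x y t : ℤ) (htop : t + 1 ≤ T + 1) : SH4 n f x y t := by
  intro g1 g2 g3 g4
  by_cases hle : t + 1 ≤ T
  · exact ih.h4 x y t hle g1 g2 g3 g4
  have a1 := (inLT_iff _ _ _ _).1 g1
  have a2 := (inLT_iff _ _ _ _).1 g2
  have a3 := (inLT_iff _ _ _ _).1 g3
  have a4 := (inLT_iff _ _ _ _).1 g4
  have eq := expand2 hf.2.2 g4 (by omega) (by omega)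
    (show (x+1:ℤ) = x+1 by ring) (show (x-1:ℤ) = x-1 by ring)
    (show (y:ℤ) = (y-1)+1 by ring) (show (y-2:ℤ) = (y-1)-1 by ring)
    (show (t:ℤ) = (t+1)-1 by ring) (show (t-1:ℤ) = (t+1)-2 by ring)
  rcases max_cases (f (x+1) (y-1) t + f (x-1) (y-1) t) (f x y t + f x (y-2) t) with
    ⟨hm, -⟩ | ⟨hm, -⟩ <;> rw [hm] at eq
  · have iV2 := ih.v2 x (y-1) (t-1) (by omega) ((inLT_iff _ _ _ _).2 (by omega))
      ((inLT_iff _ _ _ _).2 (by omega)) ((inLT_iff _ _ _ _).2 (by omega))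
      ((inLT_iff _ _ _ _).2 (by omega))
    ring_nf at iV2 eq ⊢
    linarith [eq, iV2]
  · have iV4 := ih.v4 x (y-1) (t-1) (by omega) ((inLT_iff _ _ _ _).2 (by omega))
      ((inLT_iff _ _ _ _).2 (by omega)) ((inLT_iff _ _ _ _).2 (by omega))
      ((inLT_iff _ _ _ _).2 (by omega))
    ring_nf at iV4 eq ⊢
    linarith [eq, iV4]

end Steps
section Steps2

variable {n T : ℤ} {A B f : ℤ → ℤ → ℤ → ℤ}

lemma step_v1 (hf : OctTet n A B f) (hB1 : HiveCondI n B)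
    (ih : Fam n f T) (x y t : ℤ) (htop : t + 1 ≤ T + 1) : SV1 n f x y t := by
  intro g1 g2 g3 g4
  by_cases hle : t + 1 ≤ T
  · exact ih.v1 x y t hle g1 g2 g3 g4
  have a1 := (inLT_iff _ _ _ _).1 g1
  have a2 := (inLT_iff _ _ _ _).1 g2
  have a3 := (inLT_iff _ _ _ _).1 g3
  have a4 := (inLT_iff _ _ _ _).1 g4
  have eqd := expand2 hf.2.2 g2 (by omega) (by omega)
    (show (x+1:ℤ) = x+1 by ring) (show (x-1:ℤ) = x-1 by ring)
    (show (y+2:ℤ) = (y+1)+1 by ring) (show (y:ℤ) = (y+1)-1 by ring)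
    (show (t:ℤ) = (t+1)-1 by ring) (show (t-1:ℤ) = (t+1)-2 by ring)
  -- eqd : f x (y+1) (t+1) = max (f (x+1) (y+1) t + f (x-1) (y+1) t)
  --         (f x (y+2) t + f x y t) - f x (y+1) (t-1)
  have hdl := le_max_left (f (x+1) (y+1) t + f (x-1) (y+1) t) (f x (y+2) t + f x y t)
  by_cases hN : x - y = t
  · -- q = (x+1,y,t+1) lies on the N-face
    have hH2 := infN_H2 hf.2.1 hB1 g1 ((inLT_iff _ _ _ _).2 (by omega)) g3
      ((inLT_iff _ _ _ _).2 (by omega)) hN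
    linarith [eqd, hdl, hH2]
  · have eqq := expand2 hf.2.2 g3 (by omega) (by omega)
      (show (x+2:ℤ) = (x+1)+1 by ring) (show (x:ℤ) = (x+1)-1 by ring)
      (show (y+1:ℤ) = y+1 by ring) (show (y-1:ℤ) = y-1 by ring)
      (show (t:ℤ) = (t+1)-1 by ring) (show (t-1:ℤ) = (t+1)-2 by ring)
    rcases max_cases (f (x+2) y t + f x y t) (f (x+1) (y+1) t + f (x+1) (y-1) t) with
      ⟨hm, -⟩ | ⟨hm, -⟩ <;> rw [hm] at eqq
    · have iV1 := ih.v1 (x+1) y (t-1) (by omega) ((inLT_iff _ _ _ _).2 (by omega))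
        ((inLT_iff _ _ _ _).2 (by omega)) ((inLT_iff _ _ _ _).2 (by omega))
        ((inLT_iff _ _ _ _).2 (by omega))
      ring_nf at iV1 eqq eqd hdl ⊢
      linarith [eqq, eqd, hdl, iV1]
    · have iV8 := ih.v8 x y t (by omega) g1 ((inLT_iff _ _ _ _).2 (by omega))
        ((inLT_iff _ _ _ _).2 (by omega)) ((inLT_iff _ _ _ _).2 (by omega))
      linarith [eqq, eqd, hdl, iV8]

lemma step_v2 (hf : OctTet n A B f) (hA1 : HiveCondI n A)
    (ih : Fam n f T) (x y t : ℤ) (htop : t + 1 ≤ T + 1) : SV2 n f x y t := by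
  intro g1 g2 g3 g4
  by_cases hle : t + 1 ≤ T
  · exact ih.v2 x y t hle g1 g2 g3 g4
  have a1 := (inLT_iff _ _ _ _).1 g1
  have a2 := (inLT_iff _ _ _ _).1 g2
  have a3 := (inLT_iff _ _ _ _).1 g3
  have a4 := (inLT_iff _ _ _ _).1 g4
  by_cases hM : y - x = t
  · exact infM_V2 hf.1 hA1 g1 g2 g3 g4 hM
  have eqd := expand2 hf.2.2 g2 (by omega) (by omega)
    (show (x+1:ℤ) = x+1 by ring) (show (x-1:ℤ) = x-1 by ring)
    (show (y+2:ℤ) = (y+1)+1 by ring) (show (y:ℤ) = (y+1)-1 by ring)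
    (show (t:ℤ) = (t+1)-1 by ring) (show (t-1:ℤ) = (t+1)-2 by ring)
  have hdl := le_max_left (f (x+1) (y+1) t + f (x-1) (y+1) t) (f x (y+2) t + f x y t)
  have eqq := expand2 hf.2.2 g3 (by omega) (by omega)
    (show (x:ℤ) = (x-1)+1 by ring) (show (x-2:ℤ) = (x-1)-1 by ring)
    (show (y+1:ℤ) = y+1 by ring) (show (y-1:ℤ) = y-1 by ring)
    (show (t:ℤ) = (t+1)-1 by ring) (show (t-1:ℤ) = (t+1)-2 by ring)
  -- eqq : f (x-1) y (t+1) = max (f x y t + f (x-2) y t)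
  --        (f (x-1) (y+1) t + f (x-1) (y-1) t) - f (x-1) y (t-1)
  rcases max_cases (f x y t + f (x-2) y t) (f (x-1) (y+1) t + f (x-1) (y-1) t) with
    ⟨hm, -⟩ | ⟨hm, -⟩ <;> rw [hm] at eqq
  · have iV2 := ih.v2 (x-1) y (t-1) (by omega) ((inLT_iff _ _ _ _).2 (by omega))
      ((inLT_iff _ _ _ _).2 (by omega)) ((inLT_iff _ _ _ _).2 (by omega))
      ((inLT_iff _ _ _ _).2 (by omega))
    ring_nf at iV2 eqq eqd hdl ⊢
    linarith [eqq, eqd, hdl, iV2]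
  · have iV4 := ih.v4 (x-1) y (t-1) (by omega) ((inLT_iff _ _ _ _).2 (by omega))
      ((inLT_iff _ _ _ _).2 (by omega)) ((inLT_iff _ _ _ _).2 (by omega))
      ((inLT_iff _ _ _ _).2 (by omega))
    ring_nf at iV4 eqq eqd hdl ⊢
    linarith [eqq, eqd, hdl, iV4]

lemma step_v3 (hf : OctTet n A B f) (hA2 : HiveCondII n A)
    (ih : Fam n f T) (x y t : ℤ) (htop : t + 1 ≤ T + 1) : SV3 n f x y t := by
  intro g1 g2 g3 g4
  by_cases hle : t + 1 ≤ T
  · exact ih.v3 x y t hle g1 g2 g3 g4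
  have a1 := (inLT_iff _ _ _ _).1 g1
  have a2 := (inLT_iff _ _ _ _).1 g2
  have a3 := (inLT_iff _ _ _ _).1 g3
  have a4 := (inLT_iff _ _ _ _).1 g4
  have eqd := expand2 hf.2.2 g2 (by omega) (by omega)
    (show (x+2:ℤ) = (x+1)+1 by ring) (show (x:ℤ) = (x+1)-1 by ring)
    (show (y+1:ℤ) = y+1 by ring) (show (y-1:ℤ) = y-1 by ring)
    (show (t:ℤ) = (t+1)-1 by ring) (show (t-1:ℤ) = (t+1)-2 by ring)
  -- eqd : f (x+1) y (t+1) = max (f (x+2) y t + f x y t)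
  --        (f (x+1) (y+1) t + f (x+1) (y-1) t) - f (x+1) y (t-1)
  have hdr := le_max_right (f (x+2) y t + f x y t) (f (x+1) (y+1) t + f (x+1) (y-1) t)
  by_cases hM : y - x = t
  · -- q = (x,y+1,t+1) lies on the M-face
    have hH1 := infM_H1 hf.1 hA2 g1 ((inLT_iff _ _ _ _).2 (by omega))
      ((inLT_iff _ _ _ _).2 (by omega)) g3 hM
    linarith [eqd, hdr, hH1]
  · have eqq := expand2 hf.2.2 g3 (by omega) (by omega)
      (show (x+1:ℤ) = x+1 by ring) (show (x-1:ℤ) = x-1 by ring)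
      (show (y+2:ℤ) = (y+1)+1 by ring) (show (y:ℤ) = (y+1)-1 by ring)
      (show (t:ℤ) = (t+1)-1 by ring) (show (t-1:ℤ) = (t+1)-2 by ring)
    rcases max_cases (f (x+1) (y+1) t + f (x-1) (y+1) t) (f x (y+2) t + f x y t) with
      ⟨hm, -⟩ | ⟨hm, -⟩ <;> rw [hm] at eqq
    · have iV6 := ih.v6 x y t (by omega) g1 ((inLT_iff _ _ _ _).2 (by omega))
        ((inLT_iff _ _ _ _).2 (by omega)) ((inLT_iff _ _ _ _).2 (by omega))
      linarith [eqq, eqd, hdr, iV6]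
    · have iV3 := ih.v3 x (y+1) (t-1) (by omega) ((inLT_iff _ _ _ _).2 (by omega))
        ((inLT_iff _ _ _ _).2 (by omega)) ((inLT_iff _ _ _ _).2 (by omega))
        ((inLT_iff _ _ _ _).2 (by omega))
      ring_nf at iV3 eqq eqd hdr ⊢
      linarith [eqq, eqd, hdr, iV3]

lemma step_v4 (hf : OctTet n A B f) (hB2 : HiveCondII n B)
    (ih : Fam n f T) (x y t : ℤ) (htop : t + 1 ≤ T + 1) : SV4 n f x y t := by
  intro g1 g2 g3 g4
  by_cases hle : t + 1 ≤ T
  · exact ih.v4 x y t hle g1 g2 g3 g4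
  have a1 := (inLT_iff _ _ _ _).1 g1
  have a2 := (inLT_iff _ _ _ _).1 g2
  have a3 := (inLT_iff _ _ _ _).1 g3
  have a4 := (inLT_iff _ _ _ _).1 g4
  by_cases hN : x - y = t
  · exact infN_V4 hf.2.1 hB2 g1 g2 g3 g4 hN
  have eqd := expand2 hf.2.2 g2 (by omega) (by omega)
    (show (x+2:ℤ) = (x+1)+1 by ring) (show (x:ℤ) = (x+1)-1 by ring)
    (show (y+1:ℤ) = y+1 by ring) (show (y-1:ℤ) = y-1 by ring)
    (show (t:ℤ) = (t+1)-1 by ring) (show (t-1:ℤ) = (t+1)-2 by ring)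
  have hdr := le_max_right (f (x+2) y t + f x y t) (f (x+1) (y+1) t + f (x+1) (y-1) t)
  have eqq := expand2 hf.2.2 g3 (by omega) (by omega)
    (show (x+1:ℤ) = x+1 by ring) (show (x-1:ℤ) = x-1 by ring)
    (show (y:ℤ) = (y-1)+1 by ring) (show (y-2:ℤ) = (y-1)-1 by ring)
    (show (t:ℤ) = (t+1)-1 by ring) (show (t-1:ℤ) = (t+1)-2 by ring)
  -- eqq : f x (y-1) (t+1) = max (f (x+1) (y-1) t + f (x-1) (y-1) t)
  --        (f x y t + f x (y-2) t) - f x (y-1) (t-1)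
  rcases max_cases (f (x+1) (y-1) t + f (x-1) (y-1) t) (f x y t + f x (y-2) t) with
    ⟨hm, -⟩ | ⟨hm, -⟩ <;> rw [hm] at eqq
  · have iV2 := ih.v2 x (y-1) (t-1) (by omega) ((inLT_iff _ _ _ _).2 (by omega))
      ((inLT_iff _ _ _ _).2 (by omega)) ((inLT_iff _ _ _ _).2 (by omega))
      ((inLT_iff _ _ _ _).2 (by omega))
    ring_nf at iV2 eqq eqd hdr ⊢
    linarith [eqq, eqd, hdr, iV2]
  · have iV4 := ih.v4 x (y-1) (t-1) (by omega) ((inLT_iff _ _ _ _).2 (by omega))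
      ((inLT_iff _ _ _ _).2 (by omega)) ((inLT_iff _ _ _ _).2 (by omega))
      ((inLT_iff _ _ _ _).2 (by omega))
    ring_nf at iV4 eqq eqd hdr ⊢
    linarith [eqq, eqd, hdr, iV4]

end Steps2
section Steps3

variable {n T : ℤ} {A B f : ℤ → ℤ → ℤ → ℤ}

lemma step_v5 (hf : OctTet n A B f) (hB3 : HiveCondIII n B)
    (ih : Fam n f T) (x y t : ℤ) (htop : t ≤ T + 1) : SV5 n f x y t := by
  intro g1 g2 g3 g4
  by_cases hle : t ≤ T
  · exact ih.v5 x y t hle g1 g2 g3 g4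
  have a1 := (inLT_iff _ _ _ _).1 g1
  have a2 := (inLT_iff _ _ _ _).1 g2
  have a3 := (inLT_iff _ _ _ _).1 g3
  have a4 := (inLT_iff _ _ _ _).1 g4
  by_cases hN : x - y = t
  · exact infN_V5 hf.2.1 hB3 g1 g2 g3 g4 hN
  have eqd := expand2 hf.2.2 g1 (by omega) (by omega)
    (show (x+1:ℤ) = x+1 by ring) (show (x-1:ℤ) = x-1 by ring)
    (show (y+1:ℤ) = y+1 by ring) (show (y-1:ℤ) = y-1 by ring)
    (show (t-1:ℤ) = t-1 by ring) (show (t-2:ℤ) = t-2 by ring)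
  have hdl := le_max_left (f (x+1) y (t-1) + f (x-1) y (t-1))
    (f x (y+1) (t-1) + f x (y-1) (t-1))
  have eqr := expand2 hf.2.2 g3 (by omega) (by omega)
    (show (x+2:ℤ) = (x+1)+1 by ring) (show (x:ℤ) = (x+1)-1 by ring)
    (show (y+2:ℤ) = (y+1)+1 by ring) (show (y:ℤ) = (y+1)-1 by ring)
    (show (t-1:ℤ) = t-1 by ring) (show (t-2:ℤ) = t-2 by ring)
  -- eqr : f (x+1) (y+1) t = max (f (x+2) (y+1) (t-1) + f x (y+1) (t-1))
  --        (f (x+1) (y+2) (t-1) + f (x+1) y (t-1)) - f (x+1) (y+1) (t-2)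
  rcases max_cases (f (x+2) (y+1) (t-1) + f x (y+1) (t-1))
      (f (x+1) (y+2) (t-1) + f (x+1) y (t-1)) with ⟨hm, -⟩ | ⟨hm, -⟩ <;> rw [hm] at eqr
  · have iV5 := ih.v5 (x+1) y (t-1) (by omega) ((inLT_iff _ _ _ _).2 (by omega))
      ((inLT_iff _ _ _ _).2 (by omega)) ((inLT_iff _ _ _ _).2 (by omega))
      ((inLT_iff _ _ _ _).2 (by omega))
    ring_nf at iV5 eqr eqd hdl ⊢
    linarith [eqr, eqd, hdl, iV5]
  · have iV7 := ih.v7 x (y+1) (t-1) (by omega) ((inLT_iff _ _ _ _).2 (by omega))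
      ((inLT_iff _ _ _ _).2 (by omega)) ((inLT_iff _ _ _ _).2 (by omega))
      ((inLT_iff _ _ _ _).2 (by omega))
    ring_nf at iV7 eqr eqd hdl ⊢
    linarith [eqr, eqd, hdl, iV7]

lemma step_v7 (hf : OctTet n A B f) (hA3 : HiveCondIII n A)
    (ih : Fam n f T) (x y t : ℤ) (htop : t ≤ T + 1) : SV7 n f x y t := by
  intro g1 g2 g3 g4
  by_cases hle : t ≤ T
  · exact ih.v7 x y t hle g1 g2 g3 g4
  have a1 := (inLT_iff _ _ _ _).1 g1
  have a2 := (inLT_iff _ _ _ _).1 g2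
  have a3 := (inLT_iff _ _ _ _).1 g3
  have a4 := (inLT_iff _ _ _ _).1 g4
  by_cases hM : y - x = t
  · exact infM_V7 hf.1 hA3 g1 g2 g3 g4 hM
  have eqd := expand2 hf.2.2 g1 (by omega) (by omega)
    (show (x+1:ℤ) = x+1 by ring) (show (x-1:ℤ) = x-1 by ring)
    (show (y+1:ℤ) = y+1 by ring) (show (y-1:ℤ) = y-1 by ring)
    (show (t-1:ℤ) = t-1 by ring) (show (t-2:ℤ) = t-2 by ring)
  have hdr := le_max_right (f (x+1) y (t-1) + f (x-1) y (t-1))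
    (f x (y+1) (t-1) + f x (y-1) (t-1))
  have eqr := expand2 hf.2.2 g3 (by omega) (by omega)
    (show (x+2:ℤ) = (x+1)+1 by ring) (show (x:ℤ) = (x+1)-1 by ring)
    (show (y+2:ℤ) = (y+1)+1 by ring) (show (y:ℤ) = (y+1)-1 by ring)
    (show (t-1:ℤ) = t-1 by ring) (show (t-2:ℤ) = t-2 by ring)
  rcases max_cases (f (x+2) (y+1) (t-1) + f x (y+1) (t-1))
      (f (x+1) (y+2) (t-1) + f (x+1) y (t-1)) with ⟨hm, -⟩ | ⟨hm, -⟩ <;> rw [hm] at eqr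
  · have iV5 := ih.v5 (x+1) y (t-1) (by omega) ((inLT_iff _ _ _ _).2 (by omega))
      ((inLT_iff _ _ _ _).2 (by omega)) ((inLT_iff _ _ _ _).2 (by omega))
      ((inLT_iff _ _ _ _).2 (by omega))
    ring_nf at iV5 eqr eqd hdr ⊢
    linarith [eqr, eqd, hdr, iV5]
  · have iV7 := ih.v7 x (y+1) (t-1) (by omega) ((inLT_iff _ _ _ _).2 (by omega))
      ((inLT_iff _ _ _ _).2 (by omega)) ((inLT_iff _ _ _ _).2 (by omega))
      ((inLT_iff _ _ _ _).2 (by omega))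
    ring_nf at iV7 eqr eqd hdr ⊢
    linarith [eqr, eqd, hdr, iV7]

lemma step_v6 (hf : OctTet n A B f) (hA2 : HiveCondII n A)
    (ih : Fam n f T) (x y t : ℤ) (htop : t ≤ T + 1) : SV6 n f x y t := by
  intro g1 g2 g3 g4
  by_cases hle : t ≤ T
  · exact ih.v6 x y t hle g1 g2 g3 g4
  have a1 := (inLT_iff _ _ _ _).1 g1
  have a2 := (inLT_iff _ _ _ _).1 g2
  have a3 := (inLT_iff _ _ _ _).1 g3
  have a4 := (inLT_iff _ _ _ _).1 g4
  have eqd := expand2 hf.2.2 g1 (by omega) (by omega)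
    (show (x+1:ℤ) = x+1 by ring) (show (x-1:ℤ) = x-1 by ring)
    (show (y+1:ℤ) = y+1 by ring) (show (y-1:ℤ) = y-1 by ring)
    (show (t-1:ℤ) = t-1 by ring) (show (t-2:ℤ) = t-2 by ring)
  have hdl := le_max_left (f (x+1) y (t-1) + f (x-1) y (t-1))
    (f x (y+1) (t-1) + f x (y-1) (t-1))
  by_cases hrl : y - x = t - 2
  · -- r = (x-1,y+1,t) lies on the M-face
    have hH1 := infM_H1 (x := x-1) (y := y) (t := t-1) hf.1 hA2
      ((inLT_iff _ _ _ _).2 (by omega)) ((inLT_iff _ _ _ _).2 (by omega))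
      ((inLT_iff _ _ _ _).2 (by omega)) ((inLT_iff _ _ _ _).2 (by omega)) (by omega)
    -- hH1 : f (x-1+1) y (t-1-1) + f (x-1) (y+1) (t-1+1)
    --         ≤ f (x-1) y (t-1) + f (x-1+1) (y+1) (t-1)
    ring_nf at hH1 eqd hdl ⊢
    linarith [hH1, eqd, hdl]
  · have eqr := expand2 hf.2.2 g3 (by omega) (by omega)
      (show (x:ℤ) = (x-1)+1 by ring) (show (x-2:ℤ) = (x-1)-1 by ring)
      (show (y+2:ℤ) = (y+1)+1 by ring) (show (y:ℤ) = (y+1)-1 by ring)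
      (show (t-1:ℤ) = t-1 by ring) (show (t-2:ℤ) = t-2 by ring)
    -- eqr : f (x-1) (y+1) t = max (f x (y+1) (t-1) + f (x-2) (y+1) (t-1))
    --        (f (x-1) (y+2) (t-1) + f (x-1) y (t-1)) - f (x-1) (y+1) (t-2)
    rcases max_cases (f x (y+1) (t-1) + f (x-2) (y+1) (t-1))
        (f (x-1) (y+2) (t-1) + f (x-1) y (t-1)) with ⟨hm, -⟩ | ⟨hm, -⟩ <;> rw [hm] at eqr
    · have iV6 := ih.v6 (x-1) y (t-1) (by omega) ((inLT_iff _ _ _ _).2 (by omega))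
        ((inLT_iff _ _ _ _).2 (by omega)) ((inLT_iff _ _ _ _).2 (by omega))
        ((inLT_iff _ _ _ _).2 (by omega))
      ring_nf at iV6 eqr eqd hdl ⊢
      linarith [eqr, eqd, hdl, iV6]
    · have iV3 := ih.v3 (x-1) (y+1) (t-2) (by omega) ((inLT_iff _ _ _ _).2 (by omega))
        ((inLT_iff _ _ _ _).2 (by omega)) ((inLT_iff _ _ _ _).2 (by omega))
        ((inLT_iff _ _ _ _).2 (by omega))
      ring_nf at iV3 eqr eqd hdl ⊢
      linarith [eqr, eqd, hdl, iV3]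

lemma step_v8 (hf : OctTet n A B f) (hB1 : HiveCondI n B)
    (ih : Fam n f T) (x y t : ℤ) (htop : t ≤ T + 1) : SV8 n f x y t := by
  intro g1 g2 g3 g4
  by_cases hle : t ≤ T
  · exact ih.v8 x y t hle g1 g2 g3 g4
  have a1 := (inLT_iff _ _ _ _).1 g1
  have a2 := (inLT_iff _ _ _ _).1 g2
  have a3 := (inLT_iff _ _ _ _).1 g3
  have a4 := (inLT_iff _ _ _ _).1 g4
  have eqd := expand2 hf.2.2 g1 (by omega) (by omega)
    (show (x+1:ℤ) = x+1 by ring) (show (x-1:ℤ) = x-1 by ring)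
    (show (y+1:ℤ) = y+1 by ring) (show (y-1:ℤ) = y-1 by ring)
    (show (t-1:ℤ) = t-1 by ring) (show (t-2:ℤ) = t-2 by ring)
  have hdr := le_max_right (f (x+1) y (t-1) + f (x-1) y (t-1))
    (f x (y+1) (t-1) + f x (y-1) (t-1))
  by_cases hrl : x - y = t - 2
  · -- r = (x+1,y-1,t) lies on the N-face
    have hH2 := infN_H2 (x := x) (y := y-1) (t := t-1) hf.2.1 hB1
      ((inLT_iff _ _ _ _).2 (by omega)) ((inLT_iff _ _ _ _).2 (by omega))
      ((inLT_iff _ _ _ _).2 (by omega)) ((inLT_iff _ _ _ _).2 (by omega)) (by omega)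
    ring_nf at hH2 eqd hdr ⊢
    linarith [hH2, eqd, hdr]
  · have eqr := expand2 hf.2.2 g3 (by omega) (by omega)
      (show (x+2:ℤ) = (x+1)+1 by ring) (show (x:ℤ) = (x+1)-1 by ring)
      (show (y:ℤ) = (y-1)+1 by ring) (show (y-2:ℤ) = (y-1)-1 by ring)
      (show (t-1:ℤ) = t-1 by ring) (show (t-2:ℤ) = t-2 by ring)
    -- eqr : f (x+1) (y-1) t = max (f (x+2) (y-1) (t-1) + f x (y-1) (t-1))
    --        (f (x+1) y (t-1) + f (x+1) (y-2) (t-1)) - f (x+1) (y-1) (t-2)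
    rcases max_cases (f (x+2) (y-1) (t-1) + f x (y-1) (t-1))
        (f (x+1) y (t-1) + f (x+1) (y-2) (t-1)) with ⟨hm, -⟩ | ⟨hm, -⟩ <;> rw [hm] at eqr
    · have iV1 := ih.v1 (x+1) (y-1) (t-2) (by omega) ((inLT_iff _ _ _ _).2 (by omega))
        ((inLT_iff _ _ _ _).2 (by omega)) ((inLT_iff _ _ _ _).2 (by omega))
        ((inLT_iff _ _ _ _).2 (by omega))
      ring_nf at iV1 eqr eqd hdr ⊢
      linarith [eqr, eqd, hdr, iV1]
    · have iV8 := ih.v8 x (y-1) (t-1) (by omega) ((inLT_iff _ _ _ _).2 (by omega))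
        ((inLT_iff _ _ _ _).2 (by omega)) ((inLT_iff _ _ _ _).2 (by omega))
        ((inLT_iff _ _ _ _).2 (by omega))
      ring_nf at iV8 eqr eqd hdr ⊢
      linarith [eqr, eqd, hdr, iV8]

end Steps3
section Assemble

variable {n : ℤ} {A B f : ℤ → ℤ → ℤ → ℤ}

lemma fam_zero : Fam n f 0 := by
  constructor <;>
  · intro x y t htop g1 g2 g3 g4
    exfalso
    have a1 := (inLT_iff _ _ _ _).1 g1
    have a2 := (inLT_iff _ _ _ _).1 g2
    have a3 := (inLT_iff _ _ _ _).1 g3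
    have a4 := (inLT_iff _ _ _ _).1 g4
    omega

theorem fam_all (hA1 : HiveCondI n A) (hA2 : HiveCondII n A) (hA3 : HiveCondIII n A)
    (hB1 : HiveCondI n B) (hB2 : HiveCondII n B) (hB3 : HiveCondIII n B)
    (hf : OctTet n A B f) : ∀ T : ℕ, Fam n f T := by
  intro T
  induction T with
  | zero => exact fam_zero
  | succ T ih =>
    push_cast
    exact {
      h1 := step_h1 hf hA2 ih
      h2 := step_h2 hf hB1 ih
      h3 := step_h3 hf ih
      h4 := step_h4 hf ih
      v1 := step_v1 hf hB1 ih
      v2 := step_v2 hf hA1 ih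
      v3 := step_v3 hf hA2 ih
      v4 := step_v4 hf hB2 ih
      v5 := step_v5 hf hB3 ih
      v6 := step_v6 hf hA2 ih
      v7 := step_v7 hf hA3 ih
      v8 := step_v8 hf hB1 ih }

/-- All rhombus inequalities, unconditionally. -/
theorem rhombus_all (hA1 : HiveCondI n A) (hA2 : HiveCondII n A) (hA3 : HiveCondIII n A)
    (hB1 : HiveCondI n B) (hB2 : HiveCondII n B) (hB3 : HiveCondIII n B)
    (hf : OctTet n A B f) (x y t : ℤ) :
    SH1 n f x y t ∧ SH2 n f x y t ∧ SH3 n f x y t ∧ SH4 n f x y t ∧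
    SV1 n f x y t ∧ SV2 n f x y t ∧ SV3 n f x y t ∧ SV4 n f x y t ∧
    SV5 n f x y t ∧ SV6 n f x y t ∧ SV7 n f x y t ∧ SV8 n f x y t := by
  have key := fam_all hA1 hA2 hA3 hB1 hB2 hB3 hf
  by_cases h0 : 0 ≤ t
  · have h1 := key (t+1).toNat
    have h2 := key t.toNat
    have e1 : ((t+1).toNat : ℤ) = t + 1 := by omega
    have e2 : (t.toNat : ℤ) = t := by omega
    rw [e1] at h1; rw [e2] at h2
    exact ⟨h1.h1 x y t le_rfl, h1.h2 x y t le_rfl, h1.h3 x y t le_rfl,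
      h1.h4 x y t le_rfl, h1.v1 x y t le_rfl, h1.v2 x y t le_rfl,
      h1.v3 x y t le_rfl, h1.v4 x y t le_rfl, h2.v5 x y t le_rfl,
      h2.v6 x y t le_rfl, h2.v7 x y t le_rfl, h2.v8 x y t le_rfl⟩
  · refine ⟨?_, ?_, ?_, ?_, ?_, ?_, ?_, ?_, ?_, ?_, ?_, ?_⟩ <;>
    · intro g1 g2 g3 g4
      exfalso
      have a1 := (inLT_iff _ _ _ _).1 g1
      omega

end Assemble
section Outputs

variable {n : ℤ} {A B f H : ℤ → ℤ → ℤ → ℤ}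

/-- Convenient packaging of the rhombus hypotheses. -/
def GoodIn (n : ℤ) (A B : ℤ → ℤ → ℤ → ℤ) : Prop :=
  HiveCondI n A ∧ HiveCondII n A ∧ HiveCondIII n A ∧
  HiveCondI n B ∧ HiveCondII n B ∧ HiveCondIII n B

lemma rhombus_all' (hAB : GoodIn n A B) (hf : OctTet n A B f) (x y t : ℤ) :
    SH1 n f x y t ∧ SH2 n f x y t ∧ SH3 n f x y t ∧ SH4 n f x y t ∧
    SV1 n f x y t ∧ SV2 n f x y t ∧ SV3 n f x y t ∧ SV4 n f x y t ∧
    SV5 n f x y t ∧ SV6 n f x y t ∧ SV7 n f x y t ∧ SV8 n f x y t :=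
  rhombus_all hAB.1 hAB.2.1 hAB.2.2.1 hAB.2.2.2.1 hAB.2.2.2.2.1 hAB.2.2.2.2.2 hf x y t

lemma Qtet_condI (hAB : GoodIn n A B) (hf : OctTet n A B f) :
    HiveCondI n (QtetFun n f) := by
  intro x y z d1 d2 d3 d4
  have b1 := (inDelta_iff _ _ _ _).1 d1
  have b2 := (inDelta_iff _ _ _ _).1 d2
  have b3 := (inDelta_iff _ _ _ _).1 d3
  have b4 := (inDelta_iff _ _ _ _).1 d4
  simp only [QtetFun]
  rw [if_pos d1, if_pos d2, if_pos d3, if_pos d4]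
  have key := (rhombus_all' hAB hf x y (n-z)).2.2.2.2.1 ((inLT_iff _ _ _ _).2 (by omega))
    ((inLT_iff _ _ _ _).2 (by omega)) ((inLT_iff _ _ _ _).2 (by omega))
    ((inLT_iff _ _ _ _).2 (by omega))
  ring_nf at key ⊢
  linarith [key]

lemma Qtet_condII (hAB : GoodIn n A B) (hf : OctTet n A B f) :
    HiveCondII n (QtetFun n f) := by
  intro x y z d1 d2 d3 d4
  have b1 := (inDelta_iff _ _ _ _).1 d1
  have b2 := (inDelta_iff _ _ _ _).1 d2
  have b3 := (inDelta_iff _ _ _ _).1 d3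
  have b4 := (inDelta_iff _ _ _ _).1 d4
  simp only [QtetFun]
  rw [if_pos d1, if_pos d2, if_pos d3, if_pos d4]
  have key := (rhombus_all' hAB hf x y (n-z)).2.2.2.2.2.2.1 ((inLT_iff _ _ _ _).2 (by omega))
    ((inLT_iff _ _ _ _).2 (by omega)) ((inLT_iff _ _ _ _).2 (by omega))
    ((inLT_iff _ _ _ _).2 (by omega))
  ring_nf at key ⊢
  linarith [key]

lemma Qtet_condIII (hAB : GoodIn n A B) (hf : OctTet n A B f) :
    HiveCondIII n (QtetFun n f) := by
  intro x y z d1 d2 d3 d4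
  have b1 := (inDelta_iff _ _ _ _).1 d1
  have b2 := (inDelta_iff _ _ _ _).1 d2
  have b3 := (inDelta_iff _ _ _ _).1 d3
  have b4 := (inDelta_iff _ _ _ _).1 d4
  simp only [QtetFun]
  rw [if_pos d1, if_pos d2, if_pos d3, if_pos d4]
  have key := (rhombus_all' hAB hf x y (n-z)).2.2.1 ((inLT_iff _ _ _ _).2 (by omega))
    ((inLT_iff _ _ _ _).2 (by omega)) ((inLT_iff _ _ _ _).2 (by omega))
    ((inLT_iff _ _ _ _).2 (by omega))
  ring_nf at key ⊢
  linarith [key]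

lemma Ptet_condI (hAB : GoodIn n A B) (hf : OctTet n A B f) :
    HiveCondI n (PtetFun n f) := by
  intro x y z d1 d2 d3 d4
  have b1 := (inDelta_iff _ _ _ _).1 d1
  have b2 := (inDelta_iff _ _ _ _).1 d2
  have b3 := (inDelta_iff _ _ _ _).1 d3
  have b4 := (inDelta_iff _ _ _ _).1 d4
  simp only [PtetFun]
  rw [if_pos d1, if_pos d2, if_pos d3, if_pos d4]
  have key := (rhombus_all' hAB hf (n-y-1) (n-z+1) (n-x)).2.2.2.1
    ((inLT_iff _ _ _ _).2 (by omega)) ((inLT_iff _ _ _ _).2 (by omega))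
    ((inLT_iff _ _ _ _).2 (by omega)) ((inLT_iff _ _ _ _).2 (by omega))
  ring_nf at key ⊢
  linarith [key]

lemma Ptet_condII (hAB : GoodIn n A B) (hf : OctTet n A B f) :
    HiveCondII n (PtetFun n f) := by
  intro x y z d1 d2 d3 d4
  have b1 := (inDelta_iff _ _ _ _).1 d1
  have b2 := (inDelta_iff _ _ _ _).1 d2
  have b3 := (inDelta_iff _ _ _ _).1 d3
  have b4 := (inDelta_iff _ _ _ _).1 d4
  simp only [PtetFun]
  rw [if_pos d1, if_pos d2, if_pos d3, if_pos d4]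
  have key := (rhombus_all' hAB hf (n-y) (n-z) (n-x)).2.2.2.2.2.2.2.2.2.1
    ((inLT_iff _ _ _ _).2 (by omega)) ((inLT_iff _ _ _ _).2 (by omega))
    ((inLT_iff _ _ _ _).2 (by omega)) ((inLT_iff _ _ _ _).2 (by omega))
  ring_nf at key ⊢
  linarith [key]

lemma Ptet_condIII (hAB : GoodIn n A B) (hf : OctTet n A B f) :
    HiveCondIII n (PtetFun n f) := by
  intro x y z d1 d2 d3 d4
  have b1 := (inDelta_iff _ _ _ _).1 d1
  have b2 := (inDelta_iff _ _ _ _).1 d2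
  have b3 := (inDelta_iff _ _ _ _).1 d3
  have b4 := (inDelta_iff _ _ _ _).1 d4
  simp only [PtetFun]
  rw [if_pos d1, if_pos d2, if_pos d3, if_pos d4]
  have key := (rhombus_all' hAB hf (n-y) (n-z) (n-x)).2.2.2.2.2.2.2.2.2.2.2
    ((inLT_iff _ _ _ _).2 (by omega)) ((inLT_iff _ _ _ _).2 (by omega))
    ((inLT_iff _ _ _ _).2 (by omega)) ((inLT_iff _ _ _ _).2 (by omega))
  ring_nf at key ⊢
  linarith [key]

/- Boundary value formulas. -/

lemma Qtet_mu_edge (hf : OctTet n A B f) (k : ℤ) (h0 : 0 ≤ k) (h1 : k ≤ n) :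
    QtetFun n f k 0 (n-k) = B k 0 (n-k) := by
  have hd : inDelta n k 0 (n-k) := (inDelta_iff _ _ _ _).2 (by omega)
  simp only [QtetFun]
  rw [if_pos hd, show n - (n-k) = k by ring]
  exact faceN hf.2.1 ((inLT_iff _ _ _ _).2 (by omega)) (by ring)

lemma Qtet_nu_edge (hf : OctTet n A B f) (k : ℤ) (h0 : 0 ≤ k) (h1 : k ≤ n) :
    QtetFun n f 0 k (n-k) = A 0 k (n-k) := by
  have hd : inDelta n 0 k (n-k) := (inDelta_iff _ _ _ _).2 (by omega)
  simp only [QtetFun]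
  rw [if_pos hd, show n - (n-k) = k by ring]
  have := faceM hf.1 (x := 0) (y := k) (t := k) ((inLT_iff _ _ _ _).2 (by omega)) (by ring)
  rw [this, show n - 0 - k = n - k by ring]

lemma Qtet_lam_edge (k : ℤ) (h0 : 0 ≤ k) (h1 : k ≤ n) :
    QtetFun n f (n-k) k 0 = f (n-k) k n := by
  have hd : inDelta n (n-k) k 0 := (inDelta_iff _ _ _ _).2 (by omega)
  simp only [QtetFun]
  rw [if_pos hd, show n - 0 = n by ring]

lemma Ptet_lam_edge (hf : OctTet n A B f) (k : ℤ) (h0 : 0 ≤ k) (h1 : k ≤ n) :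
    PtetFun n f (n-k) k 0 = A (n-k) k 0 - f n 0 n := by
  have hd : inDelta n (n-k) k 0 := (inDelta_iff _ _ _ _).2 (by omega)
  simp only [PtetFun]
  rw [if_pos hd, show n - 0 = n by ring, show n - (n-k) = k by ring]
  have := faceM hf.1 (x := n-k) (y := n) (t := k) ((inLT_iff _ _ _ _).2 (by omega))
    (by ring)
  rw [this, show n - (n-k) - k = 0 by ring]

lemma Ptet_mu_edge (hf : OctTet n A B f) (k : ℤ) (h0 : 0 ≤ k) (h1 : k ≤ n) :
    PtetFun n f k 0 (n-k) = B (n-k) k 0 - f n 0 n := by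
  have hd : inDelta n k 0 (n-k) := (inDelta_iff _ _ _ _).2 (by omega)
  simp only [PtetFun]
  rw [if_pos hd, show n - 0 = n by ring, show n - (n-k) = k by ring]
  have := faceN hf.2.1 (x := n) (y := k) (t := n-k) ((inLT_iff _ _ _ _).2 (by omega))
    (by ring)
  rw [this, show n - n = 0 by ring]

lemma Ptet_nu_edge (k : ℤ) (h0 : 0 ≤ k) (h1 : k ≤ n) :
    PtetFun n f 0 k (n-k) = f (n-k) k n - f n 0 n := by
  have hd : inDelta n 0 k (n-k) := (inDelta_iff _ _ _ _).2 (by omega)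
  simp only [PtetFun]
  rw [if_pos hd, show n - (n-k) = k by ring, show n - 0 = n by ring]

lemma f_n0n (hn : 0 ≤ n) (hf : OctTet n A B f) : f n 0 n = B n 0 0 := by
  have := faceN hf.2.1 (x := n) (y := 0) (t := n) ((inLT_iff _ _ _ _).2 (by omega))
    (by ring)
  rw [this, show n - n = 0 by ring]

lemma f_000 (hn : 0 ≤ n) (hf : OctTet n A B f) : f 0 0 0 = A 0 0 n := by
  have := faceM hf.1 (x := 0) (y := 0) (t := 0) ((inLT_iff _ _ _ _).2 (by omega))
    (by ring)
  rw [this, show n - 0 - 0 = n by ring]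

/- Edge concavity for functions satisfying the hive conditions. -/

lemma concave_z0 (hH1 : HiveCondI n H) (hH2 : HiveCondII n H) (k : ℤ)
    (h1 : 1 ≤ k) (h2 : k ≤ n - 1) :
    H (n-k-1) (k+1) 0 + H (n-k+1) (k-1) 0 ≤ 2 * H (n-k) k 0 := by
  have c1 := hH1 (n-k) (k-1) 1 ((inDelta_iff _ _ _ _).2 (by omega))
    ((inDelta_iff _ _ _ _).2 (by omega)) ((inDelta_iff _ _ _ _).2 (by omega))
    ((inDelta_iff _ _ _ _).2 (by omega))
  have c2 := hH2 (n-k-1) k 1 ((inDelta_iff _ _ _ _).2 (by omega))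
    ((inDelta_iff _ _ _ _).2 (by omega)) ((inDelta_iff _ _ _ _).2 (by omega))
    ((inDelta_iff _ _ _ _).2 (by omega))
  ring_nf at c1 c2 ⊢
  linarith [c1, c2]

lemma concave_y0 (hH1 : HiveCondI n H) (hH3 : HiveCondIII n H) (k : ℤ)
    (h1 : 1 ≤ k) (h2 : k ≤ n - 1) :
    H (k+1) 0 (n-k-1) + H (k-1) 0 (n-k+1) ≤ 2 * H k 0 (n-k) := by
  have c1 := hH1 k 0 (n-k) ((inDelta_iff _ _ _ _).2 (by omega))
    ((inDelta_iff _ _ _ _).2 (by omega)) ((inDelta_iff _ _ _ _).2 (by omega))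
    ((inDelta_iff _ _ _ _).2 (by omega))
  have c3 := hH3 (k-1) 1 (n-k) ((inDelta_iff _ _ _ _).2 (by omega))
    ((inDelta_iff _ _ _ _).2 (by omega)) ((inDelta_iff _ _ _ _).2 (by omega))
    ((inDelta_iff _ _ _ _).2 (by omega))
  ring_nf at c1 c3 ⊢
  linarith [c1, c3]

end Outputs
section Forward

variable {n : ℤ} {lam mu nu rho del : ℤ → ℤ} {M N f : ℤ → ℤ → ℤ → ℤ}

lemma hive_goodIn (hM : IsHive n M) (hN : IsHive n N) : GoodIn n M N :=
  ⟨hM.1, hM.2.1, hM.2.2.1, hN.1, hN.2.1, hN.2.2.1⟩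

lemma edge_match (hM : M ∈ HiveSet n lam del rho) (hN : N ∈ HiveSet n mu nu del) :
    ∀ k : ℤ, 0 ≤ k → k ≤ n → M k 0 (n-k) = N 0 k (n-k) := by
  have base : M 0 0 (n-0) = N 0 0 (n-0) := by
    rw [show n - 0 = n by ring, hM.1.2.2.2.1, hN.1.2.2.2.1]
  have step : ∀ k : ℤ, 0 ≤ k → (k ≤ n → M k 0 (n-k) = N 0 k (n-k)) →
      ((k+1) ≤ n → M (k+1) 0 (n-(k+1)) = N 0 (k+1) (n-(k+1))) := by
    intro k hk ih hkn
    have eM := (hM.2 (k+1) (by omega) (by omega)).2.1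
    have eN := (hN.2 (k+1) (by omega) (by omega)).2.2
    have ih' := ih (by omega)
    rw [show k+1-1 = k by ring, show n-(k+1)+1 = n-k by ring] at eM eN
    omega
  exact fun k hk => Int.le_induction (motive := fun k _ => k ≤ n → M k 0 (n-k) = N 0 k (n-k))
    (fun _ => base) step k hk

theorem forward_main (hn : 1 ≤ n)
    (hM : M ∈ HiveSet n lam del rho) (hN : N ∈ HiveSet n mu nu del)
    (hf : OctTet n M N f) :
    ∃ gam : ℤ → ℤ, WeaklyDecr n gam ∧
      PtetFun n f ∈ HiveSet n lam mu gam ∧ QtetFun n f ∈ HiveSet n gam nu rho := by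
  have hAB : GoodIn n M N := hive_goodIn hM.1 hN.1
  refine ⟨fun k => f (n-k) k n - f (n-k+1) (k-1) n, ?_, ⟨?_, ?_⟩, ⟨?_, ?_⟩⟩
  · -- weakly decreasing
    intro k h1 h2
    have hc := concave_z0 (Qtet_condI hAB hf) (Qtet_condII hAB hf) k (by omega) (by omega)
    have e1 := Qtet_lam_edge (n := n) (f := f) (k+1) (by omega) (by omega)
    have e2 := Qtet_lam_edge (n := n) (f := f) k (by omega) (by omega)
    have e3 := Qtet_lam_edge (n := n) (f := f) (k-1) (by omega) (by omega)
    ring_nf at hc e1 e2 e3 ⊢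
    omega
  · -- P is a hive
    refine ⟨Ptet_condI hAB hf, Ptet_condII hAB hf, Ptet_condIII hAB hf, ?_, ?_⟩
    · simp only [PtetFun]
      rw [if_pos ((inDelta_iff n 0 0 n).2 (by omega))]
      ring_nf
    · intro x y z hd
      simp only [PtetFun]
      rw [if_neg hd]
  · -- P edges
    intro k h1 h2
    have eL1 := Ptet_lam_edge hf k (by omega) (by omega)
    have eL2 := Ptet_lam_edge hf (k-1) (by omega) (by omega)
    have eM1 := Ptet_mu_edge hf k (by omega) (by omega)
    have eM2 := Ptet_mu_edge hf (k-1) (by omega) (by omega)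
    have eN1 := Ptet_nu_edge (n := n) (f := f) k (by omega) (by omega)
    have eN2 := Ptet_nu_edge (n := n) (f := f) (k-1) (by omega) (by omega)
    have hMe := (hM.2 k (by omega) (by omega)).1
    have hNe := (hN.2 k (by omega) (by omega)).1
    ring_nf at eL1 eL2 eM1 eM2 eN1 eN2 hMe hNe ⊢
    refine ⟨by omega, by omega, by omega⟩
  · -- Q is a hive
    refine ⟨Qtet_condI hAB hf, Qtet_condII hAB hf, Qtet_condIII hAB hf, ?_, ?_⟩
    · simp only [QtetFun]
      rw [if_pos ((inDelta_iff n 0 0 n).2 (by omega)), show n - n = 0 by ring]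
      rw [f_000 (by omega) hf]
      exact hM.1.2.2.2.1
    · intro x y z hd
      simp only [QtetFun]
      rw [if_neg hd]
  · -- Q edges
    intro k h1 h2
    have eL1 := Qtet_lam_edge (n := n) (f := f) k (by omega) (by omega)
    have eL2 := Qtet_lam_edge (n := n) (f := f) (k-1) (by omega) (by omega)
    have eM1 := Qtet_mu_edge hf k (by omega) (by omega)
    have eM2 := Qtet_mu_edge hf (k-1) (by omega) (by omega)
    have eN1 := Qtet_nu_edge hf k (by omega) (by omega)
    have eN2 := Qtet_nu_edge hf (k-1) (by omega) (by omega)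
    have hMe := (hM.2 k (by omega) (by omega)).2.2
    have hNe := (hN.2 k (by omega) (by omega)).2.1
    ring_nf at eL1 eL2 eM1 eM2 eN1 eN2 hMe hNe ⊢
    refine ⟨by omega, by omega, by omega⟩

end Forward
section Reversal

variable {n : ℤ} {A B f P Q : ℤ → ℤ → ℤ → ℤ} {c : ℤ}

/-- The time reversal `g(x,y,t) = f(n-x,y,n-t) - c` satisfies the recurrence clause. -/
lemma sigma_rec (hf3 : ∀ x y t : ℤ, inLT n x y (t+1) → |x - y| < t + 1 →
      f x y (t+1) = max (f (x+1) y t + f (x-1) y t) (f x (y+1) t + f x (y-1) t)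
        - f x y (t-1)) :
    ∀ x y t : ℤ, inLT n x y (t+1) → |x - y| < t + 1 →
      (f (n-x) y (n-(t+1)) - c) =
        max ((f (n-(x+1)) y (n-t) - c) + (f (n-(x-1)) y (n-t) - c))
            ((f (n-x) (y+1) (n-t) - c) + (f (n-x) (y-1) (n-t) - c))
          - (f (n-x) y (n-(t-1)) - c) := by
  intro x y t h habs
  have harith := (inLT_iff _ _ _ _).1 h
  have habs' : x - y ≤ t - 1 ∧ y - x ≤ t - 1 := by
    rcases abs_cases (x - y) with ⟨h1, h1'⟩ | ⟨h1, h1'⟩ <;> omega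
  have key := hf3 (n-x) y (n-t) ((inLT_iff _ _ _ _).2 (by omega))
    (by rw [abs_lt]; omega)
  rw [show (n-t)+1 = n-(t-1) by ring, show (n-t)-1 = n-(t+1) by ring,
    show (n-x)+1 = n-(x-1) by ring, show (n-x)-1 = n-(x+1) by ring] at key
  rw [show (f (n-(x+1)) y (n-t) - c) + (f (n-(x-1)) y (n-t) - c)
      = (f (n-(x-1)) y (n-t) + f (n-(x+1)) y (n-t)) - (2*c) by ring,
    show (f (n-x) (y+1) (n-t) - c) + (f (n-x) (y-1) (n-t) - c)
      = (f (n-x) (y+1) (n-t) + f (n-x) (y-1) (n-t)) - (2*c) by ring,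
    max_sub_sub_right]
  linarith [key]

/- Permutation lemmas for the hive conditions. -/

lemma condI_swap12 (h2 : HiveCondII n P) :
    HiveCondI n (fun x y z => P y x z) := by
  intro x y z d1 d2 d3 d4
  have b1 := (inDelta_iff _ _ _ _).1 d1
  have b2 := (inDelta_iff _ _ _ _).1 d2
  have b3 := (inDelta_iff _ _ _ _).1 d3
  have b4 := (inDelta_iff _ _ _ _).1 d4
  exact h2 y x z ((inDelta_iff _ _ _ _).2 (by omega)) ((inDelta_iff _ _ _ _).2 (by omega))
    ((inDelta_iff _ _ _ _).2 (by omega)) ((inDelta_iff _ _ _ _).2 (by omega))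

lemma condII_swap12 (h1 : HiveCondI n P) :
    HiveCondII n (fun x y z => P y x z) := by
  intro x y z d1 d2 d3 d4
  have b1 := (inDelta_iff _ _ _ _).1 d1
  have b2 := (inDelta_iff _ _ _ _).1 d2
  have b3 := (inDelta_iff _ _ _ _).1 d3
  have b4 := (inDelta_iff _ _ _ _).1 d4
  exact h1 y x z ((inDelta_iff _ _ _ _).2 (by omega)) ((inDelta_iff _ _ _ _).2 (by omega))
    ((inDelta_iff _ _ _ _).2 (by omega)) ((inDelta_iff _ _ _ _).2 (by omega))

lemma condIII_swap12 (h3 : HiveCondIII n P) :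
    HiveCondIII n (fun x y z => P y x z) := by
  intro x y z d1 d2 d3 d4
  have b1 := (inDelta_iff _ _ _ _).1 d1
  have b2 := (inDelta_iff _ _ _ _).1 d2
  have b3 := (inDelta_iff _ _ _ _).1 d3
  have b4 := (inDelta_iff _ _ _ _).1 d4
  have := h3 (y-1) (x+1) z ((inDelta_iff _ _ _ _).2 (by omega))
    ((inDelta_iff _ _ _ _).2 (by omega)) ((inDelta_iff _ _ _ _).2 (by omega))
    ((inDelta_iff _ _ _ _).2 (by omega))
  simp only []
  rw [show (y-1)+1 = y by ring, show (x+1)-1 = x by ring] at this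
  linarith [this]

lemma condI_swap13 (h3 : HiveCondIII n Q) :
    HiveCondI n (fun x y z => Q z y x - c) := by
  intro x y z d1 d2 d3 d4
  have b1 := (inDelta_iff _ _ _ _).1 d1
  have b2 := (inDelta_iff _ _ _ _).1 d2
  have b3 := (inDelta_iff _ _ _ _).1 d3
  have b4 := (inDelta_iff _ _ _ _).1 d4
  have := h3 (z-1) (y+1) x ((inDelta_iff _ _ _ _).2 (by omega))
    ((inDelta_iff _ _ _ _).2 (by omega)) ((inDelta_iff _ _ _ _).2 (by omega))
    ((inDelta_iff _ _ _ _).2 (by omega))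
  simp only []
  rw [show (z-1)+1 = z by ring, show (y+1)-1 = y by ring] at this
  linarith [this]

lemma condII_swap13 (h2 : HiveCondII n Q) :
    HiveCondII n (fun x y z => Q z y x - c) := by
  intro x y z d1 d2 d3 d4
  have b1 := (inDelta_iff _ _ _ _).1 d1
  have b2 := (inDelta_iff _ _ _ _).1 d2
  have b3 := (inDelta_iff _ _ _ _).1 d3
  have b4 := (inDelta_iff _ _ _ _).1 d4
  have := h2 (z-1) y (x+1) ((inDelta_iff _ _ _ _).2 (by omega))
    ((inDelta_iff _ _ _ _).2 (by omega)) ((inDelta_iff _ _ _ _).2 (by omega))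
    ((inDelta_iff _ _ _ _).2 (by omega))
  simp only []
  rw [show (z-1)+1 = z by ring, show (x+1)-1 = x by ring] at this
  linarith [this]

lemma condIII_swap13 (h1 : HiveCondI n Q) :
    HiveCondIII n (fun x y z => Q z y x - c) := by
  intro x y z d1 d2 d3 d4
  have b1 := (inDelta_iff _ _ _ _).1 d1
  have b2 := (inDelta_iff _ _ _ _).1 d2
  have b3 := (inDelta_iff _ _ _ _).1 d3
  have b4 := (inDelta_iff _ _ _ _).1 d4
  have := h1 z (y-1) (x+1) ((inDelta_iff _ _ _ _).2 (by omega))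
    ((inDelta_iff _ _ _ _).2 (by omega)) ((inDelta_iff _ _ _ _).2 (by omega))
    ((inDelta_iff _ _ _ _).2 (by omega))
  simp only []
  rw [show (y-1)+1 = y by ring, show (x+1)-1 = x by ring] at this
  linarith [this]

end Reversal
section Maps

variable {n : ℤ} {lam mu nu rho del gam : ℤ → ℤ} {M N f P Q : ℤ → ℤ → ℤ → ℤ}

/-- The forward map. -/
noncomputable def Fmap (n : ℤ) (MN : (ℤ → ℤ → ℤ → ℤ) × (ℤ → ℤ → ℤ → ℤ)) :
    (ℤ → ℤ → ℤ → ℤ) × (ℤ → ℤ → ℤ → ℤ) :=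
  (PtetFun n (canonf n MN.1 MN.2), QtetFun n (canonf n MN.1 MN.2))

/-- The inverse map. -/
noncomputable def Gmap (n : ℤ) (PQ : (ℤ → ℤ → ℤ → ℤ) × (ℤ → ℤ → ℤ → ℤ)) :
    (ℤ → ℤ → ℤ → ℤ) × (ℤ → ℤ → ℤ → ℤ) :=
  ((fun x y z => if inDelta n x y z then
      canonf n (fun x y z => PQ.1 y x z) (fun x y z => PQ.2 z y x - PQ.2 n 0 0)
        (n-x) (n-z) (n-y)
      - canonf n (fun x y z => PQ.1 y x z) (fun x y z => PQ.2 z y x - PQ.2 n 0 0) n 0 n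
      else 0),
   (fun x y z => if inDelta n x y z then
      canonf n (fun x y z => PQ.1 y x z) (fun x y z => PQ.2 z y x - PQ.2 n 0 0)
        z y (n-x)
      + PQ.2 n 0 0 else 0))

lemma canon_solves (hn : 1 ≤ n) (hM : M ∈ HiveSet n lam del rho)
    (hN : N ∈ HiveSet n mu nu del) : OctTet n M N (canonf n M N) :=
  canonf_octTet (by omega) (edge_match hM hN)

lemma Fmap_compat (hn : 1 ≤ n) (hM : M ∈ HiveSet n lam del rho)
    (hN : N ∈ HiveSet n mu nu del) (hf : OctTet n M N f) :
    Fmap n (M, N) = (PtetFun n f, QtetFun n f) := by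
  have hg := canon_solves hn hM hN
  have hu : ∀ x y t : ℤ, inLT n x y t → canonf n M N x y t = f x y t :=
    fun x y t h => oct_unique' hg hf h
  unfold Fmap
  refine Prod.ext ?_ ?_ <;> simp only
  · funext x y z
    simp only [PtetFun]
    by_cases hd : inDelta n x y z
    · have b := (inDelta_iff _ _ _ _).1 hd
      rw [if_pos hd, if_pos hd, hu (n-y) (n-z) (n-x) ((inLT_iff _ _ _ _).2 (by omega)),
        hu n 0 n ((inLT_iff _ _ _ _).2 (by omega))]
    · rw [if_neg hd, if_neg hd]
  · funext x y z
    simp only [QtetFun]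
    by_cases hd : inDelta n x y z
    · have b := (inDelta_iff _ _ _ _).1 hd
      rw [if_pos hd, if_pos hd, hu x y (n-z) ((inLT_iff _ _ _ _).2 (by omega))]
    · rw [if_neg hd, if_neg hd]

/-- Time reversal of a solution solves the reversed problem. -/
lemma rev_octTet (hn : 1 ≤ n) (hf : OctTet n M N f) :
    OctTet n (fun x y z => PtetFun n f y x z)
      (fun x y z => QtetFun n f z y x - QtetFun n f n 0 0)
      (fun x y t => f (n-x) y (n-t) - f n 0 n) := by
  have hdn : inDelta n n 0 0 := (inDelta_iff _ _ _ _).2 (by omega)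
  have hQn : QtetFun n f n 0 0 = f n 0 n := by
    simp only [QtetFun]
    rw [if_pos hdn, show n - 0 = n by ring]
  refine ⟨?_, ?_, ?_⟩
  · intro x y z hd
    have b := (inDelta_iff _ _ _ _).1 hd
    simp only [PtetFun]
    rw [if_pos ((inDelta_iff n y x z).2 (by omega))]
  · intro x y z hd
    have b := (inDelta_iff _ _ _ _).1 hd
    simp only [QtetFun]
    rw [if_pos ((inDelta_iff n z y x).2 (by omega)), if_pos hdn,
      show n - (0:ℤ) = n by ring, show n - (n-z) = z by ring]
  · exact sigma_rec hf.2.2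

/-- Round trip: `G (F (M,N)) = (M,N)`. -/
lemma GF_id (hn : 1 ≤ n) (hM : M ∈ HiveSet n lam del rho)
    (hN : N ∈ HiveSet n mu nu del) : Gmap n (Fmap n (M, N)) = (M, N) := by
  have hf := canon_solves hn hM hN
  set f := canonf n M N with hfdef
  have hrev := rev_octTet hn hf
  have hQn : QtetFun n f n 0 0 = f n 0 n := by
    simp only [QtetFun]
    rw [if_pos ((inDelta_iff n n 0 0).2 (by omega)), show n - 0 = n by ring]
  -- the canonical solution of the reversed problem
  have hmatch' : ∀ k : ℤ, 0 ≤ k → k ≤ n →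
      (fun x y z => PtetFun n f y x z) k 0 (n-k)
        = (fun x y z => QtetFun n f z y x - QtetFun n f n 0 0) 0 k (n-k) := by
    intro k h0 h1
    simp only
    rw [Ptet_nu_edge (n := n) (f := f) k h0 h1, hQn]
    rw [Qtet_lam_edge (n := n) (f := f) k h0 h1]
  have hg0 := canonf_octTet (A := fun x y z => PtetFun n f y x z)
    (B := fun x y z => QtetFun n f z y x - QtetFun n f n 0 0) (by omega) hmatch'
  have hu : ∀ x y t : ℤ, inLT n x y t →
      canonf n (fun x y z => PtetFun n f y x z)
        (fun x y z => QtetFun n f z y x - QtetFun n f n 0 0) x y t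
      = f (n-x) y (n-t) - f n 0 n :=
    fun x y t h => oct_unique' hg0 hrev h
  have hgn : canonf n (fun x y z => PtetFun n f y x z)
      (fun x y z => QtetFun n f z y x - QtetFun n f n 0 0) n 0 n
      = - f n 0 n := by
    rw [hu n 0 n ((inLT_iff _ _ _ _).2 (by omega)), show n - n = 0 by ring]
    have h000 : f 0 0 0 = M 0 0 n := f_000 (by omega) hf
    rw [h000, hM.1.2.2.2.1]
    ring
  unfold Fmap Gmap
  simp only
  refine Prod.ext ?_ ?_ <;> simp only
  · funext x y z
    by_cases hd : inDelta n x y z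
    · have b := (inDelta_iff _ _ _ _).1 hd
      rw [if_pos hd, hu (n-x) (n-z) (n-y) ((inLT_iff _ _ _ _).2 (by omega)), hgn]
      rw [show n-(n-x) = x by ring, show n-(n-y) = y by ring]
      rw [hf.1 x y z hd]
      ring
    · rw [if_neg hd, (hM.1.2.2.2.2 x y z hd)]
  · funext x y z
    by_cases hd : inDelta n x y z
    · have b := (inDelta_iff _ _ _ _).1 hd
      rw [if_pos hd, hu z y (n-x) ((inLT_iff _ _ _ _).2 (by omega)), hQn,
        show n-(n-x) = x by ring, hf.2.1 x y z hd]
      ring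
    · rw [if_neg hd, (hN.1.2.2.2.2 x y z hd)]

end Maps
section Congr

variable {n : ℤ} {F G M M' N N' f : ℤ → ℤ → ℤ → ℤ}

lemma condI_congr (h : ∀ x y z : ℤ, inDelta n x y z → F x y z = G x y z)
    (hG : HiveCondI n G) : HiveCondI n F := by
  intro x y z d1 d2 d3 d4
  rw [h _ _ _ d1, h _ _ _ d2, h _ _ _ d3, h _ _ _ d4]
  exact hG x y z d1 d2 d3 d4

lemma condII_congr (h : ∀ x y z : ℤ, inDelta n x y z → F x y z = G x y z)
    (hG : HiveCondII n G) : HiveCondII n F := by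
  intro x y z d1 d2 d3 d4
  rw [h _ _ _ d1, h _ _ _ d2, h _ _ _ d3, h _ _ _ d4]
  exact hG x y z d1 d2 d3 d4

lemma condIII_congr (h : ∀ x y z : ℤ, inDelta n x y z → F x y z = G x y z)
    (hG : HiveCondIII n G) : HiveCondIII n F := by
  intro x y z d1 d2 d3 d4
  rw [h _ _ _ d1, h _ _ _ d2, h _ _ _ d3, h _ _ _ d4]
  exact hG x y z d1 d2 d3 d4

lemma octTet_congr (hM : ∀ x y z : ℤ, inDelta n x y z → M x y z = M' x y z)
    (hN : ∀ x y z : ℤ, inDelta n x y z → N x y z = N' x y z)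
    (hf : OctTet n M N f) : OctTet n M' N' f :=
  ⟨fun x y z hd => by rw [hf.1 x y z hd, hM x y z hd],
   fun x y z hd => by rw [hf.2.1 x y z hd, hN x y z hd],
   hf.2.2⟩

end Congr
section GmapGood

variable {n : ℤ} {lam mu nu rho gam : ℤ → ℤ} {P Q : ℤ → ℤ → ℤ → ℤ}

theorem Gmap_good (hn : 1 ≤ n)
    (hP : P ∈ HiveSet n lam mu gam) (hQ : Q ∈ HiveSet n gam nu rho) :
    (∃ del : ℤ → ℤ, WeaklyDecr n del ∧
      (Gmap n (P, Q)).1 ∈ HiveSet n lam del rho ∧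
      (Gmap n (P, Q)).2 ∈ HiveSet n mu nu del) ∧
    Fmap n (Gmap n (P, Q)) = (P, Q) := by
  set g := canonf n (fun x y z => P y x z) (fun x y z => Q z y x - Q n 0 0) with hgdef
  set M₀ := (fun x y z => if inDelta n x y z then g (n-x) (n-z) (n-y) - g n 0 n else 0)
    with hM₀def
  set N₀ := (fun x y z => if inDelta n x y z then g z y (n-x) + Q n 0 0 else 0)
    with hN₀def
  have hGm : Gmap n (P, Q) = (M₀, N₀) := rfl
  have hAB : GoodIn n (fun x y z => P y x z) (fun x y z => Q z y x - Q n 0 0) :=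
    ⟨condI_swap12 hP.1.2.1, condII_swap12 hP.1.1, condIII_swap12 hP.1.2.2.1,
     condI_swap13 hQ.1.2.2.1, condII_swap13 hQ.1.2.1, condIII_swap13 hQ.1.1⟩
  have hmatch2 : ∀ k : ℤ, 0 ≤ k → k ≤ n →
      (fun x y z => P y x z) k 0 (n-k) = (fun x y z => Q z y x - Q n 0 0) 0 k (n-k) := by
    simp only
    have base : 0 ≤ n → P 0 0 (n-0) = Q (n-0) 0 0 - Q n 0 0 := by
      intro _
      rw [show n-(0:ℤ) = n by ring, hP.1.2.2.2.1]
      ring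
    have step : ∀ k : ℤ, 0 ≤ k → (k ≤ n → P 0 k (n-k) = Q (n-k) k 0 - Q n 0 0) →
        (k+1 ≤ n → P 0 (k+1) (n-(k+1)) = Q (n-(k+1)) (k+1) 0 - Q n 0 0) := by
      intro k hk ih hkn
      have eP := (hP.2 (k+1) (by omega) (by omega)).2.2
      have eQ := (hQ.2 (k+1) (by omega) (by omega)).1
      have ih' := ih (by omega)
      rw [show k+1-1 = k by ring, show n-(k+1)+1 = n-k by ring] at eP eQ
      omega
    exact fun k hk => Int.le_induction
      (motive := fun k _ => k ≤ n → P 0 k (n-k) = Q (n-k) k 0 - Q n 0 0) base step k hk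
  have hg : OctTet n (fun x y z => P y x z) (fun x y z => Q z y x - Q n 0 0) g :=
    canonf_octTet (by omega) hmatch2
  have gn : g n 0 n = - Q n 0 0 := by
    have h := faceN hg.2.1 (x := n) (y := 0) (t := n)
      ((inLT_iff _ _ _ _).2 (by omega)) (by ring)
    rw [h, show n - n = (0:ℤ) by ring, hQ.1.2.2.2.1]
    ring
  -- face values of g
  have e1 : ∀ k : ℤ, 0 ≤ k → k ≤ n → g k n (n-k) = P (n-k) k 0 := by
    intro k h0 h1
    have h := faceM hg.1 (x := k) (y := n) (t := n-k)
      ((inLT_iff _ _ _ _).2 (by omega)) (by ring)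
    rw [h, show n - k - (n-k) = (0:ℤ) by ring]
  have e2 : ∀ k : ℤ, 0 ≤ k → k ≤ n → g n k (n-k) = Q 0 k (n-k) - Q n 0 0 := by
    intro k h0 h1
    have h := faceN hg.2.1 (x := n) (y := k) (t := n-k)
      ((inLT_iff _ _ _ _).2 (by omega)) (by ring)
    rw [h, show n - n = (0:ℤ) by ring]
  have e3 : ∀ k : ℤ, 0 ≤ k → k ≤ n → g 0 k k = P k 0 (n-k) := by
    intro k h0 h1
    have h := faceM hg.1 (x := 0) (y := k) (t := k)
      ((inLT_iff _ _ _ _).2 (by omega)) (by ring)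
    rw [h, show n - 0 - k = n - k by ring]
  have e4 : ∀ k : ℤ, 0 ≤ k → k ≤ n → g (n-k) 0 (n-k) = Q k 0 (n-k) - Q n 0 0 := by
    intro k h0 h1
    have h := faceN hg.2.1 (x := n-k) (y := 0) (t := n-k)
      ((inLT_iff _ _ _ _).2 (by omega)) (by ring)
    rw [h, show n - (n-k) = k by ring]
  -- agreement lemmas
  have agM : ∀ x y z : ℤ, inDelta n x y z → M₀ x y z = PtetFun n g y x z := by
    intro x y z hd
    have b := (inDelta_iff _ _ _ _).1 hd
    simp only [hM₀def, PtetFun]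
    rw [if_pos hd, if_pos ((inDelta_iff n y x z).2 (by omega))]
  have agN : ∀ x y z : ℤ, inDelta n x y z →
      N₀ x y z = QtetFun n g z y x - (- Q n 0 0) := by
    intro x y z hd
    have b := (inDelta_iff _ _ _ _).1 hd
    simp only [hN₀def, QtetFun]
    rw [if_pos hd, if_pos ((inDelta_iff n z y x).2 (by omega))]
    ring
  -- hive conditions for the outputs
  have cM1 : HiveCondI n M₀ :=
    condI_congr (G := fun x y z => PtetFun n g y x z) agM
      (condI_swap12 (Ptet_condII hAB hg))
  have cM2 : HiveCondII n M₀ :=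
    condII_congr (G := fun x y z => PtetFun n g y x z) agM
      (condII_swap12 (Ptet_condI hAB hg))
  have cM3 : HiveCondIII n M₀ :=
    condIII_congr (G := fun x y z => PtetFun n g y x z) agM
      (condIII_swap12 (Ptet_condIII hAB hg))
  have cN1 : HiveCondI n N₀ :=
    condI_congr (G := fun x y z => QtetFun n g z y x - (- Q n 0 0)) agN
      (condI_swap13 (Qtet_condIII hAB hg))
  have cN2 : HiveCondII n N₀ :=
    condII_congr (G := fun x y z => QtetFun n g z y x - (- Q n 0 0)) agN
      (condII_swap13 (Qtet_condII hAB hg))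
  have cN3 : HiveCondIII n N₀ :=
    condIII_congr (G := fun x y z => QtetFun n g z y x - (- Q n 0 0)) agN
      (condIII_swap13 (Qtet_condI hAB hg))
  -- values of M₀ and N₀ on the edges
  have eMlam : ∀ k : ℤ, 0 ≤ k → k ≤ n → M₀ (n-k) k 0 = P (n-k) k 0 - g n 0 n := by
    intro k h0 h1
    simp only [hM₀def]
    rw [if_pos ((inDelta_iff _ _ _ _).2 (by omega)), show n-(n-k) = k by ring,
      show n-(0:ℤ) = n by ring, e1 k h0 h1]
  have eMmu : ∀ k : ℤ, 0 ≤ k → k ≤ n → M₀ k 0 (n-k) = g (n-k) k n - g n 0 n := by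
    intro k h0 h1
    simp only [hM₀def]
    rw [if_pos ((inDelta_iff _ _ _ _).2 (by omega)), show n-(n-k) = k by ring,
      show n-(0:ℤ) = n by ring]
  have eMnu : ∀ k : ℤ, 0 ≤ k → k ≤ n → M₀ 0 k (n-k) = Q 0 k (n-k) - Q n 0 0 - g n 0 n := by
    intro k h0 h1
    simp only [hM₀def]
    rw [if_pos ((inDelta_iff _ _ _ _).2 (by omega)), show n-(n-k) = k by ring,
      show n-(0:ℤ) = n by ring, e2 k h0 h1]
  have eNlam : ∀ k : ℤ, 0 ≤ k → k ≤ n → N₀ (n-k) k 0 = P k 0 (n-k) + Q n 0 0 := by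
    intro k h0 h1
    simp only [hN₀def]
    rw [if_pos ((inDelta_iff _ _ _ _).2 (by omega)), show n-(n-k) = k by ring,
      e3 k h0 h1]
  have eNmu : ∀ k : ℤ, 0 ≤ k → k ≤ n → N₀ k 0 (n-k) = Q k 0 (n-k) := by
    intro k h0 h1
    simp only [hN₀def]
    rw [if_pos ((inDelta_iff _ _ _ _).2 (by omega)), e4 k h0 h1]
    ring
  have eNnu : ∀ k : ℤ, 0 ≤ k → k ≤ n → N₀ 0 k (n-k) = g (n-k) k n + Q n 0 0 := by
    intro k h0 h1
    simp only [hN₀def]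
    rw [if_pos ((inDelta_iff _ _ _ _).2 (by omega)), show n-(0:ℤ) = n by ring]
  refine ⟨⟨fun k => g (n-k) k n - g (n-k+1) (k-1) n, ?_, ?_, ?_⟩, ?_⟩
  · -- del is weakly decreasing
    intro k h1 h2
    have hc := concave_y0 cM1 cM3 k (by omega) (by omega)
    have d1 := eMmu (k+1) (by omega) (by omega)
    have d2 := eMmu k (by omega) (by omega)
    have d3 := eMmu (k-1) (by omega) (by omega)
    ring_nf at hc d1 d2 d3 ⊢
    omega
  · -- M₀ ∈ HiveSet n lam del rho
    rw [hGm]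
    refine ⟨⟨cM1, cM2, cM3, ?_, ?_⟩, ?_⟩
    · simp only [hM₀def]
      rw [if_pos ((inDelta_iff _ _ _ _).2 (by omega)), show n-(0:ℤ) = n by ring,
        show n-n = (0:ℤ) by ring]
      ring
    · intro x y z hd
      simp only [hM₀def]
      rw [if_neg hd]
    · intro k hk1 hk2
      have l1 := eMlam k (by omega) (by omega)
      have l2 := eMlam (k-1) (by omega) (by omega)
      have m1 := eMmu k (by omega) (by omega)
      have m2 := eMmu (k-1) (by omega) (by omega)
      have n1 := eMnu k (by omega) (by omega)
      have n2 := eMnu (k-1) (by omega) (by omega)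
      have hPe := (hP.2 k (by omega) (by omega)).1
      have hQe := (hQ.2 k (by omega) (by omega)).2.2
      ring_nf at l1 l2 m1 m2 n1 n2 hPe hQe ⊢
      refine ⟨by omega, by omega, by omega⟩
  · -- N₀ ∈ HiveSet n mu nu del
    rw [hGm]
    refine ⟨⟨cN1, cN2, cN3, ?_, ?_⟩, ?_⟩
    · simp only [hN₀def]
      rw [if_pos ((inDelta_iff _ _ _ _).2 (by omega)), show n-(0:ℤ) = n by ring]
      rw [show g n 0 n = - Q n 0 0 from gn]
      ring
    · intro x y z hd
      simp only [hN₀def]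
      rw [if_neg hd]
    · intro k hk1 hk2
      have l1 := eNlam k (by omega) (by omega)
      have l2 := eNlam (k-1) (by omega) (by omega)
      have m1 := eNmu k (by omega) (by omega)
      have m2 := eNmu (k-1) (by omega) (by omega)
      have n1 := eNnu k (by omega) (by omega)
      have n2 := eNnu (k-1) (by omega) (by omega)
      have hPe := (hP.2 k (by omega) (by omega)).2.1
      have hQe := (hQ.2 k (by omega) (by omega)).2.1
      ring_nf at l1 l2 m1 m2 n1 n2 hPe hQe ⊢
      refine ⟨by omega, by omega, by omega⟩
  · -- F ∘ G = id
    rw [hGm]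
    have hrev := rev_octTet hn hg
    have hQgn : QtetFun n g n 0 0 = g n 0 n := by
      simp only [QtetFun]
      rw [if_pos ((inDelta_iff _ _ _ _).2 (by omega)), show n-(0:ℤ) = n by ring]
    have hrev' : OctTet n M₀ N₀ (fun x y t => g (n-x) y (n-t) - g n 0 n) := by
      refine octTet_congr (fun x y z hd => (agM x y z hd).symm)
        (fun x y z hd => ?_) hrev
      rw [agN x y z hd, hQgn, gn]
    have hmatch3 : ∀ k : ℤ, 0 ≤ k → k ≤ n → M₀ k 0 (n-k) = N₀ 0 k (n-k) := by
      intro k h0 h1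
      rw [eMmu k h0 h1, eNnu k h0 h1, gn]
      ring
    have hf' : OctTet n M₀ N₀ (canonf n M₀ N₀) := canonf_octTet (by omega) hmatch3
    have hu : ∀ x y t : ℤ, inLT n x y t →
        canonf n M₀ N₀ x y t = g (n-x) y (n-t) - g n 0 n :=
      fun x y t h => oct_unique' hf' hrev' h
    have g000 : g 0 0 0 = 0 := by
      have h := faceM hg.1 (x := 0) (y := 0) (t := 0)
        ((inLT_iff _ _ _ _).2 (by omega)) (by ring)
      rw [h, show n - 0 - 0 = n by ring, hP.1.2.2.2.1]
    have hc1 : canonf n M₀ N₀ n 0 n = - g n 0 n := by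
      rw [hu n 0 n ((inLT_iff _ _ _ _).2 (by omega)), show n-n = (0:ℤ) by ring, g000]
      ring
    unfold Fmap
    refine Prod.ext ?_ ?_ <;> simp only
    · funext x y z
      simp only [PtetFun]
      by_cases hd : inDelta n x y z
      · have b := (inDelta_iff _ _ _ _).1 hd
        rw [if_pos hd, hu (n-y) (n-z) (n-x) ((inLT_iff _ _ _ _).2 (by omega)), hc1,
          show n-(n-y) = y by ring, show n-(n-x) = x by ring]
        have h := faceM hg.1 (x := y) (y := n-z) (t := x)
          ((inLT_iff _ _ _ _).2 (by omega)) (by omega)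
        rw [h, show n-y-x = z by omega]
        ring
      · rw [if_neg hd, (hP.1.2.2.2.2 x y z hd)]
    · funext x y z
      simp only [QtetFun]
      by_cases hd : inDelta n x y z
      · have b := (inDelta_iff _ _ _ _).1 hd
        rw [if_pos hd, hu x y (n-z) ((inLT_iff _ _ _ _).2 (by omega)),
          show n-(n-z) = z by ring]
        have h := faceN hg.2.1 (x := n-x) (y := y) (t := z)
          ((inLT_iff _ _ _ _).2 (by omega)) (by omega)
        rw [h, show n-(n-x) = x by ring, gn]
        ring
      · rw [if_neg hd, (hQ.1.2.2.2.2 x y z hd)]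

end GmapGood
/-- the octahedron recurrence on the tetrahedron produces hives, and
induces a bijection `⋃_δ HIVE_{λδ}^ρ × HIVE_{μν}^δ ≃ ⋃_γ HIVE_{λμ}^γ × HIVE_{γν}^ρ`
(these unions are disjoint since `δ`, resp. `γ`, is determined by the hives). -/
theorem stmt1 (n : ℤ) (hn : 1 ≤ n) (lam mu nu rho : ℤ → ℤ)
    (hlam : WeaklyDecr n lam) (hmu : WeaklyDecr n mu) (hnu : WeaklyDecr n nu)
    (hrho : WeaklyDecr n rho) :
    (∀ (del : ℤ → ℤ) (M N : ℤ → ℤ → ℤ → ℤ), WeaklyDecr n del →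
      M ∈ HiveSet n lam del rho → N ∈ HiveSet n mu nu del →
      (∃ f, OctTet n M N f) ∧
      ∀ f : ℤ → ℤ → ℤ → ℤ, OctTet n M N f →
        ∃ gam : ℤ → ℤ, WeaklyDecr n gam ∧
          PtetFun n f ∈ HiveSet n lam mu gam ∧ QtetFun n f ∈ HiveSet n gam nu rho) ∧
    (∃ F : (ℤ → ℤ → ℤ → ℤ) × (ℤ → ℤ → ℤ → ℤ) → (ℤ → ℤ → ℤ → ℤ) × (ℤ → ℤ → ℤ → ℤ),
      Set.BijOn F
        {p | ∃ del : ℤ → ℤ, WeaklyDecr n del ∧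
              p.1 ∈ HiveSet n lam del rho ∧ p.2 ∈ HiveSet n mu nu del}
        {p | ∃ gam : ℤ → ℤ, WeaklyDecr n gam ∧
              p.1 ∈ HiveSet n lam mu gam ∧ p.2 ∈ HiveSet n gam nu rho} ∧
      ∀ M N f : ℤ → ℤ → ℤ → ℤ,
        (∃ del : ℤ → ℤ, WeaklyDecr n del ∧
            M ∈ HiveSet n lam del rho ∧ N ∈ HiveSet n mu nu del) →
        OctTet n M N f → F (M, N) = (PtetFun n f, QtetFun n f)) := by
  constructor
  · intro del M N _hdel hM hN
    exact ⟨⟨canonf n M N, canon_solves hn hM hN⟩,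
      fun f hf => forward_main hn hM hN hf⟩
  · refine ⟨Fmap n, ⟨?_, ?_, ?_⟩, ?_⟩
    · rintro ⟨M, N⟩ ⟨del, _hdel, hM, hN⟩
      exact forward_main hn hM hN (canon_solves hn hM hN)
    · rintro ⟨M1, N1⟩ ⟨d1, _, hM1, hN1⟩ ⟨M2, N2⟩ ⟨d2, _, hM2, hN2⟩ heq
      have e1 := GF_id hn hM1 hN1
      have e2 := GF_id hn hM2 hN2
      rw [← e1, ← e2, heq]
    · rintro ⟨Pp, Qq⟩ ⟨gam, _hgam, hPp, hQq⟩
      obtain ⟨hmem, hfg⟩ := Gmap_good hn hPp hQq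
      exact ⟨Gmap n (Pp, Qq), hmem, hfg⟩
    · rintro M N f ⟨del, _hdel, hM, hN⟩ hf
      exact Fmap_compat hn hM hN hf
end Stage3
end Stage1
end

section
/- Let n ≥ 1 and let P be a hive of size n. Then the GT pattern obtained from the commutor output P⋆ by taking row differences equals the Schützenberger involution applied to the GT pattern obtained from P by taking north-east differences: \widehat{P⋆} = ξ(P̃). -/
/-- The lattice `L'` of the 1/4-octahedron. -/
def inLQ (n x y t : ℤ) : Prop :=
  0 ≤ x ∧ 0 ≤ y ∧ x + y ≤ n ∧ x + y ≤ t ∧ t ≤ 2*n - x - y ∧ 2 ∣ (x + y + t)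

/-- `f` solves the modified octahedron recurrence on the 1/4-octahedron with
initial condition the hive `P`. -/
def OctQ (n : ℤ) (P f : ℤ → ℤ → ℤ → ℤ) : Prop :=
  (∀ x y z : ℤ, inDelta n x y z → f z x (n - y) = P x y z) ∧
  (∀ x y t : ℤ, inLQ n x y (t+1) → x + y < t + 1 → 0 < x → 0 < y →
      f x y (t+1) = max (f (x+1) y t + f (x-1) y t) (f x (y+1) t + f x (y-1) t)
        - f x y (t-1)) ∧
  (∀ x t : ℤ, inLQ n x 0 (t+1) → x < t + 1 → 0 < x →
      f x 0 (t+1) = f (x+1) 0 t + f (x-1) 0 t - f x 0 (t-1)) ∧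
  (∀ y t : ℤ, inLQ n 0 y (t+1) → y < t + 1 → 0 < y →
      f 0 y (t+1) = f 0 (y+1) t + f 0 (y-1) t - f 0 y (t-1)) ∧
  (∀ t : ℤ, inLQ n 0 0 (t+1) → 0 < t + 1 →
      f 0 0 (t+1) = f 1 0 t + f 0 1 t - f 0 0 (t-1))

/-- The commutor output `P⋆(x,y,z) = f(x,y,n+z) − f(0,0,2n)`, encoded as the function
which is zero outside `Δ_n`. -/
def PstarFun (n : ℤ) (f : ℤ → ℤ → ℤ → ℤ) : ℤ → ℤ → ℤ → ℤ := fun x y z =>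
  if inDelta n x y z then f x y (n + z) - f 0 0 (2*n) else 0

/-- `P̂(i,j) = P(i−j,j,n−i) − P(i−j+1,j−1,n−i)`: row differences of a (quasi-)hive. -/
def hatGT (n : ℤ) (P : ℤ → ℤ → ℤ → ℤ) : ℤ → ℤ → ℤ := fun i j =>
  P (i-j) j (n-i) - P (i-j+1) (j-1) (n-i)

/-- `P̃(i,j) = P(j,n−i,i−j) − P(j−1,n−i,i−j+1)`: north-east differences of a hive. -/
def tildeGT (n : ℤ) (P : ℤ → ℤ → ℤ → ℤ) : ℤ → ℤ → ℤ := fun i j =>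
  P j (n-i) (i-j) - P (j-1) (n-i) (i-j+1)

/-- The Bender–Knuth move `s_i` on (the functional encoding of) GT patterns.  An undefined
argument of `min`/`max` (namely `T(i−1,j−1)` when `j = 1`, and `T(i−1,j)` when `j = i`)
is omitted. -/
def BK (i : ℤ) (T : ℤ → ℤ → ℤ) : ℤ → ℤ → ℤ := fun k j =>
  if k = i then
    (if j = 1 then T (i+1) j else min (T (i+1) j) (T (i-1) (j-1))) +
      (if j = i then T (i+1) (j+1) else max (T (i+1) (j+1)) (T (i-1) j)) - T i j
  else T k j

/-- `BKchain m T = s_m (s_{m−1} ⋯ (s_1 T))`. -/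
def BKchain : ℕ → (ℤ → ℤ → ℤ) → ℤ → ℤ → ℤ
  | 0, T => T
  | m+1, T => BK ((m : ℤ) + 1) (BKchain m T)

/-- `xiGT (n-1)` is the Schützenberger involution
`ξ = s_1 (s_2 s_1) ⋯ (s_{n−1} s_{n−2} ⋯ s_1)` for patterns of size `n`
(the rightmost factor applied first). -/
def xiGT : ℕ → (ℤ → ℤ → ℤ) → ℤ → ℤ → ℤ
  | 0, T => T
  | m+1, T => xiGT m (BKchain (m+1) T)

-- Values off `L'` are irrelevant; the `max … 1` only makes the recursion on `t` well founded.
def octSol (n : ℤ) (P : ℤ → ℤ → ℤ → ℤ) (x y t : ℤ) : ℤ :=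
  if t ≤ max (x + y) 1 then P y (n - x - y) x
  else
    (if 0 < x ∧ 0 < y then
        max (octSol n P (x+1) y (t-1) + octSol n P (x-1) y (t-1))
          (octSol n P x (y+1) (t-1) + octSol n P x (y-1) (t-1))
      else if 0 < x then octSol n P (x+1) y (t-1) + octSol n P (x-1) y (t-1)
      else if 0 < y then octSol n P x (y+1) (t-1) + octSol n P x (y-1) (t-1)
      else octSol n P (x+1) y (t-1) + octSol n P x (y+1) (t-1))
      - octSol n P x y (t-2)
termination_by t.toNat
decreasing_by all_goals omega

lemma octSol_of_le (n : ℤ) (P : ℤ → ℤ → ℤ → ℤ) {x y t : ℤ} (h : t ≤ x + y) :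
    octSol n P x y t = P y (n - x - y) x := by
  rw [octSol, if_pos (le_max_of_le_left h)]

lemma octSol_add_one {n : ℤ} (P : ℤ → ℤ → ℤ → ℤ) {x y t : ℤ} (hx : 0 ≤ x) (hy : 0 ≤ y)
    (ht : x + y < t + 1) (hpar : 2 ∣ x + y + (t + 1)) :
    octSol n P x y (t + 1) =
      (if 0 < x ∧ 0 < y then
          max (octSol n P (x+1) y t + octSol n P (x-1) y t)
            (octSol n P x (y+1) t + octSol n P x (y-1) t)
        else if 0 < x then octSol n P (x+1) y t + octSol n P (x-1) y t
        else if 0 < y then octSol n P x (y+1) t + octSol n P x (y-1) t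
        else octSol n P (x+1) y t + octSol n P x (y+1) t)
        - octSol n P x y (t-1) := by
  rw [octSol, if_neg (by omega), add_sub_cancel_right, show t + 1 - 2 = t - 1 by ring]

theorem octQ_octSol (n : ℤ) (P : ℤ → ℤ → ℤ → ℤ) : OctQ n P (octSol n P) := by
  refine ⟨?_, ?_, ?_, ?_, ?_⟩
  · rintro x y z ⟨-, -, -, hs⟩
    rw [octSol_of_le n P (by omega), show n - z - x = y by omega]
  · rintro x y t ⟨hx, hy, -, -, -, hpar⟩ ht hx' hy'
    rw [octSol_add_one P hx hy ht hpar, if_pos ⟨hx', hy'⟩]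
  · rintro x t ⟨hx, -, -, -, -, hpar⟩ ht hx'
    rw [octSol_add_one P hx le_rfl (by omega) hpar, if_neg (by omega), if_pos hx']
  · rintro y t ⟨-, hy, -, -, -, hpar⟩ ht hy'
    rw [octSol_add_one P le_rfl hy (by omega) hpar, if_neg (by omega), if_neg (by omega),
      if_pos hy']
  · rintro t ⟨-, -, -, -, -, hpar⟩ ht
    rw [octSol_add_one P le_rfl le_rfl (by omega) hpar, if_neg (by omega), if_neg (by omega),
      if_neg (by omega), zero_add]

def rowDiff (f : ℤ → ℤ → ℤ → ℤ) (τ : ℤ → ℤ) : ℤ → ℤ → ℤ := fun i j =>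
  f (i-j) j (τ i) - f (i-j+1) (j-1) (τ i)

def EqOnGT (n : ℤ) (T T' : ℤ → ℤ → ℤ) : Prop :=
  ∀ i j : ℤ, 1 ≤ j → j ≤ i → i ≤ n → T i j = T' i j

lemma EqOnGT.trans {n : ℤ} {T T' T'' : ℤ → ℤ → ℤ} (h : EqOnGT n T T') (h' : EqOnGT n T' T'') :
    EqOnGT n T T'' :=
  fun i j hj hji hin => (h i j hj hji hin).trans (h' i j hj hji hin)

lemma eqOnGT_rowDiff_congr {n : ℤ} (f : ℤ → ℤ → ℤ → ℤ) {τ τ' : ℤ → ℤ}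
    (h : ∀ i, 1 ≤ i → i ≤ n → τ i = τ' i) : EqOnGT n (rowDiff f τ) (rowDiff f τ') :=
  fun i j hj hji hin => by simp only [rowDiff, h i (hj.trans hji) hin]

lemma hatGT_PstarFun_eqOnGT (n : ℤ) (f : ℤ → ℤ → ℤ → ℤ) :
    EqOnGT n (hatGT n (PstarFun n f)) (rowDiff f (fun i => 2 * n - i)) := by
  intro i j hj hji hin
  simp only [hatGT, rowDiff, PstarFun,
    if_pos (show inDelta n (i - j) j (n - i) from ⟨by omega, by omega, by omega, by omega⟩),
    if_pos (show inDelta n (i - j + 1) (j - 1) (n - i) from ⟨by omega, by omega, by omega, by omega⟩),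
    show n + (n - i) = 2 * n - i by ring, sub_sub_sub_cancel_right]

-- The row times once the chains `s_{n-1} ⋯ s_1, …, s_{m+1} ⋯ s_1` of `ξ` and the moves
-- `s_1, …, s_k` of the chain `s_m ⋯ s_1` have been applied to the profile `τ i = i`.
def xiProfile (n m k : ℤ) (i : ℤ) : ℤ :=
  if i ≤ k then i + 2 * (n - m) else if i ≤ m then i + 2 * (n - 1 - m) else 2 * n - i

namespace OctQ

variable {n : ℤ} {P f : ℤ → ℤ → ℤ → ℤ}

lemma add_eq_add_max (hf : OctQ n P f) {x y t : ℤ} (hx : 0 ≤ x) (hy : 0 < y)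
    (ht : x + y ≤ t) (htn : t + 2 + x + y ≤ 2 * n) (hpar : 2 ∣ x + y + t) :
    f x y (t + 2) + f x y t = f (x+1) y (t+1) + f x (y-1) (t+1) +
      if x = 0 then f x (y+1) (t+1) - f (x+1) y (t+1)
      else max (f x (y+1) (t+1) - f (x+1) y (t+1)) (f (x-1) y (t+1) - f x (y-1) (t+1)) := by
  have hL : inLQ n x y (t + 1 + 1) := ⟨hx, hy.le, by omega, by omega, by omega, by omega⟩
  rcases hx.eq_or_lt with rfl | hx'
  · have := hf.2.2.2.1 y (t + 1) hL (by omega) hy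
    simp only [add_assoc, one_add_one_eq_two, add_sub_cancel_right, zero_add, if_true] at this ⊢
    omega
  · have := hf.2.1 x y (t + 1) hL (by omega) hx' hy
    simp only [add_assoc, one_add_one_eq_two, add_sub_cancel_right, hx'.ne', if_false] at this ⊢
    omega

lemma add_eq_sub_min (hf : OctQ n P f) {x y t : ℤ} (hx : 0 < x) (hy : 0 ≤ y)
    (ht : x + y ≤ t) (htn : t + 2 + x + y ≤ 2 * n) (hpar : 2 ∣ x + y + t) :
    f x y (t + 2) + f x y t = f x (y+1) (t+1) + f (x-1) y (t+1) -
      if y = 0 then f x (y+1) (t+1) - f (x+1) y (t+1)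
      else min (f x (y+1) (t+1) - f (x+1) y (t+1)) (f (x-1) y (t+1) - f x (y-1) (t+1)) := by
  have hL : inLQ n x y (t + 1 + 1) := ⟨hx.le, hy, by omega, by omega, by omega, by omega⟩
  rcases hy.eq_or_lt with rfl | hy'
  · have := hf.2.2.1 x (t + 1) hL (by omega) hx
    simp only [add_assoc, one_add_one_eq_two, add_sub_cancel_right, zero_add, if_true] at this ⊢
    omega
  · have := hf.2.1 x y (t + 1) hL (by omega) hx hy'
    simp only [add_assoc, one_add_one_eq_two, add_sub_cancel_right, hy'.ne', if_false] at this ⊢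
    omega

theorem eqOnGT_BK (hf : OctQ n P f) {τ : ℤ → ℤ} {i : ℤ} (hi : 1 ≤ i)
    (hup : τ (i+1) = τ i + 1) (hdown : τ (i-1) = τ i + 1) (hτ : i ≤ τ i)
    (hτn : τ i + 2 + i ≤ 2 * n) (hpar : 2 ∣ i + τ i) {T : ℤ → ℤ → ℤ}
    (hT : EqOnGT n T (rowDiff f τ)) :
    EqOnGT n (BK i T) (rowDiff f (Function.update τ i (τ i + 2))) := by
  intro r j hj hjr hrn
  rcases ne_or_eq r i with hri | rfl
  · simp only [BK, if_neg hri, Function.update_of_ne hri, hT r j hj hjr hrn, rowDiff]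
  set t := τ r with ht
  have hmax : f (r-j) j (t+2) + f (r-j) j t = f (r-j+1) j (t+1) + f (r-j) (j-1) (t+1) +
      if j = r then T (r+1) (j+1) else max (T (r+1) (j+1)) (T (r-1) j) := by
    rw [hf.add_eq_add_max (by omega) (by omega) (by omega) (by omega) (by omega)]
    rcases eq_or_ne j r with rfl | hjr'
    · rw [sub_self, if_pos rfl, if_pos rfl, hT (j+1) (j+1) (by omega) le_rfl (by omega)]
      simp only [rowDiff, hup]
      ring_nf
    · rw [if_neg (by omega), if_neg hjr', hT (r+1) (j+1) (by omega) (by omega) (by omega),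
        hT (r-1) j hj (by omega) (by omega)]
      simp only [rowDiff, hup, hdown]
      ring_nf
  have hmin : f (r-j+1) (j-1) (t+2) + f (r-j+1) (j-1) t =
      f (r-j+1) j (t+1) + f (r-j) (j-1) (t+1) -
      if j = 1 then T (r+1) j else min (T (r+1) j) (T (r-1) (j-1)) := by
    rw [hf.add_eq_sub_min (by omega) (by omega) (by omega) (by omega) (by omega)]
    rcases eq_or_ne j 1 with rfl | hj1
    · rw [sub_self, if_pos rfl, if_pos rfl, hT (r+1) 1 le_rfl (by omega) (by omega)]
      simp only [rowDiff, hup]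
      ring_nf
    · rw [if_neg (by omega), if_neg hj1, hT (r+1) j hj (by omega) (by omega),
        hT (r-1) (j-1) (by omega) (by omega) (by omega)]
      simp only [rowDiff, hup, hdown]
      ring_nf
  have hold := hT r j hj hjr hrn
  simp only [rowDiff, ← ht] at hold
  simp only [BK, if_true, rowDiff, Function.update_self]
  omega

lemma tildeGT_eqOnGT (hf : OctQ n P f) :
    EqOnGT n (tildeGT n P) (rowDiff f id) := by
  intro i j hj hji hin
  have h₁ := hf.1 j (n - i) (i - j) ⟨by omega, by omega, by omega, by omega⟩
  have h₂ := hf.1 (j - 1) (n - i) (i - j + 1) ⟨by omega, by omega, by omega, by omega⟩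
  rw [sub_sub_cancel] at h₁ h₂
  rw [tildeGT, rowDiff, id, h₁, h₂]

theorem eqOnGT_BKchain (hf : OctQ n P f) {m : ℤ} (hm : m ≤ n - 1) {T : ℤ → ℤ → ℤ}
    (hT : EqOnGT n T (rowDiff f (xiProfile n m 0))) (k : ℕ) (hk : (k : ℤ) ≤ m) :
    EqOnGT n (BKchain k T) (rowDiff f (xiProfile n m k)) := by
  induction k with
  | zero => simpa [BKchain] using hT
  | succ k ih =>
    push_cast at hk ⊢
    have hupdate : Function.update (xiProfile n m k) (k + 1) (xiProfile n m k (k + 1) + 2) =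
        xiProfile n m (k + 1) := by
      funext i
      simp only [Function.update_apply, xiProfile]
      split_ifs <;> omega
    rw [← hupdate]
    refine hf.eqOnGT_BK (by omega) ?_ ?_ ?_ ?_ ?_ (ih (by omega)) <;>
      simp only [xiProfile] <;> split_ifs <;> omega

theorem eqOnGT_xiGT (hf : OctQ n P f) (m : ℕ) (hm : (m : ℤ) ≤ n - 1) {T : ℤ → ℤ → ℤ}
    (hT : EqOnGT n T (rowDiff f (xiProfile n m 0))) :
    EqOnGT n (xiGT m T) (rowDiff f (xiProfile n 0 0)) := by
  induction m generalizing T with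
  | zero => simpa [xiGT] using hT
  | succ m ih =>
    push_cast at hm hT
    refine ih (by omega) ((hf.eqOnGT_BKchain hm hT (m + 1) (by push_cast; rfl)).trans ?_)
    refine eqOnGT_rowDiff_congr f fun i hi _ => ?_
    simp only [xiProfile]
    split_ifs <;> omega

end OctQ

theorem stmt4_general (n : ℕ) (P : ℤ → ℤ → ℤ → ℤ) :
    (∃ f, OctQ (n : ℤ) P f) ∧
    ∀ f : ℤ → ℤ → ℤ → ℤ, OctQ (n : ℤ) P f →
      ∀ i j : ℤ, 1 ≤ j → j ≤ i → i ≤ (n : ℤ) →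
        hatGT (n : ℤ) (PstarFun (n : ℤ) f) i j = xiGT (n - 1) (tildeGT (n : ℤ) P) i j := by
  refine ⟨⟨octSol n P, octQ_octSol n P⟩, fun f hf i j hj hji hin => ?_⟩
  have hn : ((n - 1 : ℕ) : ℤ) = n - 1 := by omega
  have hstart : EqOnGT n (tildeGT n P) (rowDiff f (xiProfile n (n - 1 : ℕ) 0)) :=
    hf.tildeGT_eqOnGT.trans <| eqOnGT_rowDiff_congr f fun i _ hi => by
      simp only [id, xiProfile, hn]
      split_ifs <;> omega
  have hend : EqOnGT n (rowDiff f (xiProfile n 0 0)) (rowDiff f (fun i => 2 * n - i)) :=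
    eqOnGT_rowDiff_congr f fun i hi _ => by
      simp only [xiProfile]
      split_ifs <;> omega
  rw [hatGT_PstarFun_eqOnGT n f i j hj hji hin,
    hf.eqOnGT_xiGT (n - 1) (by omega) hstart i j hj hji hin, hend i j hj hji hin]

/-- for a hive `P` of size `n`, the GT pattern `\widehat{P⋆}` equals
the Schützenberger involution `ξ(P̃)`. -/
theorem stmt4 (n : ℕ) (hn : 1 ≤ n) (P : ℤ → ℤ → ℤ → ℤ) (hP : IsHive (n : ℤ) P) :
    (∃ f, OctQ (n : ℤ) P f) ∧
    ∀ f : ℤ → ℤ → ℤ → ℤ, OctQ (n : ℤ) P f →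
      ∀ i j : ℤ, 1 ≤ j → j ≤ i → i ≤ (n : ℤ) →
        hatGT (n : ℤ) (PstarFun (n : ℤ) f) i j = xiGT (n - 1) (tildeGT (n : ℤ) P) i j :=
  stmt4_general n P
end

section
/- Let M be a quasi-hive of size n and let 0 ≤ i ≤ n−1. Define t_i(M) : Δ_n → ℤ by t_i(M)(x,y,z) = M(x,y,z) for z ≠ n−i, while on the slice z = n−i (where x+y = i): t_i(M)(x,y,n−i) = max(M(x+1,y,n−i−1)+M(x−1,y,n−i+1), M(x,y+1,n−i−1)+M(x,y−1,n−i+1)) − M(x,y,n−i) if x > 0 and y > 0; t_i(M)(x,0,n−i) = M(x+1,0,n−i−1)+M(x−1,0,n−i+1) − M(x,0,n−i) if x > 0; t_i(M)(0,y,n−i) = M(0,y+1,n−i−1)+M(0,y−1,n−i+1) − M(0,y,n−i) if y > 0; and (for i = 0) t_0(M)(0,0,n) = M(1,0,n−1)+M(0,1,n−1) − M(0,0,n). Then t_i(M) is again a quasi-hive, \widehat{t_i(M)} = s_i(M̂) for every 1 ≤ i ≤ n−1, and \widehat{t_0(M)} = M̂. -/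
/-- The local flip `t_i` of a quasi-hive along the slice `z = n − i`. -/
def tFlip (n i : ℤ) (M : ℤ → ℤ → ℤ → ℤ) : ℤ → ℤ → ℤ → ℤ := fun x y z =>
  if z = n - i then
    (if 0 < x ∧ 0 < y then
      max (M (x+1) y (n-i-1) + M (x-1) y (n-i+1)) (M x (y+1) (n-i-1) + M x (y-1) (n-i+1))
        - M x y (n-i)
    else if 0 < x then M (x+1) 0 (n-i-1) + M (x-1) 0 (n-i+1) - M x 0 (n-i)
    else if 0 < y then M 0 (y+1) (n-i-1) + M 0 (y-1) (n-i+1) - M 0 y (n-i)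
    else M 1 0 (n-1) + M 0 1 (n-1) - M 0 0 n)
  else M x y z

lemma tFlip_ne (M : ℤ → ℤ → ℤ → ℤ) (x y : ℤ) {n i z : ℤ} (h : z ≠ n - i) :
    tFlip n i M x y z = M x y z := by
  unfold tFlip; rw [if_neg h]

lemma tFlip_pp (M : ℤ → ℤ → ℤ → ℤ) {n i : ℤ} (x y : ℤ) (hx : 0 < x) (hy : 0 < y) :
    tFlip n i M x y (n-i) =
      max (M (x+1) y (n-i-1) + M (x-1) y (n-i+1)) (M x (y+1) (n-i-1) + M x (y-1) (n-i+1))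
        - M x y (n-i) := by
  unfold tFlip; rw [if_pos rfl, if_pos ⟨hx, hy⟩]

lemma tFlip_p0 (M : ℤ → ℤ → ℤ → ℤ) {n i : ℤ} (x : ℤ) (hx : 0 < x) :
    tFlip n i M x 0 (n-i) = M (x+1) 0 (n-i-1) + M (x-1) 0 (n-i+1) - M x 0 (n-i) := by
  unfold tFlip; rw [if_pos rfl, if_neg (by omega), if_pos hx]

lemma tFlip_0p (M : ℤ → ℤ → ℤ → ℤ) {n i : ℤ} (y : ℤ) (hy : 0 < y) :
    tFlip n i M 0 y (n-i) = M 0 (y+1) (n-i-1) + M 0 (y-1) (n-i+1) - M 0 y (n-i) := by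
  unfold tFlip; rw [if_pos rfl, if_neg (by omega), if_neg (by omega), if_pos hy]

set_option maxHeartbeats 1000000 in
/-- `t_i(M)` is again a quasi-hive, `\widehat{t_i(M)} = s_i(M̂)` for
`1 ≤ i ≤ n−1`, and `\widehat{t_0(M)} = M̂`. -/
theorem stmt5 (n : ℤ) (hn : 1 ≤ n) (M : ℤ → ℤ → ℤ → ℤ) (hM : IsQuasiHive n M)
    (i : ℤ) (hi0 : 0 ≤ i) (hi1 : i ≤ n - 1) :
    IsQuasiHive n (tFlip n i M) ∧
    (1 ≤ i → ∀ k j : ℤ, 1 ≤ j → j ≤ k → k ≤ n →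
      hatGT n (tFlip n i M) k j = BK i (hatGT n M) k j) ∧
    (i = 0 → ∀ k j : ℤ, 1 ≤ j → j ≤ k → k ≤ n →
      hatGT n (tFlip n 0 M) k j = hatGT n M k j) := by
  obtain ⟨hI, hII⟩ := hM
  have KI : ∀ a b c : ℤ, 1 ≤ a → 0 ≤ b → 1 ≤ c → a + b + c = n →
      M (a+1) b (c-1) + M (a-1) (b+1) c ≤ M a b c + M a (b+1) (c-1) := by
    intro a b c ha hb hc hs
    exact hI a b c ⟨by omega, by omega, by omega, by omega⟩ ⟨by omega, by omega, by omega, by omega⟩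
      ⟨by omega, by omega, by omega, by omega⟩ ⟨by omega, by omega, by omega, by omega⟩
  have KII : ∀ a b c : ℤ, 0 ≤ a → 1 ≤ b → 1 ≤ c → a + b + c = n →
      M a (b+1) (c-1) + M (a+1) (b-1) c ≤ M a b c + M (a+1) b (c-1) := by
    intro a b c ha hb hc hs
    exact hII a b c ⟨by omega, by omega, by omega, by omega⟩ ⟨by omega, by omega, by omega, by omega⟩
      ⟨by omega, by omega, by omega, by omega⟩ ⟨by omega, by omega, by omega, by omega⟩
  refine ⟨⟨?_, ?_⟩, ?_, ?_⟩
  · -- Condition (I) for tFlip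
    intro x y z h0 h1 h2 h3
    obtain ⟨a0, b0, c0, s0⟩ := h0
    obtain ⟨a1, b1, c1, s1⟩ := h1
    obtain ⟨a2, b2, c2, s2⟩ := h2
    obtain ⟨a3, b3, c3, s3⟩ := h3
    by_cases hz : z = n - i
    · -- upper row x+y = i is the flipped one
      subst hz
      have H2 := KII (x-1) (y+1) (n-i) (by omega) (by omega) (by omega) (by omega)
      by_cases hy : 1 ≤ y
      · by_cases hx : 2 ≤ x
        · have H1 := KI (x-1) y (n-i+1) (by omega) (by omega) (by omega) (by omega)
          rw [tFlip_ne M (x+1) y (show (n:ℤ)-i-1 ≠ n-i by omega),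
            tFlip_ne M x (y+1) (show (n:ℤ)-i-1 ≠ n-i by omega),
            tFlip_pp M x y (by omega) (by omega),
            tFlip_pp M (x-1) (y+1) (by omega) (by omega)]
          ring_nf at H1 H2 ⊢
          omega
        · have hx1 : x = 1 := by omega
          subst hx1
          rw [tFlip_ne M (1+1) y (show (n:ℤ)-i-1 ≠ n-i by omega),
            tFlip_ne M 1 (y+1) (show (n:ℤ)-i-1 ≠ n-i by omega),
            tFlip_pp M 1 y (by omega) (by omega),
            show (1:ℤ)-1 = 0 by norm_num,
            tFlip_0p M (y+1) (by omega)]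
          ring_nf at H2 ⊢
          omega
      · have hy0 : y = 0 := by omega
        subst hy0
        by_cases hx : 2 ≤ x
        · have H1 := KI (x-1) 0 (n-i+1) (by omega) (by omega) (by omega) (by omega)
          rw [tFlip_ne M (x+1) 0 (show (n:ℤ)-i-1 ≠ n-i by omega),
            tFlip_ne M x (0+1) (show (n:ℤ)-i-1 ≠ n-i by omega),
            tFlip_p0 M x (by omega),
            tFlip_pp M (x-1) (0+1) (by omega) (by omega)]
          ring_nf at H1 H2 ⊢
          omega
        · have hx1 : x = 1 := by omega
          subst hx1
          rw [tFlip_ne M (1+1) 0 (show (n:ℤ)-i-1 ≠ n-i by omega),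
            tFlip_ne M 1 (0+1) (show (n:ℤ)-i-1 ≠ n-i by omega),
            tFlip_p0 M 1 (by omega),
            show (1:ℤ)-1 = 0 by norm_num,
            tFlip_0p M (0+1) (by omega)]
          ring_nf at H2 ⊢
          omega
    · by_cases hz2 : z = n - i + 1
      · -- lower row is the flipped one
        subst hz2
        rw [show (n:ℤ)-i+1-1 = n-i by ring]
        have H1 := KI (x+1) y (n-i) (by omega) (by omega) (by omega) (by omega)
        by_cases hy : 1 ≤ y
        · have H2 := KII x y (n-i+1) (by omega) (by omega) (by omega) (by omega)
          rw [tFlip_ne M x y (show (n:ℤ)-i+1 ≠ n-i by omega),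
            tFlip_ne M (x-1) (y+1) (show (n:ℤ)-i+1 ≠ n-i by omega),
            tFlip_pp M (x+1) y (by omega) (by omega),
            tFlip_pp M x (y+1) (by omega) (by omega)]
          ring_nf at H1 H2 ⊢
          omega
        · have hy0 : y = 0 := by omega
          subst hy0
          rw [tFlip_ne M x 0 (show (n:ℤ)-i+1 ≠ n-i by omega),
            tFlip_ne M (x-1) (0+1) (show (n:ℤ)-i+1 ≠ n-i by omega),
            tFlip_p0 M (x+1) (by omega),
            tFlip_pp M x (0+1) (by omega) (by omega)]
          ring_nf at H1 ⊢
          omega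
      · -- no flipped vertex involved
        rw [tFlip_ne M (x+1) y (show z-1 ≠ n-i by omega),
          tFlip_ne M (x-1) (y+1) (show z ≠ n-i from hz),
          tFlip_ne M x y (show z ≠ n-i from hz),
          tFlip_ne M x (y+1) (show z-1 ≠ n-i by omega)]
        exact hI x y z ⟨a0, b0, c0, s0⟩ ⟨a1, b1, c1, s1⟩ ⟨a2, b2, c2, s2⟩ ⟨a3, b3, c3, s3⟩
  · -- Condition (II) for tFlip
    intro x y z h0 h1 h2 h3
    obtain ⟨a0, b0, c0, s0⟩ := h0
    obtain ⟨a1, b1, c1, s1⟩ := h1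
    obtain ⟨a2, b2, c2, s2⟩ := h2
    obtain ⟨a3, b3, c3, s3⟩ := h3
    by_cases hz : z = n - i
    · subst hz
      have H1 := KI (x+1) (y-1) (n-i) (by omega) (by omega) (by omega) (by omega)
      by_cases hy : 2 ≤ y
      · have H2 := KII x (y-1) (n-i+1) (by omega) (by omega) (by omega) (by omega)
        by_cases hx : 1 ≤ x
        · rw [tFlip_ne M x (y+1) (show (n:ℤ)-i-1 ≠ n-i by omega),
            tFlip_ne M (x+1) y (show (n:ℤ)-i-1 ≠ n-i by omega),
            tFlip_pp M (x+1) (y-1) (by omega) (by omega),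
            tFlip_pp M x y (by omega) (by omega)]
          ring_nf at H1 H2 ⊢
          omega
        · have hx0 : x = 0 := by omega
          subst hx0
          rw [tFlip_ne M 0 (y+1) (show (n:ℤ)-i-1 ≠ n-i by omega),
            tFlip_ne M (0+1) y (show (n:ℤ)-i-1 ≠ n-i by omega),
            tFlip_pp M (0+1) (y-1) (by omega) (by omega),
            tFlip_0p M y (by omega)]
          ring_nf at H1 H2 ⊢
          omega
      · have hy1 : y = 1 := by omega
        subst hy1
        by_cases hx : 1 ≤ x
        · rw [tFlip_ne M x (1+1) (show (n:ℤ)-i-1 ≠ n-i by omega),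
            tFlip_ne M (x+1) 1 (show (n:ℤ)-i-1 ≠ n-i by omega),
            show (1:ℤ)-1 = 0 by norm_num,
            tFlip_p0 M (x+1) (by omega),
            tFlip_pp M x 1 (by omega) (by omega)]
          ring_nf at H1 ⊢
          omega
        · have hx0 : x = 0 := by omega
          subst hx0
          rw [tFlip_ne M 0 (1+1) (show (n:ℤ)-i-1 ≠ n-i by omega),
            tFlip_ne M (0+1) 1 (show (n:ℤ)-i-1 ≠ n-i by omega),
            show (1:ℤ)-1 = 0 by norm_num,
            tFlip_p0 M (0+1) (by omega),
            tFlip_0p M 1 (by omega)]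
          ring_nf at H1 ⊢
          omega
    · by_cases hz2 : z = n - i + 1
      · subst hz2
        rw [show (n:ℤ)-i+1-1 = n-i by ring]
        have H2 := KII x (y+1) (n-i) (by omega) (by omega) (by omega) (by omega)
        by_cases hx : 1 ≤ x
        · have H1 := KI x y (n-i+1) (by omega) (by omega) (by omega) (by omega)
          rw [tFlip_ne M x y (show (n:ℤ)-i+1 ≠ n-i by omega),
            tFlip_ne M (x+1) (y-1) (show (n:ℤ)-i+1 ≠ n-i by omega),
            tFlip_pp M x (y+1) (by omega) (by omega),
            tFlip_pp M (x+1) y (by omega) (by omega)]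
          ring_nf at H1 H2 ⊢
          omega
        · have hx0 : x = 0 := by omega
          subst hx0
          rw [tFlip_ne M 0 y (show (n:ℤ)-i+1 ≠ n-i by omega),
            tFlip_ne M (0+1) (y-1) (show (n:ℤ)-i+1 ≠ n-i by omega),
            tFlip_0p M (y+1) (by omega),
            tFlip_pp M (0+1) y (by omega) (by omega)]
          ring_nf at H2 ⊢
          omega
      · rw [tFlip_ne M x (y+1) (show z-1 ≠ n-i by omega),
          tFlip_ne M (x+1) (y-1) (show z ≠ n-i from hz),
          tFlip_ne M x y (show z ≠ n-i from hz),
          tFlip_ne M (x+1) y (show z-1 ≠ n-i by omega)]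
        exact hII x y z ⟨a0, b0, c0, s0⟩ ⟨a1, b1, c1, s1⟩ ⟨a2, b2, c2, s2⟩ ⟨a3, b3, c3, s3⟩
  · -- hatGT of tFlip = BK of hatGT, for 1 ≤ i
    intro hi k j hj1 hjk hkn
    by_cases hk : k = i
    · rw [hk]
      by_cases hjI : j = i
      · rw [hjI]
        by_cases hi1e : i = 1
        · rw [hi1e]
          unfold BK hatGT tFlip
          rw [if_pos (show (1:ℤ) = 1 from rfl),
            if_pos (show (n:ℤ)-1 = n-1 from rfl), if_pos (show (n:ℤ)-1 = n-1 from rfl),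
            if_pos (show (1:ℤ) = 1 from rfl), if_pos (show (1:ℤ) = 1 from rfl)]
          split_ifs <;> ((try ring_nf) <;> omega)
        · unfold BK hatGT tFlip
          rw [if_pos (show (i:ℤ) = i from rfl),
            if_pos (show (n:ℤ)-i = n-i from rfl), if_pos (show (n:ℤ)-i = n-i from rfl),
            if_neg (show ¬((0:ℤ) < i-i ∧ 0 < i) by omega),
            if_neg (show ¬((0:ℤ) < i-i) by omega),
            if_pos (show (0:ℤ) < i by omega),
            if_pos (show (0:ℤ) < i-i+1 ∧ 0 < i-1 by omega),
            if_neg (show ¬((i:ℤ) = 1) from hi1e),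
            if_pos (show (i:ℤ) = i from rfl)]
          ring_nf
          omega
      · by_cases hj1e : j = 1
        · rw [hj1e]
          unfold BK hatGT tFlip
          rw [if_pos (show (i:ℤ) = i from rfl),
            if_pos (show (n:ℤ)-i = n-i from rfl), if_pos (show (n:ℤ)-i = n-i from rfl),
            if_pos (show (1:ℤ) = 1 from rfl),
            if_neg (show ¬((1:ℤ) = i) by omega)]
          split_ifs <;> ((try ring_nf) <;> omega)
        · unfold BK hatGT tFlip
          rw [if_pos (show (i:ℤ) = i from rfl),
            if_pos (show (n:ℤ)-i = n-i from rfl), if_pos (show (n:ℤ)-i = n-i from rfl),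
            if_pos (show (0:ℤ) < i-j ∧ 0 < j by omega),
            if_pos (show (0:ℤ) < i-j+1 ∧ 0 < j-1 by omega),
            if_neg (show ¬(j = 1) from hj1e),
            if_neg (show ¬(j = i) from hjI)]
          ring_nf
          omega
    · unfold BK hatGT
      rw [if_neg hk, tFlip_ne M (k-j) j (show (n:ℤ)-k ≠ n-i by omega),
        tFlip_ne M (k-j+1) (j-1) (show (n:ℤ)-k ≠ n-i by omega)]
  · -- i = 0 : hatGT unchanged
    intro hi0e k j hj1 hjk hkn
    unfold hatGT
    rw [tFlip_ne M (k-j) j (show (n:ℤ)-k ≠ n-0 by omega),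
      tFlip_ne M (k-j+1) (j-1) (show (n:ℤ)-k ≠ n-0 by omega)]
end

section
/- Let T be a semistandard tableau with entries in {1,…,n}, let a_1 ≤ a_2 ≤ … ≤ a_l be a weakly increasing sequence of entries in {1,…,n}, let α_i = #{m : a_m = i}, and let T' = ((T ← a_1) ← …) ← a_l be the result of successive row insertions. For 0 ≤ i ≤ n and j ≥ 1 let Λ(i,j) = Σ_{r ≥ j} (number of entries ≤ i in row r of T) and define Λ'(i,j) likewise for T'. Then Λ'(i,1) = Λ(i,1) + α_1 + ⋯ + α_i for all i, and Λ'(i,j+1) = min( Λ(i,j) + Λ'(i−1,j+1), Λ(i,j+1) + Λ'(i−1,j) ) − Λ(i−1,j) for all 1 ≤ i ≤ n and j ≥ 1. -/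
/-- A tableau, encoded as its list of rows (row 1 first, no empty rows). -/
abbrev Tab := List (List ℕ)

/-- The `r`-th row (1-based) of a tableau. -/
def rowT (T : Tab) (r : ℕ) : List ℕ := T.getD (r-1) []

/-- Semistandard Young tableau with entries in `{1, …, n}`: rows weakly increase,
columns strictly increase, row lengths weakly decrease, no empty rows. -/
def IsSSYT (n : ℕ) (T : Tab) : Prop :=
  [] ∉ T ∧
  (∀ R ∈ T, List.Pairwise (· ≤ ·) R) ∧
  (∀ R ∈ T, ∀ a ∈ R, 1 ≤ a ∧ a ≤ n) ∧
  (∀ r : ℕ, 1 ≤ r → (rowT T (r+1)).length ≤ (rowT T r).length) ∧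
  (∀ r c : ℕ, 1 ≤ r → c < (rowT T (r+1)).length →
    (rowT T r).getD c 0 < (rowT T (r+1)).getD c 0)

/-- Insert `a` into a single (weakly increasing) row; returns the new row and the
bumped entry, if any. -/
def insRow (a : ℕ) : List ℕ → List ℕ × Option ℕ
  | [] => ([a], none)
  | b :: R =>
    if b ≤ a then
      let p := insRow a R
      (b :: p.1, p.2)
    else (a :: R, some b)

/-- Schensted row insertion of `a` into a tableau. -/
def insTab : ℕ → Tab → Tab
  | a, [] => [[a]]
  | a, R :: T =>
    match insRow a R with
    | (R', none) => R' :: T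
    | (R', some b) => R' :: insTab b T

/-- Row-insert the entries of a list, one by one from left to right. -/
def insList (T : Tab) (R : List ℕ) : Tab := R.foldl (fun t a => insTab a t) T

/-- Number of entries `≤ i` in a row. -/
def rowCntLE (R : List ℕ) (i : ℕ) : ℕ := (R.filter (fun a => a ≤ i)).length

/-- `Λ(i,j)`: the number of entries `≤ i` in rows `≥ j` of `T`. -/
def LamF (T : Tab) (i j : ℕ) : ℤ := (((T.drop (j-1)).map fun R => rowCntLE R i).sum : ℤ)

/-- Insert a whole list, left to right, into a single row; returns final row and
the list of bumped entries in chronological order. -/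
def insRowL : List ℕ → List ℕ → List ℕ × List ℕ
  | [], R => (R, [])
  | a :: as, R =>
    let p := insRow a R
    let q := insRowL as p.1
    (q.1, p.2.toList ++ q.2)

lemma insRow_countP (p : ℕ → Bool) (a : ℕ) (R : List ℕ) :
    (insRow a R).1.countP p + (insRow a R).2.toList.countP p = (a :: R).countP p := by
  induction R with
  | nil => simp [insRow]
  | cons b R ih =>
    by_cases h : b ≤ a
    · simp only [insRow, if_pos h]
      simp only [List.countP_cons] at *
      omega
    · simp only [insRow, if_neg h]
      simp only [List.countP_cons, Option.toList_some, List.countP_cons, List.countP_nil]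
      omega

lemma insRow_mem (a : ℕ) (R : List ℕ) : ∀ x ∈ (insRow a R).1, x = a ∨ x ∈ R := by
  induction R with
  | nil => simp [insRow]
  | cons b R ih =>
    by_cases h : b ≤ a
    · simp only [insRow, if_pos h]
      intro x hx
      rcases List.mem_cons.1 hx with h1 | h1
      · right; simp [h1]
      · rcases ih x h1 with h2 | h2
        · left; exact h2
        · right; simp [h2]
    · simp only [insRow, if_neg h]
      intro x hx
      rcases List.mem_cons.1 hx with h1 | h1
      · left; exact h1
      · right; exact List.mem_cons_of_mem _ h1

lemma insRow_sorted (a : ℕ) (R : List ℕ) (hR : List.Pairwise (· ≤ ·) R) :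
    List.Pairwise (· ≤ ·) (insRow a R).1 := by
  induction R with
  | nil => simp [insRow]
  | cons b R ih =>
    have hb : ∀ x ∈ R, b ≤ x := fun x hx => (List.pairwise_cons.1 hR).1 x hx
    have hR' : List.Pairwise (· ≤ ·) R := (List.pairwise_cons.1 hR).2
    by_cases h : b ≤ a
    · simp only [insRow, if_pos h]
      refine List.pairwise_cons.2 ⟨?_, ih hR'⟩
      intro x hx
      rcases insRow_mem a R x hx with h1 | h1
      · omega
      · exact hb x h1
    · simp only [insRow, if_neg h]
      refine List.pairwise_cons.2 ⟨?_, hR'⟩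
      intro x hx
      have := hb x hx; omega

lemma insRow_bump_gt (a : ℕ) (R : List ℕ) (b : ℕ) (h : (insRow a R).2 = some b) : a < b := by
  induction R with
  | nil => simp [insRow] at h
  | cons c R ih =>
    by_cases hc : c ≤ a
    · simp only [insRow, if_pos hc] at h; exact ih h
    · simp only [insRow, if_neg hc] at h
      cases h; omega

lemma insRow_bump_min (a : ℕ) (R : List ℕ) (hR : List.Pairwise (· ≤ ·) R) (b : ℕ)
    (h : (insRow a R).2 = some b) : ∀ v ∈ R, a < v → b ≤ v := by
  induction R with
  | nil => simp [insRow] at h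
  | cons c R ih =>
    have hb : ∀ x ∈ R, c ≤ x := fun x hx => (List.pairwise_cons.1 hR).1 x hx
    have hR' : List.Pairwise (· ≤ ·) R := (List.pairwise_cons.1 hR).2
    by_cases hc : c ≤ a
    · simp only [insRow, if_pos hc] at h
      intro v hv hav
      rcases List.mem_cons.1 hv with h1 | h1
      · omega
      · exact ih hR' h v h1 hav
    · simp only [insRow, if_neg hc] at h
      have hbc : b = c := by simp_all
      intro v hv _
      rcases List.mem_cons.1 hv with h1 | h1
      · omega
      · have := hb v h1; omega

lemma insRow_bump_none (a : ℕ) (R : List ℕ) (h : (insRow a R).2 = none) : ∀ v ∈ R, v ≤ a := by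
  induction R with
  | nil => simp
  | cons c R ih =>
    by_cases hc : c ≤ a
    · simp only [insRow, if_pos hc] at h
      intro v hv
      rcases List.mem_cons.1 hv with h1 | h1
      · omega
      · exact ih h v h1
    · simp only [insRow, if_neg hc] at h
      cases h

lemma insRow_none_eq (a : ℕ) (R : List ℕ) (h : ∀ v ∈ R, v ≤ a) : insRow a R = (R ++ [a], none) := by
  induction R with
  | nil => simp [insRow]
  | cons c R ih =>
    have hc : c ≤ a := h c (by simp)
    simp only [insRow, if_pos hc, ih (fun v hv => h v (by simp [hv]))]
    simp


lemma insRow_bump_mem (a : ℕ) (R : List ℕ) (b : ℕ) (h : (insRow a R).2 = some b) : b ∈ R := by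
  induction R with
  | nil => simp [insRow] at h
  | cons c R ih =>
    by_cases hc : c ≤ a
    · simp only [insRow, if_pos hc] at h
      exact List.mem_cons_of_mem _ (ih h)
    · simp only [insRow, if_neg hc] at h
      cases h
      exact List.mem_cons_self



lemma insRowL_countP (p : ℕ → Bool) : ∀ (as R : List ℕ),
    (insRowL as R).1.countP p + (insRowL as R).2.countP p = R.countP p + as.countP p := by
  intro as
  induction as with
  | nil => intro R; simp [insRowL]
  | cons a as ih =>
    intro R
    simp only [insRowL, List.countP_append, List.countP_cons]
    have h1 := insRow_countP p a R
    have h2 := ih (insRow a R).1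
    simp only [List.countP_cons] at h1
    omega

lemma insRowL_bump_lb : ∀ (as R : List ℕ) (t : ℕ), List.Pairwise (· ≤ ·) as →
    List.Pairwise (· ≤ ·) R → (∀ x ∈ as, ∀ v ∈ R, x < v → t ≤ v) →
    ∀ u ∈ (insRowL as R).2, t ≤ u := by
  intro as
  induction as with
  | nil => intro R t _ _ _ u hu; simp [insRowL] at hu
  | cons a as ih =>
    intro R t hs hR hlb u hu
    have has : ∀ x ∈ as, a ≤ x := fun x hx => (List.pairwise_cons.1 hs).1 x hx
    have hs' : List.Pairwise (· ≤ ·) as := (List.pairwise_cons.1 hs).2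
    simp only [insRowL, List.mem_append] at hu
    rcases hu with hu | hu
    · -- u is the first bump
      rcases h : (insRow a R).2 with _ | b
      · simp [h] at hu
      · simp [h] at hu
        subst hu
        exact hlb a (by simp) u (insRow_bump_mem a R u h) (insRow_bump_gt a R u h)
    · refine ih (insRow a R).1 t hs' (insRow_sorted a R hR) ?_ u hu
      intro x hx v hv hxv
      rcases insRow_mem a R v hv with h1 | h1
      · have := has x hx; omega
      · exact hlb x (by simp [hx]) v h1 hxv

lemma insRowL_bump_sorted : ∀ (as R : List ℕ), List.Pairwise (· ≤ ·) as →
    List.Pairwise (· ≤ ·) R → List.Pairwise (· ≤ ·) (insRowL as R).2 := by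
  intro as
  induction as with
  | nil => intro R _ _; simp [insRowL]
  | cons a as ih =>
    intro R hs hR
    have has : ∀ x ∈ as, a ≤ x := fun x hx => (List.pairwise_cons.1 hs).1 x hx
    have hs' : List.Pairwise (· ≤ ·) as := (List.pairwise_cons.1 hs).2
    have htail := ih (insRow a R).1 hs' (insRow_sorted a R hR)
    simp only [insRowL]
    rcases h : (insRow a R).2 with _ | b
    · simpa using htail
    · simp only [Option.toList_some, List.singleton_append]
      refine List.pairwise_cons.2 ⟨?_, htail⟩
      intro u hu
      refine insRowL_bump_lb as (insRow a R).1 b hs' (insRow_sorted a R hR) ?_ u hu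
      intro x hx v hv hxv
      rcases insRow_mem a R v hv with h1 | h1
      · have := has x hx; omega
      · exact insRow_bump_min a R hR b h v h1 (by have := has x hx; omega)


/-- The key single-row counting recurrence for the bumped entries. -/
lemma beta_eq : ∀ (as R : List ℕ), List.Pairwise (· ≤ ·) as → List.Pairwise (· ≤ ·) R →
    ∀ i : ℕ, 1 ≤ i →
    (insRowL as R).2.countP (fun v => v ≤ i) =
      min ((insRowL as R).2.countP (fun v => v ≤ i-1) + R.countP (fun v => v = i))
          (as.countP (fun v => v ≤ i-1)) := by
  intro as
  induction as with
  | nil => intro R _ _ i _; simp [insRowL]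
  | cons a as ih =>
    intro R hs hR i hi
    have has : ∀ x ∈ as, a ≤ x := fun x hx => (List.pairwise_cons.1 hs).1 x hx
    have hs' : List.Pairwise (· ≤ ·) as := (List.pairwise_cons.1 hs).2
    set R₁ := (insRow a R).1 with hR₁
    have hR₁s : List.Pairwise (· ≤ ·) R₁ := insRow_sorted a R hR
    have IH := ih R₁ hs' hR₁s i hi
    set B1 := (insRowL as R₁).2.countP (fun v => v ≤ i) with hB1
    set B0 := (insRowL as R₁).2.countP (fun v => v ≤ i-1) with hB0
    set A0 := as.countP (fun v => v ≤ i-1) with hA0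
    set M := R.countP (fun v => v = i) with hM
    set M₁ := R₁.countP (fun v => v = i) with hM₁
    have hii1 : (i ≤ i - 1) = False := by simp; omega
    have hii2 : (i ≤ i) = True := by simp
    have hmono : B0 ≤ B1 := by
      refine List.countP_mono_left ?_
      intro x _ hx
      simp only [decide_eq_true_eq] at *
      omega
    have hmid := insRow_countP (fun v => v = i) a R
    simp only [List.countP_cons, ← hR₁, ← hM, ← hM₁] at hmid
    simp only [insRowL, List.countP_append, List.countP_cons, ← hR₁, ← hB1, ← hB0, ← hA0]
    -- now case on the bump
    rcases h : (insRow a R).2 with _ | b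
    · -- no bump
      have hnone := insRow_bump_none a R h
      simp only [h, Option.toList_none, List.countP_nil, Nat.zero_add, Nat.add_zero, hii1, hii2] at hmid ⊢
      by_cases ha : a ≤ i - 1
      · have hMz : M = 0 := by
          rw [hM, List.countP_eq_zero]
          intro v hv
          have := hnone v hv
          simp only [decide_eq_true_eq]
          omega
        have hai : ¬ (a = i) := by omega
        simp only [decide_eq_true_eq, if_pos ha, hai, if_neg hai, if_false, hii1, hii2] at hmid ⊢
        simp only [ha, if_true] at *
        omega
      · by_cases hai : a = i
        · have hA0z : A0 = 0 := by
            rw [hA0, List.countP_eq_zero]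
            intro v hv
            have := has v hv
            simp only [decide_eq_true_eq]
            omega
          simp only [decide_eq_true_eq, ha, if_false, hai, if_true, hii1, hii2] at hmid ⊢
          omega
        · simp only [decide_eq_true_eq, ha, if_false, hai, if_false, hii1, hii2] at hmid ⊢
          omega
    · -- bump b
      have hab : a < b := insRow_bump_gt a R b h
      have hmin := insRow_bump_min a R hR b h
      simp only [h, Option.toList_some, List.countP_cons, List.countP_nil, Nat.zero_add, hii1, hii2] at hmid ⊢
      by_cases ha : a ≤ i - 1
      · have hai : ¬ (a = i) := by omega
        rcases lt_trichotomy b i with hb | hb | hb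
        · have hb1 : b ≤ i - 1 := by omega
          have hb2 : b ≤ i := by omega
          have hbi : ¬ (b = i) := by omega
          simp only [decide_eq_true_eq, ha, hb1, hb2, if_true, hbi, hai, if_false, hii1, hii2] at hmid ⊢
          omega
        · have hb1 : ¬ (b ≤ i - 1) := by omega
          have hb2 : b ≤ i := by omega
          simp only [decide_eq_true_eq, ha, hb2, if_true, hb1, hai, if_false, hb, if_true, hii1, hii2] at hmid ⊢
          omega
        · have hb1 : ¬ (b ≤ i - 1) := by omega
          have hb2 : ¬ (b ≤ i) := by omega
          have hbi : ¬ (b = i) := by omega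
          have hMz : M = 0 := by
            rw [hM, List.countP_eq_zero]
            intro v hv
            simp only [decide_eq_true_eq]
            intro hvi
            have := hmin v hv (by omega)
            omega
          simp only [decide_eq_true_eq, ha, if_true, hb1, hb2, hbi, hai, if_false, hii1, hii2] at hmid ⊢
          omega
      · have hb2 : ¬ (b ≤ i) := by omega
        have hb1 : ¬ (b ≤ i - 1) := by omega
        have hbi : ¬ (b = i) := by omega
        by_cases hai : a = i
        · have hA0z : A0 = 0 := by
            rw [hA0, List.countP_eq_zero]
            intro v hv
            have := has v hv
            simp only [decide_eq_true_eq]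
            omega
          simp only [decide_eq_true_eq, ha, hb1, hb2, hbi, if_false, hai, if_true, hii1, hii2] at hmid ⊢
          omega
        · simp only [decide_eq_true_eq, ha, hb1, hb2, hbi, hai, if_false, hii1, hii2] at hmid ⊢
          omega


lemma insList_cons : ∀ (as : List ℕ) (R : List ℕ) (T₀ : Tab),
    insList (R :: T₀) as = (insRowL as R).1 :: insList T₀ (insRowL as R).2 := by
  intro as
  induction as with
  | nil => intro R T₀; rfl
  | cons a as ih =>
    intro R T₀
    show insList (insTab a (R :: T₀)) as = _
    rcases h : insRow a R with ⟨R₁, ob⟩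
    rcases ob with _ | b
    · have : insTab a (R :: T₀) = R₁ :: T₀ := by simp [insTab, h]
      rw [this, ih]
      simp [insRowL, h]
    · have : insTab a (R :: T₀) = R₁ :: insTab b T₀ := by simp [insTab, h]
      rw [this, ih]
      have : insList T₀ ((insRowL (a :: as) R).2) = insList (insTab b T₀) ((insRowL as R₁).2) := by
        simp only [insRowL, h, Option.toList_some, List.singleton_append]
        rfl
      rw [this]
      simp [insRowL, h]

lemma insRowL_none : ∀ (as R : List ℕ), List.Pairwise (· ≤ ·) as → (∀ x ∈ as, ∀ v ∈ R, v ≤ x) →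
    insRowL as R = (R ++ as, []) := by
  intro as
  induction as with
  | nil => intro R _ _; simp [insRowL]
  | cons a as ih =>
    intro R hs hle
    have has : ∀ x ∈ as, a ≤ x := fun x hx => (List.pairwise_cons.1 hs).1 x hx
    have h1 : insRow a R = (R ++ [a], none) := insRow_none_eq a R (hle a (by simp))
    simp only [insRowL, h1]
    rw [ih (R ++ [a]) (List.pairwise_cons.1 hs).2]
    · simp
    · intro x hx v hv
      rcases List.mem_append.1 hv with h2 | h2
      · exact le_trans (hle a (by simp) v h2) (has x hx)
      · simp at h2; subst h2; exact has x hx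

lemma insList_nil_sorted (a : ℕ) (as : List ℕ) (hs : List.Pairwise (· ≤ ·) (a :: as)) :
    insList [] (a :: as) = [a :: as] := by
  have : insList [] (a :: as) = insList [[a]] as := rfl
  rw [this, insList_cons]
  have has : ∀ x ∈ as, a ≤ x := fun x hx => (List.pairwise_cons.1 hs).1 x hx
  rw [insRowL_none as [a] (List.pairwise_cons.1 hs).2 (by intro x hx v hv; simp at hv; subst hv; exact has x hx)]
  rfl

lemma rowCntLE_eq (R : List ℕ) (i : ℕ) : rowCntLE R i = R.countP (fun v => v ≤ i) :=
  List.countP_eq_length_filter.symm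

lemma LamF_cons_one (R : List ℕ) (T₀ : Tab) (i : ℕ) :
    LamF (R :: T₀) i 1 = (R.countP (fun v => v ≤ i) : ℤ) + LamF T₀ i 1 := by
  simp [LamF, rowCntLE_eq]

lemma LamF_cons_succ (R : List ℕ) (T₀ : Tab) (i j : ℕ) (hj : 1 ≤ j) :
    LamF (R :: T₀) i (j+1) = LamF T₀ i j := by
  obtain ⟨k, rfl⟩ : ∃ k, j = k + 1 := ⟨j - 1, by omega⟩
  simp [LamF, List.drop_succ_cons]

lemma LamF_nil (i j : ℕ) : LamF [] i j = 0 := by simp [LamF]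

lemma LamF_nonneg (T : Tab) (i j : ℕ) : 0 ≤ LamF T i j := by
  simp only [LamF]; positivity

lemma countP_le_split (R : List ℕ) (i : ℕ) (hi : 1 ≤ i) :
    R.countP (fun v => v ≤ i) = R.countP (fun v => v ≤ i-1) + R.countP (fun v => v = i) := by
  induction R with
  | nil => simp
  | cons a R ih =>
    simp only [List.countP_cons, decide_eq_true_eq]
    rcases Nat.lt_trichotomy a i with h | h | h
    · have h1 : a ≤ i := by omega
      have h2 : a ≤ i - 1 := by omega
      have h3 : ¬ (a = i) := by omega
      simp only [h1, if_true, h2, h3, if_false]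
      omega
    · have h1 : a ≤ i := by omega
      have h2 : ¬ (a ≤ i - 1) := by omega
      rw [if_pos h1, if_neg h2, if_pos h]
      omega
    · have h1 : ¬ (a ≤ i) := by omega
      have h2 : ¬ (a ≤ i - 1) := by omega
      have h3 : ¬ (a = i) := by omega
      simp only [h1, h2, h3, if_false]
      omega

lemma main_ind : ∀ (T : Tab), (∀ R ∈ T, List.Pairwise (· ≤ ·) R) →
    ∀ as : List ℕ, List.Pairwise (· ≤ ·) as →
    (∀ i : ℕ, LamF (insList T as) i 1 = LamF T i 1 + (as.countP (fun v => v ≤ i) : ℤ)) ∧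
    (∀ i j : ℕ, 1 ≤ i → 1 ≤ j →
      LamF (insList T as) i (j+1) =
        min (LamF T i j + LamF (insList T as) (i-1) (j+1))
            (LamF T i (j+1) + LamF (insList T as) (i-1) j)
          - LamF T (i-1) j) := by
  intro T
  induction T with
  | nil =>
    intro _ as hs
    rcases as with _ | ⟨a, as⟩
    · constructor
      · intro i; simp [insList, LamF]
      · intro i j _ _; simp [insList, LamF]
    · rw [insList_nil_sorted a as hs]
      constructor
      · intro i
        rw [LamF_cons_one]
        simp [LamF_nil]
      · intro i j hi hj
        rw [LamF_cons_succ (a :: as) [] i j hj, LamF_cons_succ (a :: as) [] (i-1) j hj]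
        simp only [LamF_nil, zero_add, add_zero]
        have h1 : 0 ≤ LamF [a :: as] (i-1) j := LamF_nonneg _ _ _
        omega
  | cons R T₀ ih =>
    intro hrows as hs
    have hR : List.Pairwise (· ≤ ·) R := hrows R (by simp)
    have hT₀ : ∀ S ∈ T₀, List.Pairwise (· ≤ ·) S := fun S hS => hrows S (by simp [hS])
    set bs := (insRowL as R).2 with hbs
    set R' := (insRowL as R).1 with hR'
    have hbss : List.Pairwise (· ≤ ·) bs := insRowL_bump_sorted as R hs hR
    obtain ⟨IH1, IH2⟩ := ih hT₀ bs hbss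
    rw [insList_cons as R T₀, ← hbs, ← hR']
    have hcons : ∀ p : ℕ → Bool, R'.countP p + bs.countP p = R.countP p + as.countP p :=
      fun p => insRowL_countP p as R
    constructor
    · intro i
      rw [LamF_cons_one, LamF_cons_one, IH1 i]
      have := hcons (fun v => v ≤ i)
      push_cast
      omega
    · intro i j hi hj
      rcases Nat.lt_or_ge j 2 with hj2 | hj2
      · -- j = 1
        have hj1 : j = 1 := by omega
        subst hj1
        rw [LamF_cons_succ R' (insList T₀ bs) i 1 le_rfl,
          LamF_cons_succ R' (insList T₀ bs) (i-1) 1 le_rfl,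
          LamF_cons_succ R T₀ i 1 le_rfl,
          LamF_cons_one R' (insList T₀ bs) (i-1), LamF_cons_one R T₀ i,
          LamF_cons_one R T₀ (i-1), IH1 i, IH1 (i-1)]
        have hcle := hcons (fun v => v ≤ i - 1)
        have hbeta := beta_eq as R hs hR i hi
        rw [← hbs] at hbeta
        have hcc : R.countP (fun v => v ≤ i) = R.countP (fun v => v ≤ i - 1) + R.countP (fun v => v = i) :=
          countP_le_split R i hi
        push_cast
        omega
      · -- j ≥ 2
        obtain ⟨k, rfl⟩ : ∃ k, j = k + 1 := ⟨j - 1, by omega⟩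
        have hk : 1 ≤ k := by omega
        rw [LamF_cons_succ _ _ _ _ (by omega), LamF_cons_succ _ _ _ _ (by omega),
          LamF_cons_succ _ _ _ _ (by omega), LamF_cons_succ _ _ _ _ (by omega),
          LamF_cons_succ _ _ _ _ (by omega), LamF_cons_succ _ _ _ _ (by omega)]
        exact IH2 i k hi hk


/-- the row-insertion recurrence for the counting functions `Λ`, `Λ'`. -/
theorem stmt11 (n : ℕ) (hn : 1 ≤ n) (T : Tab) (hT : IsSSYT n T)
    (as : List ℕ) (hsort : List.Pairwise (· ≤ ·) as) (hent : ∀ a ∈ as, 1 ≤ a ∧ a ≤ n) :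
    (∀ i : ℕ, i ≤ n →
      LamF (insList T as) i 1 = LamF T i 1 + ((as.filter (fun a => a ≤ i)).length : ℤ)) ∧
    (∀ i j : ℕ, 1 ≤ i → i ≤ n → 1 ≤ j →
      LamF (insList T as) i (j+1) =
        min (LamF T i j + LamF (insList T as) (i-1) (j+1))
            (LamF T i (j+1) + LamF (insList T as) (i-1) j)
          - LamF T (i-1) j) := by
  obtain ⟨H1, H2⟩ := main_ind T hT.2.1 as hsort
  refine ⟨fun i _ => ?_, fun i j hi _ hj => H2 i j hi hj⟩
  rw [H1 i, List.countP_eq_length_filter]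
end

section
/- Let μ be a partition with at most n parts and let b_μ be the semistandard tableau of shape μ whose i-th row is filled entirely with the entry i. If T is a μ-dominant semistandard tableau with entries in {1,…,n}, then the recording pattern R(T, b_μ) equals the GT pattern of T; that is, R(T, b_μ)(i,j) equals the number of entries ≤ i in row j of T, for all 1 ≤ j ≤ i ≤ n. -/
/-- `Jst n T U d` row-inserts rows `n, n−1, …, n−d+1` of `U` (each row inserted entry by
entry in weakly increasing order) into `T`; thus `Jst n T U (n−k) = J^k`. -/
def Jst (n : ℕ) (T U : Tab) : ℕ → Tab
  | 0 => T
  | d+1 => insList (Jst n T U d) (rowT U (n - d))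

/-- Number of boxes in rows `≥ j` of a tableau. -/
def tailBoxes (T : Tab) (j : ℕ) : ℤ := (((T.drop (j-1)).map List.length).sum : ℤ)

/-- The recording pattern `R(T,U)(i,j) = Σ_{r≥j} λ^{i−j+1}_r − Σ_{r≥j+1} λ^{i−j}_r`,
where `λ^k` is the shape of `J^k = Jst n T U (n−k)`. -/
def Rpat (n : ℕ) (T U : Tab) (i j : ℕ) : ℤ :=
  tailBoxes (Jst n T U (n - (i - j + 1))) j - tailBoxes (Jst n T U (n - (i - j))) (j + 1)

/-- Number of entries equal to `m` in columns `≥ c` (columns 1-based). -/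
def cntGEc (T : Tab) (m c : ℕ) : ℕ := (T.map fun R => (R.drop (c-1)).count m).sum

/-- `h_i(c)`. -/
def hCol (T : Tab) (i c : ℕ) : ℤ := (cntGEc T (i+1) c : ℤ) - (cntGEc T i c : ℤ)

/-- The tableau `b_μ`, whose `i`-th row is filled with the entry `i`. -/
def bTab (n : ℕ) (mu : ℕ → ℕ) : Tab :=
  (List.range n).map fun r => List.replicate (mu (r+1)) (r+1)

lemma insList_nil (T : Tab) : insList T [] = T := rfl

lemma insList_cons_s12 (T : Tab) (a : ℕ) (l : List ℕ) :
    insList T (a :: l) = insList (insTab a T) l := rfl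

lemma insRow_all_le {v : ℕ} : ∀ {f : List ℕ}, (∀ x ∈ f, x ≤ v) →
    insRow v f = (f ++ [v], none)
  | [], _ => rfl
  | b :: f, h => by
    have hb : b ≤ v := h b (by simp)
    have := insRow_all_le (f := f) (fun x hx => h x (by simp [hx]))
    simp only [insRow, if_pos hb, this, List.cons_append]

lemma insRow_append {v : ℕ} {f l : List ℕ} (h : ∀ x ∈ f, x ≤ v) :
    insRow v (f ++ l) = ((f ++ (insRow v l).1), (insRow v l).2) := by
  induction f with
  | nil => simp
  | cons b f ih =>
    have hb : b ≤ v := h b (by simp)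
    have := ih (fun x hx => h x (by simp [hx]))
    simp only [List.cons_append, insRow, if_pos hb]
    rw [this]

lemma insRow_replicate {v w c : ℕ} (hvw : v < w) :
    insRow v (List.replicate (c+1) w) = (v :: List.replicate c w, some w) := by
  simp [List.replicate_succ, insRow, Nat.not_le.mpr hvw]

lemma mem_append_single_le {v : ℕ} {f : List ℕ} (hf : ∀ x ∈ f, x ≤ v) :
    ∀ x ∈ f ++ [v], x ≤ v := by
  intro x hx
  rcases List.mem_append.1 hx with h | h
  · exact hf x h
  · simp at h; omega

lemma row1_zero {v : ℕ} : ∀ (m : ℕ) (f : List ℕ) (S : Tab), (∀ x ∈ f, x ≤ v) →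
    insList (f :: S) (List.replicate m v) = (f ++ List.replicate m v) :: S := by
  intro m
  induction m with
  | zero => intro f S hf; simp [insList]
  | succ m ihm =>
    intro f S hf
    have h1 : insTab v (f :: S) = (f ++ [v]) :: S := by
      cases S <;> simp [insTab, insRow_all_le hf]
    rw [List.replicate_succ, insList_cons_s12, h1, ihm (f ++ [v]) S (mem_append_single_le hf)]
    simp [List.append_assoc, ← List.replicate_succ]

/-- Net effect of inserting `m` copies of `v` into a tableau whose first row is
`f ++ (v+1)^c` with `f` having entries `≤ v`, provided `c ≤ m`. -/
lemma row1_lemma {v : ℕ} : ∀ (c m : ℕ) (f : List ℕ) (S : Tab),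
    (∀ x ∈ f, x ≤ v) → c ≤ m →
    insList ((f ++ List.replicate c (v+1)) :: S) (List.replicate m v)
      = (f ++ List.replicate m v) :: insList S (List.replicate c (v+1)) := by
  intro c
  induction c with
  | zero =>
    intro m f S hf _
    simpa [insList_nil] using row1_zero m f S hf
  | succ c ihc =>
    intro m f S hf hcm
    obtain ⟨m', rfl⟩ : ∃ m', m = m' + 1 := ⟨m - 1, by omega⟩
    have hm : List.replicate (m'+1) v = v :: List.replicate m' v := rfl
    rw [hm, insList_cons_s12]
    have h2 : insRow v (f ++ List.replicate (c+1) (v+1))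
        = (f ++ (v :: List.replicate c (v+1)), some (v+1)) := by
      rw [insRow_append hf, insRow_replicate (Nat.lt_succ_self v)]
    have h1 : insTab v ((f ++ List.replicate (c+1) (v+1)) :: S)
        = ((f ++ [v]) ++ List.replicate c (v+1)) :: insTab (v+1) S := by
      simp [insTab, h2]
    rw [h1, ihc m' (f ++ [v]) (insTab (v+1) S) (mem_append_single_le hf) (by omega),
      ← insList_cons_s12, ← List.replicate_succ]
    simp [List.append_assoc, ← List.replicate_succ]
/-- One full stage: inserting `m` copies of `v` into the structured tableau. -/
lemma stage_lemma : ∀ (L : ℕ) (v m : ℕ) (c cin : ℕ → ℕ) (f : ℕ → List ℕ),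
    (∀ q, ∀ x ∈ f q, x ≤ v + q) → (∀ q, L ≤ q → f q = [] ∧ c q = 0) →
    (∀ q, c (q+1) ≤ c q) → c 0 ≤ m → cin 0 = m → (∀ q, cin (q+1) = c q) →
    ∃ L', insList ((List.range L).map
          (fun q => f q ++ List.replicate (c q) (v+q+1))) (List.replicate m v)
        = (List.range L').map (fun q => f q ++ List.replicate (cin q) (v+q))
      ∧ ∀ q, L' ≤ q → (f q = [] ∧ cin q = 0) := by
  intro L
  induction L with
  | zero =>
    intro v m c cin f hf hbey hmono hcap hcin0 hcins
    cases m with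
    | zero =>
      refine ⟨0, by simp [insList], ?_⟩
      intro q _
      refine ⟨(hbey q (Nat.zero_le _)).1, ?_⟩
      cases q with
      | zero => simp [hcin0]
      | succ p => rw [hcins p]; exact (hbey p (Nat.zero_le _)).2
    | succ m' =>
      refine ⟨1, ?_, ?_⟩
      · have h0 : insTab v [] = [[v]] := rfl
        have : insList ([] : Tab) (List.replicate (m'+1) v)
            = [List.replicate (m'+1) v] := by
          have hm : List.replicate (m'+1) v = v :: List.replicate m' v := rfl
          rw [hm, insList_cons_s12, h0, row1_zero m' [v] [] (by simp)]
          simp [List.replicate_succ]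
        rw [show List.map (fun q => f q ++ List.replicate (c q) (v + q + 1)) (List.range 0) = ([] : Tab) from rfl, this]
        have hf0 : f 0 = [] := (hbey 0 (Nat.zero_le _)).1
        simp [List.range_succ, hf0, hcin0]
      · intro q hq
        obtain ⟨p, rfl⟩ : ∃ p, q = p + 1 := ⟨q - 1, by omega⟩
        exact ⟨(hbey _ (Nat.zero_le _)).1, by rw [hcins p]; exact (hbey p (Nat.zero_le _)).2⟩
  | succ L ih =>
    intro v m c cin f hf hbey hmono hcap hcin0 hcins
    rw [List.range_succ_eq_map, List.map_cons, List.map_map]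
    have hrow := row1_lemma (c 0) m (f 0)
      ((List.range L).map ((fun q => f q ++ List.replicate (c q) (v+q+1)) ∘ Nat.succ))
      (fun x hx => by simpa using hf 0 x hx) hcap
    rw [hrow]
    have hc : ((fun q => f q ++ List.replicate (c q) (v+q+1)) ∘ Nat.succ)
        = fun q => f (q+1) ++ List.replicate (c (q+1)) ((v+1)+q+1) := by
      funext q
      simp only [Function.comp]
      rw [show v + (q+1) + 1 = (v+1)+q+1 by omega]
    rw [hc]
    obtain ⟨L'', heq, hbey'⟩ := ih (v+1) (c 0) (fun q => c (q+1)) (fun q => cin (q+1))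
      (fun q => f (q+1))
      (fun q x hx => by have := hf (q+1) x hx; omega)
      (fun q hq => hbey (q+1) (by omega))
      (fun q => hmono (q+1)) (hmono 0) (hcins 0) (fun q => hcins (q+1))
    rw [heq]
    refine ⟨L'' + 1, ?_, ?_⟩
    · rw [List.range_succ_eq_map, List.map_cons, List.map_map]
      congr 1
      · rw [hcin0]; simp
      · congr 1
        funext q
        simp only [Function.comp]
        rw [show v + (q+1) = (v+1)+q by omega]
    · intro q hq
      obtain ⟨p, rfl⟩ : ∃ p, q = p + 1 := ⟨q - 1, by omega⟩
      exact hbey' p (by omega)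

-- sum of g over rows 1..r
def sumRows (T : Tab) (g : List ℕ → ℕ) : ℕ → ℕ
  | 0 => 0
  | r+1 => sumRows T g r + g (rowT T (r+1))

lemma sumRows_add_drop (T : Tab) (g : List ℕ → ℕ) (h0 : g [] = 0) :
    ∀ r, sumRows T g r + ((T.drop r).map g).sum = (T.map g).sum := by
  intro r
  induction r with
  | zero => simp [sumRows]
  | succ r ih =>
    by_cases hr : r < T.length
    · have hd : T.drop r = T[r] :: T.drop (r+1) := List.drop_eq_getElem_cons hr
      have hrow : rowT T (r+1) = T[r] := by
        simp [rowT, List.getD_eq_getElem?_getD, List.getElem?_eq_getElem hr]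
      rw [← ih, hd]
      have e : sumRows T g (r+1) = sumRows T g r + g (rowT T (r+1)) := rfl
      rw [e, hrow, List.map_cons, List.sum_cons]
      omega
    · have hr' : T.length ≤ r := by omega
      have hd1 : T.drop r = [] := List.drop_eq_nil_of_le hr'
      have hd2 : T.drop (r+1) = [] := List.drop_eq_nil_of_le (by omega)
      have hrow : rowT T (r+1) = [] := by
        simp [rowT, List.getD_eq_getElem?_getD, List.getElem?_eq_none (by omega : T.length ≤ r)]
      rw [← ih, hd1, hd2]
      simp [sumRows, hrow, h0]

lemma sumRows_mono_idx (T : Tab) (g : List ℕ → ℕ) {r r' : ℕ} (h : r ≤ r') :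
    sumRows T g r ≤ sumRows T g r' := by
  induction r' with
  | zero => simp at h; simp [h]
  | succ r' ih =>
    rcases Nat.lt_or_ge r (r'+1) with h' | h'
    · exact le_trans (ih (by omega)) (by simp [sumRows])
    · have : r = r' + 1 := by omega
      simp [this]

lemma sumRows_le_total (T : Tab) (g : List ℕ → ℕ) (h0 : g [] = 0) (r : ℕ) :
    sumRows T g r ≤ (T.map g).sum := by
  have := sumRows_add_drop T g h0 r
  omega

lemma total_le_sumRows (T : Tab) (g : List ℕ → ℕ) (h0 : g [] = 0) (r : ℕ)
    (hv : ∀ ρ, r < ρ → g (rowT T ρ) = 0) : (T.map g).sum ≤ sumRows T g r := by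
  have e := sumRows_add_drop T g h0 T.length
  rw [List.drop_length] at e
  simp at e
  have key : ∀ L, sumRows T g L ≤ sumRows T g r := by
    intro L
    induction L with
    | zero => simp [sumRows]
    | succ L ih =>
      rcases Nat.lt_or_ge L r with h' | h'
      · exact sumRows_mono_idx T g (by omega)
      · have : sumRows T g (L+1) = sumRows T g L + g (rowT T (L+1)) := rfl
        rw [this, hv (L+1) (by omega)]
        simpa using ih
  rw [← e]
  exact key T.length

lemma sumRows_congr (T : Tab) (g g' : List ℕ → ℕ) (r : ℕ)
    (h : ∀ ρ, 1 ≤ ρ → ρ ≤ r → g (rowT T ρ) = g' (rowT T ρ)) :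
    sumRows T g r = sumRows T g' r := by
  induction r with
  | zero => rfl
  | succ r ih =>
    have : sumRows T g (r+1) = sumRows T g r + g (rowT T (r+1)) := rfl
    rw [this, ih (fun ρ h1 h2 => h ρ h1 (by omega)), h (r+1) (by omega) (le_refl _)]
    rfl

lemma sumRows_le_of_le (T : Tab) (g g' : List ℕ → ℕ) (r : ℕ)
    (h : ∀ R, g R ≤ g' R) : sumRows T g r ≤ sumRows T g' r := by
  induction r with
  | zero => simp [sumRows]
  | succ r ih =>
    have e1 : sumRows T g (r+1) = sumRows T g r + g (rowT T (r+1)) := rfl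
    have e2 : sumRows T g' (r+1) = sumRows T g' r + g' (rowT T (r+1)) := rfl
    rw [e1, e2]
    exact Nat.add_le_add ih (h _)

-- number of entries ≤ i in rows 1..r
def Xp (T : Tab) (s : ℕ) (r : ℕ) : ℕ := sumRows T (fun R => R.count s) r

-- sorted-row positional facts
lemma cntLE_le_length (R : List ℕ) (i : ℕ) : rowCntLE R i ≤ R.length :=
  List.length_filter_le _ _

lemma sorted_getD_le_iff {i : ℕ} : ∀ (l : List ℕ), l.Pairwise (· ≤ ·) →
    ∀ p, p < l.length → (l.getD p 0 ≤ i ↔ p < rowCntLE l i) := by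
  intro l
  induction l with
  | nil => intro _ p hp; simp at hp
  | cons x l ih =>
    intro hs p hp
    rw [List.pairwise_cons] at hs
    by_cases hx : x ≤ i
    · have hc : rowCntLE (x :: l) i = rowCntLE l i + 1 := by
        simp [rowCntLE, List.filter, hx]
      cases p with
      | zero => simpa [hc] using hx
      | succ p =>
        simp only [List.getD_cons_succ, hc]
        rw [ih hs.2 p (by simpa using hp)]
        omega
    · have hall : ∀ y ∈ l, ¬ (y ≤ i) := fun y hy => by
        have := hs.1 y hy; omega
      have hc : rowCntLE (x :: l) i = 0 := by
        simp only [rowCntLE, List.length_eq_zero_iff]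
        rw [List.filter_eq_nil_iff]
        intro a ha
        rcases List.mem_cons.1 ha with rfl | ha'
        · simpa using hx
        · simpa using hall a ha'
      rw [hc]
      simp only [Nat.not_lt_zero, iff_false]
      cases p with
      | zero => simpa using hx
      | succ p =>
        simp only [List.getD_cons_succ]
        have hpl : p < l.length := by simpa using hp
        have : l.getD p 0 ∈ l := by
          rw [List.getD_eq_getElem?_getD, List.getElem?_eq_getElem hpl]
          exact List.getElem_mem _
        exact hall _ this
section SSYTfacts
variable {n : ℕ} {T : Tab} (hT : IsSSYT n T)

lemma rowT_mem_or_nil (ρ : ℕ) : rowT T ρ ∈ T ∨ rowT T ρ = [] := by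
  by_cases h : ρ - 1 < T.length
  · left
    rw [rowT, List.getD_eq_getElem?_getD, List.getElem?_eq_getElem h]
    exact List.getElem_mem _
  · right
    rw [rowT]
    exact List.getD_eq_default _ _ (by omega)

include hT

lemma rowT_sorted (ρ : ℕ) : (rowT T ρ).Pairwise (· ≤ ·) := by
  rcases rowT_mem_or_nil (T := T) ρ with h | h
  · exact hT.2.1 _ h
  · rw [h]; exact List.Pairwise.nil

lemma rowT_entries (ρ : ℕ) : ∀ x ∈ rowT T ρ, 1 ≤ x ∧ x ≤ n := by
  rcases rowT_mem_or_nil (T := T) ρ with h | h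
  · exact hT.2.2.1 _ h
  · rw [h]; intro x hx; simp at hx

lemma rowT_len_mono (ρ δ : ℕ) (hρ : 1 ≤ ρ) :
    (rowT T (ρ+δ)).length ≤ (rowT T ρ).length := by
  induction δ with
  | zero => exact le_refl _
  | succ δ ih => exact le_trans (hT.2.2.2.1 (ρ+δ) (by omega)) ih

lemma rowT_col (δ ρ p : ℕ) (hρ : 1 ≤ ρ) (hp : p < (rowT T (ρ+δ)).length) :
    (rowT T ρ).getD p 0 + δ ≤ (rowT T (ρ+δ)).getD p 0 := by
  induction δ with
  | zero => simp
  | succ δ ih =>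
    have h1 := hT.2.2.2.2 (ρ+δ) p (by omega) (by rw [show ρ+δ+1 = ρ+(δ+1) by omega]; exact hp)
    have h2 : p < (rowT T (ρ+δ)).length :=
      lt_of_lt_of_le (by rw [show ρ+δ+1 = ρ+(δ+1) by omega] at *; exact hp)
        (hT.2.2.2.1 (ρ+δ) (by omega))
    have := ih h2
    rw [show ρ+(δ+1) = (ρ+δ)+1 by omega]
    omega

lemma count_drop_eq_of_le (r : ℕ) (i : ℕ) :
    ∀ ρ, 1 ≤ ρ → ρ ≤ r+1 →
      ((rowT T ρ).drop (rowCntLE (rowT T (r+1)) i)).count (i+1)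
        = (rowT T ρ).count (i+1) := by
  intro ρ h1 h2
  set t := rowCntLE (rowT T (r+1)) i with ht
  set l := rowT T ρ with hl
  have hsplit : l.take t ++ l.drop t = l := List.take_append_drop t l
  have hzero : (l.take t).count (i+1) = 0 := by
    rw [List.count_eq_zero]
    intro hmem
    obtain ⟨p, hp, hpe⟩ := List.mem_iff_getElem.1 hmem
    have hplen : p < l.length := by
      have : (l.take t).length = min t l.length := List.length_take
      omega
    have hpt : p < t := by
      have : (l.take t).length = min t l.length := List.length_take
      omega
    have hgl : l[p] = i+1 := by
      rw [← hpe, List.getElem_take]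
    -- p < t ≤ length of row r+1
    have htlen : t ≤ (rowT T (r+1)).length := cntLE_le_length _ _
    have hpr : p < (rowT T (r+1)).length := by omega
    have hle : (rowT T (r+1)).getD p 0 ≤ i :=
      (sorted_getD_le_iff (rowT T (r+1)) (rowT_sorted hT (r+1)) p hpr).2 (by omega)
    have hcol := rowT_col hT (r+1-ρ) ρ p h1
      (by rw [show ρ+(r+1-ρ) = r+1 by omega]; exact hpr)
    rw [show ρ+(r+1-ρ) = r+1 by omega] at hcol
    rw [← hl] at hcol
    have : l.getD p 0 = i+1 := by
      rw [List.getD_eq_getElem?_getD, List.getElem?_eq_getElem hplen, hgl]; rfl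
    omega
  conv_rhs => rw [← hsplit]
  rw [List.count_append, hzero]
  omega

lemma count_drop_eq_zero_of_gt (r : ℕ) (i : ℕ) :
    ∀ ρ, r+1 ≤ ρ →
      ((rowT T ρ).drop (rowCntLE (rowT T (r+1)) i)).count i = 0 := by
  intro ρ hρ
  set t := rowCntLE (rowT T (r+1)) i with ht
  set l := rowT T ρ with hl
  rw [List.count_eq_zero]
  intro hmem
  obtain ⟨p, hp, hpe⟩ := List.mem_iff_getElem.1 hmem
  rw [List.getElem_drop] at hpe
  have hq : t + p < l.length := by
    have : (l.drop t).length = l.length - t := List.length_drop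
    omega
  have hlen : l.length ≤ (rowT T (r+1)).length := by
    have := rowT_len_mono hT (r+1) (ρ-(r+1)) (by omega)
    rw [show (r+1)+(ρ-(r+1)) = ρ by omega] at this
    exact this
  have hqr : t + p < (rowT T (r+1)).length := by omega
  have hgt : ¬ ((rowT T (r+1)).getD (t+p) 0 ≤ i) := by
    rw [sorted_getD_le_iff (rowT T (r+1)) (rowT_sorted hT (r+1)) (t+p) hqr]
    omega
  have hcol := rowT_col hT (ρ-(r+1)) (r+1) (t+p) (by omega)
    (by rw [show (r+1)+(ρ-(r+1)) = ρ by omega]; exact hq)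
  rw [show (r+1)+(ρ-(r+1)) = ρ by omega] at hcol
  rw [← hl] at hcol
  have : l.getD (t+p) 0 = i := by
    rw [List.getD_eq_getElem?_getD, List.getElem?_eq_getElem hq, hpe]; rfl
  omega

lemma Xp_vanish (s : ℕ) (hs : n < s) (r : ℕ) : Xp T s r = 0 := by
  induction r with
  | zero => rfl
  | succ r ih =>
    have e : Xp T s (r+1) = Xp T s r + (rowT T (r+1)).count s := rfl
    rw [e, ih, List.count_eq_zero.2 (fun hmem => by
      have := rowT_entries hT (r+1) s hmem; omega)]

end SSYTfacts

/-- The key dominance inequality. -/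
lemma dom_key {n : ℕ} {mu : ℕ → ℕ} {T : Tab}
    (hmu2 : ∀ r : ℕ, n < r → mu r = 0) (hT : IsSSYT n T)
    (hdom : ∀ i c : ℕ, 1 ≤ i → i + 1 ≤ n → 1 ≤ c →
      (cntGEc T (i+1) c : ℤ) - (cntGEc T i c : ℤ) ≤ (mu i : ℤ) - (mu (i+1) : ℤ))
    (i r : ℕ) (hi : 1 ≤ i) :
    mu (i+1) + Xp T (i+1) (r+1) ≤ mu i + Xp T i r := by
  by_cases hn : i + 1 ≤ n
  case neg =>
    rw [hmu2 (i+1) (by omega), Xp_vanish hT (i+1) (by omega)]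
    omega
  case pos =>
    set t := rowCntLE (rowT T (r+1)) i with ht
    have h := hdom i (t+1) hi hn (by omega)
    have hc1 : cntGEc T (i+1) (t+1) = (T.map (fun R => (R.drop t).count (i+1))).sum := by
      simp [cntGEc]
    have hc2 : cntGEc T i (t+1) = (T.map (fun R => (R.drop t).count i)).sum := by
      simp [cntGEc]
    have claimA : Xp T (i+1) (r+1) ≤ cntGEc T (i+1) (t+1) := by
      rw [hc1, Xp]
      rw [sumRows_congr T _ (fun R => (R.drop t).count (i+1)) (r+1) ?hcg]
      · exact sumRows_le_total T _ (by simp) (r+1)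
      case hcg =>
        intro ρ h1 h2
        exact (count_drop_eq_of_le hT r i ρ h1 h2).symm
    have claimB : cntGEc T i (t+1) ≤ Xp T i r := by
      rw [hc2, Xp]
      refine le_trans (total_le_sumRows T _ (by simp) r ?hv) ?hle
      case hv =>
        intro ρ hρ
        exact count_drop_eq_zero_of_gt hT r i ρ (by omega)
      case hle =>
        exact sumRows_le_of_le T _ _ r
          (fun R => (List.drop_sublist t R).count_le i)
    omega

-- The model tableau rows
def Ff (T : Tab) (k q : ℕ) : List ℕ := (rowT T (q+1)).filter (fun a => a ≤ k+q)
def Cc (mu : ℕ → ℕ) (T : Tab) (k q : ℕ) : ℕ := mu (k+q+1) + Xp T (k+q+1) (q+1)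
def rowM (mu : ℕ → ℕ) (T : Tab) (k q : ℕ) : List ℕ :=
  Ff T k q ++ List.replicate (Cc mu T k q) (k+q+1)

lemma filter_all_nil {s : ℕ} {l : List ℕ} (h : ∀ y ∈ l, ¬ y ≤ s) :
    l.filter (fun a => a ≤ s) = [] := by
  rw [List.filter_eq_nil_iff]
  intro a ha
  simpa using h a ha

lemma filter_split {s : ℕ} (hs : 1 ≤ s) : ∀ (l : List ℕ), l.Pairwise (· ≤ ·) →
    l.filter (fun a => a ≤ s) = l.filter (fun a => a ≤ s-1)
      ++ List.replicate (l.count s) s := by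
  intro l
  induction l with
  | nil => intro _; simp
  | cons x l ih =>
    intro hsort
    rw [List.pairwise_cons] at hsort
    rcases Nat.lt_or_ge x s with hx | hx
    · have h1 : x ≤ s - 1 := by omega
      have h2 : x ≤ s := by omega
      have h3 : x ≠ s := by omega
      have c1 : (x :: l).filter (fun a => a ≤ s) = x :: l.filter (fun a => a ≤ s) := by
        rw [List.filter_cons, if_pos (by simpa using h2)]
      have c2 : (x :: l).filter (fun a => a ≤ s-1) = x :: l.filter (fun a => a ≤ s-1) := by
        rw [List.filter_cons, if_pos (by simpa using h1)]
      have c3 : (x :: l).count s = l.count s := List.count_cons_of_ne h3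
      rw [c1, c2, c3, ih hsort.2]
      simp
    · rcases Nat.eq_or_lt_of_le hx with rfl | hx'
      · have hnil : l.filter (fun a => a ≤ s-1) = [] :=
          filter_all_nil (fun y hy => by have := hsort.1 y hy; omega)
        have c1 : (s :: l).filter (fun a => a ≤ s) = s :: l.filter (fun a => a ≤ s) := by
          rw [List.filter_cons, if_pos (by simpa using le_refl s)]
        have c2 : (s :: l).filter (fun a => a ≤ s-1) = l.filter (fun a => a ≤ s-1) := by
          rw [List.filter_cons, if_neg (by simp; omega)]
        have c3 : (s :: l).count s = l.count s + 1 := List.count_cons_self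
        rw [c1, c2, c3, ih hsort.2, hnil]
        simp [List.replicate_succ]
      · have hnil1 : (x :: l).filter (fun a => a ≤ s) = [] :=
          filter_all_nil (fun y hy => by
            rcases List.mem_cons.1 hy with rfl | hy'
            · omega
            · have := hsort.1 y hy'; omega)
        have hnil2 : (x :: l).filter (fun a => a ≤ s-1) = [] :=
          filter_all_nil (fun y hy => by
            rcases List.mem_cons.1 hy with rfl | hy'
            · omega
            · have := hsort.1 y hy'; omega)
        have hcnt : (x :: l).count s = 0 := by
          rw [List.count_eq_zero]
          intro hmem
          rcases List.mem_cons.1 hmem with h | h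
          · omega
          · have := hsort.1 s h; omega
        rw [hnil1, hnil2, hcnt]
        simp

section Model
variable {n : ℕ} {mu : ℕ → ℕ} {T : Tab}

lemma Ff_succ (hT : IsSSYT n T) (k q : ℕ) :
    Ff T (k+1) q = Ff T k q ++ List.replicate ((rowT T (q+1)).count (k+q+1)) (k+q+1) := by
  have := filter_split (s := k+q+1) (by omega) (rowT T (q+1)) (rowT_sorted hT (q+1))
  simpa [Ff, show k+1+q = k+q+1 by omega, show k+q+1-1 = k+q by omega] using this

lemma Cc_zero (k : ℕ) : Cc mu T k 0 = mu (k+1) + (rowT T 1).count (k+1) := by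
  simp [Cc, Xp, sumRows]

lemma Cc_succ (k q : ℕ) :
    Cc mu T k (q+1) = Cc mu T (k+1) q + (rowT T (q+2)).count (k+q+2) := by
  have e : Xp T (k+q+2) (q+2) = Xp T (k+q+2) (q+1) + (rowT T (q+2)).count (k+q+2) := rfl
  simp only [Cc, show k+(q+1)+1 = k+q+2 by omega, show k+1+q+1 = k+q+2 by omega, e]
  omega

lemma Cc_vanish (hT : IsSSYT n T) (hmu2 : ∀ r : ℕ, n < r → mu r = 0)
    (k q : ℕ) (h : n < k+q+1) : Cc mu T k q = 0 := by
  rw [Cc, hmu2 _ h, Xp_vanish hT _ h]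

lemma rowM_len (k q : ℕ) :
    (rowM mu T k q).length = (Ff T k q).length + Cc mu T k q := by
  simp [rowM]

end Model
lemma bTab_row (n : ℕ) (mu : ℕ → ℕ) (r : ℕ) (h1 : 1 ≤ r) (h2 : r ≤ n) :
    rowT (bTab n mu) r = List.replicate (mu r) r := by
  have hlt : r - 1 < n := by omega
  rw [rowT, bTab, List.getD_eq_getElem?_getD, List.getElem?_map,
    List.getElem?_range hlt]
  simp [show r-1+1 = r by omega]

section Inv
variable {n : ℕ} {mu : ℕ → ℕ} {T : Tab}

lemma rowM_top (hT : IsSSYT n T) (hmu2 : ∀ r : ℕ, n < r → mu r = 0) (q : ℕ) :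
    rowM mu T n q = rowT T (q+1) := by
  rw [rowM, Cc_vanish hT hmu2 n q (by omega)]
  have : Ff T n q = rowT T (q+1) := by
    rw [Ff, List.filter_eq_self]
    intro a ha
    have := rowT_entries hT (q+1) a ha
    simpa using (by omega : a ≤ n + q)
  simp [this]

lemma self_map (L : Tab) :
    (List.range L.length).map (fun q => rowT L (q+1)) = L := by
  apply List.ext_getElem (by simp)
  intro q h1 h2
  simp only [List.getElem_map, List.getElem_range]
  rw [rowT]
  simp [List.getD_eq_getElem?_getD, List.getElem?_eq_getElem h2]

lemma Cc_mono (hT : IsSSYT n T) (hmu2 : ∀ r : ℕ, n < r → mu r = 0)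
    (hdom : ∀ i c : ℕ, 1 ≤ i → i + 1 ≤ n → 1 ≤ c →
      (cntGEc T (i+1) c : ℤ) - (cntGEc T i c : ℤ) ≤ (mu i : ℤ) - (mu (i+1) : ℤ))
    (k q : ℕ) : Cc mu T k (q+1) ≤ Cc mu T k q := by
  have h := dom_key hmu2 hT hdom (k+q+1) (q+1) (by omega)
  simp only [Cc, show k+(q+1)+1 = (k+q+1)+1 by omega, show k+q+1+1 = k+q+2 by omega,
    show (q+1)+1 = q+2 by omega] at h ⊢
  exact h

lemma Cc_cap (hT : IsSSYT n T) (hmu2 : ∀ r : ℕ, n < r → mu r = 0)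
    (hdom : ∀ i c : ℕ, 1 ≤ i → i + 1 ≤ n → 1 ≤ c →
      (cntGEc T (i+1) c : ℤ) - (cntGEc T i c : ℤ) ≤ (mu i : ℤ) - (mu (i+1) : ℤ))
    (k : ℕ) (hk : 1 ≤ k) : Cc mu T k 0 ≤ mu k := by
  have h := dom_key hmu2 hT hdom k 0 hk
  have e : Xp T k 0 = 0 := rfl
  rw [e] at h
  have e2 : Xp T (k+1) (0+1) = Xp T (k+1) 1 := rfl
  rw [e2] at h
  simp only [Cc, show k+0+1 = k+1 by omega, show (0:ℕ)+1 = 1 by omega]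
  omega

lemma rowM_pred0 (hT : IsSSYT n T) (k : ℕ) (hk : 1 ≤ k) :
    Ff T k 0 ++ List.replicate (mu k) (k+0) = rowM mu T (k-1) 0 := by
  obtain ⟨k', rfl⟩ : ∃ k', k = k' + 1 := ⟨k - 1, by omega⟩
  have hF := Ff_succ hT k' 0
  rw [show k'+1-1 = k' by omega, rowM, Cc_zero]
  rw [show k'+1+0 = k'+0+1 by omega, hF]
  rw [List.append_assoc, ← List.replicate_add]
  have e : rowT T (0+1) = rowT T 1 := rfl
  rw [e]
  congr 2
  omega

lemma rowM_predS (hT : IsSSYT n T) (k p : ℕ) (hk : 1 ≤ k) :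
    Ff T k (p+1) ++ List.replicate (Cc mu T k p) (k+(p+1)) = rowM mu T (k-1) (p+1) := by
  obtain ⟨k', rfl⟩ : ∃ k', k = k' + 1 := ⟨k - 1, by omega⟩
  have hF := Ff_succ hT k' (p+1)
  rw [show k'+1-1 = k' by omega, rowM, Cc_succ]
  rw [show k'+1+(p+1) = k'+(p+1)+1 by omega, hF]
  rw [List.append_assoc, ← List.replicate_add]
  rw [show k'+(p+1)+1 = k'+p+2 by omega]
  have e : rowT T (p+1+1) = rowT T (p+2) := rfl
  rw [e]
  congr 2
  omega

lemma INV (hT : IsSSYT n T) (hmu2 : ∀ r : ℕ, n < r → mu r = 0)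
    (hdom : ∀ i c : ℕ, 1 ≤ i → i + 1 ≤ n → 1 ≤ c →
      (cntGEc T (i+1) c : ℤ) - (cntGEc T i c : ℤ) ≤ (mu i : ℤ) - (mu (i+1) : ℤ)) :
    ∀ d, d ≤ n → ∃ L, Jst n T (bTab n mu) d = (List.range L).map (rowM mu T (n-d))
      ∧ ∀ q, L ≤ q → rowM mu T (n-d) q = [] := by
  intro d
  induction d with
  | zero =>
    intro _
    refine ⟨T.length, ?_, ?_⟩
    · show T = _
      rw [show n - 0 = n by omega]
      have e : List.map (rowM mu T n) (List.range T.length)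
          = List.map (fun q => rowT T (q+1)) (List.range T.length) :=
        List.map_congr_left (fun q _ => rowM_top hT hmu2 q)
      rw [e, self_map]
    · intro q hq
      rw [show n - 0 = n by omega, rowM_top hT hmu2 q, rowT]
      exact List.getD_eq_default _ _ (by omega)
  | succ d ih =>
    intro hd
    obtain ⟨L, hJ, hbey⟩ := ih (by omega)
    set k := n - d with hk
    have hk1 : 1 ≤ k := by omega
    have hk2 : k ≤ n := by omega
    have hd1 : n - (d+1) = k - 1 := by omega
    have hstep : Jst n T (bTab n mu) (d+1)
        = insList ((List.range L).map (rowM mu T k)) (List.replicate (mu k) k) := by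
      show insList (Jst n T (bTab n mu) d) (rowT (bTab n mu) (n-d)) = _
      rw [hJ, bTab_row n mu (n-d) (by omega) (by omega)]
    have hfun : rowM mu T k = fun q => Ff T k q ++ List.replicate (Cc mu T k q) (k+q+1) := by
      funext q; rfl
    obtain ⟨L', heq, hbey2⟩ := stage_lemma L k (mu k) (Cc mu T k)
      (fun q => Nat.casesOn q (mu k) (Cc mu T k)) (Ff T k)
      (fun q x hx => by simpa using List.of_mem_filter hx)
      (fun q hq => by
        have h := hbey q hq
        rw [rowM] at h
        have h2 := List.append_eq_nil_iff.1 h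
        exact ⟨h2.1, by simpa using h2.2⟩)
      (fun q => Cc_mono hT hmu2 hdom k q)
      (Cc_cap hT hmu2 hdom k hk1)
      rfl (fun q => rfl)
    rw [hfun] at hstep
    rw [heq] at hstep
    refine ⟨L', ?_, ?_⟩
    · rw [hstep, hd1]
      congr 1
      funext q
      cases q with
      | zero => exact rowM_pred0 hT k hk1
      | succ p => exact rowM_predS hT k p hk1
    · intro q hq
      rw [hd1]
      obtain ⟨h1, h2⟩ := hbey2 q hq
      cases q with
      | zero =>
        rw [← rowM_pred0 hT k hk1, h1]
        simp only [List.nil_append]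
        have : mu k = 0 := h2
        simp [this]
      | succ p =>
        rw [← rowM_predS hT k p hk1, h1]
        simp only [List.nil_append]
        have : Cc mu T k p = 0 := h2
        simp [this]
end Inv

lemma sum_map_range (h : ℕ → ℕ) (L : ℕ) :
    ((List.range L).map h).sum = ∑ q ∈ Finset.range L, h q := by
  induction L with
  | zero => simp
  | succ L ih => rw [List.range_succ, Finset.sum_range_succ, List.map_append, List.sum_append, ih]; simp

lemma sum_split_aux (h : ℕ → ℕ) (L B t : ℕ) (hLB : L ≤ B) (htB : t ≤ B)
    (hg : ∀ q, L ≤ q → h q = 0) :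
    (∑ q ∈ Finset.range (min t L), h q) + (∑ q ∈ Finset.Ico t B, h q)
      = ∑ q ∈ Finset.range L, h q := by
  rcases le_or_gt t L with hcase | hcase
  · rw [min_eq_left hcase]
    simp only [Finset.range_eq_Ico]
    have e0 := Finset.sum_Ico_consecutive h (Nat.zero_le t) hcase
    have e : (∑ q ∈ Finset.Ico t L, h q) + ∑ q ∈ Finset.Ico L B, h q
        = ∑ q ∈ Finset.Ico t B, h q :=
      Finset.sum_Ico_consecutive h hcase hLB
    have ez : ∑ q ∈ Finset.Ico L B, h q = 0 :=
      Finset.sum_eq_zero (fun q hq => hg q (Finset.mem_Ico.1 hq).1)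
    omega
  · rw [min_eq_right (by omega)]
    have ez : ∑ q ∈ Finset.Ico t B, h q = 0 :=
      Finset.sum_eq_zero (fun q hq => hg q (by have := (Finset.mem_Ico.1 hq).1; omega))
    rw [ez]
    omega

lemma tailBoxes_map_range (g : ℕ → List ℕ) (L m B : ℕ) (hLB : L ≤ B) (hmB : m - 1 ≤ B)
    (hg : ∀ q, L ≤ q → g q = []) :
    tailBoxes ((List.range L).map g) m
      = ((∑ q ∈ Finset.Ico (m-1) B, (g q).length : ℕ) : ℤ) := by
  rw [tailBoxes]
  congr 1
  set J := (List.range L).map g with hJ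
  have hsum : ((J.take (m-1)).map List.length).sum + ((J.drop (m-1)).map List.length).sum
      = (J.map List.length).sum := by
    conv_rhs => rw [← List.take_append_drop (m-1) J]
    rw [List.map_append, List.sum_append]
  have h1 : (J.map List.length).sum = ∑ q ∈ Finset.range L, (g q).length := by
    rw [hJ, List.map_map, sum_map_range]
    rfl
  have h2 : ((J.take (m-1)).map List.length).sum
      = ∑ q ∈ Finset.range (min (m-1) L), (g q).length := by
    rw [hJ, ← List.map_take, List.take_range, List.map_map, sum_map_range]
    rfl
  have h3 : (∑ q ∈ Finset.range (min (m-1) L), (g q).length)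
      + (∑ q ∈ Finset.Ico (m-1) B, (g q).length)
      = ∑ q ∈ Finset.range L, (g q).length :=
    sum_split_aux _ L B (m-1) hLB hmB (fun q hq => by simp [hg q hq])
  omega

section Final
variable {n : ℕ} {mu : ℕ → ℕ} {T : Tab}

lemma EQlen (hT : IsSSYT n T) (k p : ℕ) (hk : 1 ≤ k) :
    (rowM mu T k (p+1)).length + Cc mu T k p
      = (rowM mu T (k-1) (p+1)).length + Cc mu T k (p+1) := by
  obtain ⟨k', rfl⟩ : ∃ k', k = k' + 1 := ⟨k - 1, by omega⟩
  rw [show k'+1-1 = k' by omega, rowM_len, rowM_len]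
  have hF : (Ff T (k'+1) (p+1)).length
      = (Ff T k' (p+1)).length + (rowT T (p+1+1)).count (k'+(p+1)+1) := by
    rw [Ff_succ hT k' (p+1), List.length_append, List.length_replicate]
  have hC := Cc_succ (mu := mu) (T := T) k' p
  have e : rowT T (p+1+1) = rowT T (p+2) := rfl
  rw [e, show k'+(p+1)+1 = k'+p+2 by omega] at hF
  omega

lemma TEL (hT : IsSSYT n T) (k j : ℕ) (hk : 1 ≤ k) (hj : 1 ≤ j) :
    ∀ B, j ≤ B →
      (∑ q ∈ Finset.Ico j B, (rowM mu T k q).length) + Cc mu T k (j-1)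
        = (∑ q ∈ Finset.Ico j B, (rowM mu T (k-1) q).length) + Cc mu T k (B-1) := by
  intro B
  induction B with
  | zero => intro h; omega
  | succ B ih =>
    intro hB
    rcases Nat.lt_or_ge B j with hc | hc
    · have : j = B + 1 := by omega
      subst this
      simp
    · rw [Finset.sum_Ico_succ_top hc, Finset.sum_Ico_succ_top hc]
      have hEQ : (rowM mu T k B).length + Cc mu T k (B-1)
          = (rowM mu T (k-1) B).length + Cc mu T k B := by
        obtain ⟨p, rfl⟩ : ∃ p, B = p + 1 := ⟨B - 1, by omega⟩
        have := EQlen (mu := mu) hT k p hk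
        rw [show p+1-1 = p by omega]
        omega
      have := ih hc
      rw [show B+1-1 = B by omega]
      omega

end Final

/-- for a `μ`-dominant tableau `T`, the recording pattern of the insertion
of `b_μ` into `T` is the GT pattern of `T` itself:
`R(T, b_μ)(i,j) = #(entries ≤ i in row j of T)`. -/
theorem stmt12 (n : ℕ) (hn : 1 ≤ n) (mu : ℕ → ℕ)
    (hmu1 : ∀ r : ℕ, 1 ≤ r → mu (r+1) ≤ mu r) (hmu2 : ∀ r : ℕ, n < r → mu r = 0)
    (T : Tab) (hT : IsSSYT n T)
    (hdom : ∀ i c : ℕ, 1 ≤ i → i + 1 ≤ n → 1 ≤ c →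
      hCol T i c ≤ (mu i : ℤ) - (mu (i+1) : ℤ)) :
    ∀ i j : ℕ, 1 ≤ j → j ≤ i → i ≤ n →
      Rpat n T (bTab n mu) i j = (rowCntLE (rowT T j) i : ℤ) := by
  intro i j hj hji hin
  have hdom' : ∀ i c : ℕ, 1 ≤ i → i + 1 ≤ n → 1 ≤ c →
      (cntGEc T (i+1) c : ℤ) - (cntGEc T i c : ℤ) ≤ (mu i : ℤ) - (mu (i+1) : ℤ) :=
    fun i c h1 h2 h3 => hdom i c h1 h2 h3
  unfold Rpat
  set k := i - j + 1 with hkdef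
  have hk1 : 1 ≤ k := by omega
  have hkn : k ≤ n := by omega
  obtain ⟨L1, hJ1, hb1⟩ := INV hT hmu2 hdom' (n - k) (by omega)
  obtain ⟨L0, hJ0, hb0⟩ := INV hT hmu2 hdom' (n - k + 1) (by omega)
  rw [show n - (n - k) = k by omega] at hJ1 hb1
  rw [show n - (n - k + 1) = k - 1 by omega] at hJ0 hb0
  set B := L1 + L0 + n + j + 2 with hBdef
  have ht1 : tailBoxes (Jst n T (bTab n mu) (n - k)) j
      = ((∑ q ∈ Finset.Ico (j-1) B, (rowM mu T k q).length : ℕ) : ℤ) := by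
    rw [hJ1]
    exact tailBoxes_map_range _ L1 j B (by omega) (by omega) (fun q hq => hb1 q hq)
  have ht0 : tailBoxes (Jst n T (bTab n mu) (n - k + 1)) (j+1)
      = ((∑ q ∈ Finset.Ico j B, (rowM mu T (k-1) q).length : ℕ) : ℤ) := by
    rw [hJ0]
    have := tailBoxes_map_range (rowM mu T (k-1)) L0 (j+1) B (by omega) (by omega)
      (fun q hq => hb0 q hq)
    rwa [show j+1-1 = j by omega] at this
  rw [show n - (i - j) = n - k + 1 by omega, ht1, ht0]
  have hsplit : (∑ q ∈ Finset.Ico (j-1) B, (rowM mu T k q).length)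
      = (rowM mu T k (j-1)).length + ∑ q ∈ Finset.Ico j B, (rowM mu T k q).length := by
    rw [Finset.sum_eq_sum_Ico_succ_bot (by omega : j-1 < B)]
    rw [show j-1+1 = j by omega]
  have htel := TEL (mu := mu) hT k j hk1 hj B (by omega)
  have hCB : Cc mu T k (B-1) = 0 := Cc_vanish hT hmu2 k (B-1) (by omega)
  have hlen : (rowM mu T k (j-1)).length = rowCntLE (rowT T j) i + Cc mu T k (j-1) := by
    rw [rowM_len]
    have e : Ff T k (j-1) = (rowT T j).filter (fun a => a ≤ i) := by
      rw [Ff, show (j-1)+1 = j by omega, show k+(j-1) = i by omega]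
    rw [e]
    simp [rowCntLE]
  omega
end
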